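/- arXiv:1007.1840 — 12 statements merged into one kernel-verified Lean document; each statement's English description precedes it below -/
import Mathlib

section
/- If a₁, a₂ > 1 are coprime positive integers, then the number of natural numbers not representable as x₁a₁ + x₂a₂ with x₁, x₂ ∈ ℕ equals (a₁-1)(a₂-1)/2. -/
/-!
Let `S` be the additive monoid generated by `a₁, a₂` and `F = a₁a₂ - a₁ - a₂` its Frobenius
number. The gaps of `S` all lie in `[0, F]`, and `z ↦ F - z` exchanges the gaps and the elements
of `S` in that interval: both `z, F - z ∈ S` would give `F ∈ S`, and if `z ∉ S` then writing
`z = x a₁ - k a₂` with `0 ≤ x < a₂`, `k ≥ 1` gives `F - z = (a₂ - 1 - x) a₁ + (k - 1) a₂ ∈ S`.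
Hence exactly half of the `F + 1 = (a₁ - 1)(a₂ - 1)` numbers in `[0, F]` are gaps.
-/

open Finset

theorem two_mul_ncard_compl_closure_of_frobeniusNumber {s : Set ℕ} {F : ℕ}
    (hF : FrobeniusNumber F s)
    (hsymm : ∀ z ∉ AddSubmonoid.closure s, F - z ∈ AddSubmonoid.closure s) :
    2 * {z | z ∉ AddSubmonoid.closure s}.ncard = F + 1 := by
  classical
  set S := AddSubmonoid.closure s
  obtain ⟨hFS, hgap_le⟩ := hF
  have hgaps_eq : {z | z ∉ S} = ↑((range (F + 1)).filter (· ∉ S)) := by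
    ext z
    simp only [Set.mem_ofPred_eq, coe_filter, mem_range]
    exact ⟨fun hz ↦ ⟨Nat.lt_succ_of_le (hgap_le hz), hz⟩, And.right⟩
  have hswap :
      ((range (F + 1)).filter (· ∉ S)).card = ((range (F + 1)).filter (· ∈ S)).card := by
    refine card_nbij' (F - ·) (F - ·) ?_ ?_ ?_ ?_
    · intro z hz
      simp only [coe_filter, mem_range, Set.mem_ofPred_eq] at hz ⊢
      exact ⟨by omega, hsymm z hz.2⟩
    · intro z hz
      simp only [coe_filter, mem_range, Set.mem_ofPred_eq] at hz ⊢
      refine ⟨by omega, fun hFz ↦ hFS ?_⟩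
      simpa [Nat.add_sub_cancel' (Nat.lt_succ_iff.mp hz.1)] using S.add_mem hz.2 hFz
    all_goals
      intro z hz
      simp only [coe_filter, mem_range, Set.mem_ofPred_eq] at hz
      dsimp only
      omega
  have hsplit := card_filter_add_card_filter_not (s := range (F + 1)) (· ∈ S)
  rw [card_range] at hsplit
  rw [hgaps_eq, Set.ncard_coe_finset]
  omega

theorem sub_mem_closure_pair_of_notMem {m n z : ℕ} (hn : 0 < n)
    (hcop : Nat.Coprime m n) (hz : z ∉ AddSubmonoid.closure {m, n}) :
    m * n - m - n - z ∈ AddSubmonoid.closure {m, n} := by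
  simp only [AddSubmonoid.mem_closure_pair, smul_eq_mul] at hz ⊢
  obtain ⟨x, hxn, hx⟩ := Nat.exists_mul_mod_eq_of_coprime z hcop hn.ne'
  have hlt : z < m * x := by
    by_contra! hle
    obtain ⟨k, hk⟩ := (Nat.modEq_iff_dvd' hle).mp hx
    exact hz ⟨x, k, by rw [mul_comm x, mul_comm k, ← hk, Nat.add_sub_cancel' hle]⟩
  obtain ⟨k, hk⟩ := (Nat.modEq_iff_dvd' hlt.le).mp hx.symm
  obtain ⟨k, rfl⟩ := Nat.exists_eq_add_one_of_ne_zero (n := k) (by rintro rfl; omega)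
  obtain ⟨r, rfl⟩ : ∃ r, n = x + 1 + r := ⟨n - 1 - x, by omega⟩
  refine ⟨r, k, ?_⟩
  have hmx : m * x = z + (x + 1 + r) * (k + 1) := by omega
  rw [Nat.sub_sub, Nat.sub_sub, eq_comm, Nat.sub_eq_iff_eq_add (by nlinarith)]
  zify at hmx ⊢
  linear_combination hmx

theorem sylvester_count (a1 a2 : ℕ) (h1 : 1 < a1) (h2 : 1 < a2)
    (hcop : Nat.Coprime a1 a2) :
    {z : ℕ | ¬∃ x1 x2 : ℕ, z = x1 * a1 + x2 * a2}.ncard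
      = (a1 - 1) * (a2 - 1) / 2 := by
  have hgaps : {z : ℕ | ¬∃ x1 x2 : ℕ, z = x1 * a1 + x2 * a2}
      = {z | z ∉ AddSubmonoid.closure {a1, a2}} := by
    ext z
    simp [AddSubmonoid.mem_closure_pair, eq_comm]
  have hcount := two_mul_ncard_compl_closure_of_frobeniusNumber (frobeniusNumber_pair hcop h1 h2)
    fun _ ↦ sub_mem_closure_pair_of_notMem (by omega) hcop
  have hgenus : a1 * a2 - a1 - a2 + 1 = (a1 - 1) * (a2 - 1) := by
    rw [Nat.sub_sub]
    zify [Nat.add_le_mul h1 h2, h1.le, h2.le]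
    ring
  rw [hgaps]
  omega
end

section
/- Let a₁, a₂ > 1 be coprime. A positive integer z is non-representable as x₁a₁ + x₂a₂ (x₁, x₂ ∈ ℕ) if and only if there exist integers k₁, k₂ ≥ 1 with z = a₁a₂ - k₁a₁ - k₂a₂. -/
theorem nonrepresentable_iff (a1 a2 : ℕ) (h1 : 1 < a1) (h2 : 1 < a2)
    (hcop : Nat.Coprime a1 a2) (z : ℕ) (hz : 0 < z) :
    (¬∃ x1 x2 : ℕ, z = x1 * a1 + x2 * a2) ↔
      ∃ k1 k2 : ℤ, 1 ≤ k1 ∧ 1 ≤ k2 ∧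
        (z : ℤ) = a1 * a2 - k1 * a1 - k2 * a2 := by
  have hcopZ : IsCoprime (a1 : ℤ) (a2 : ℤ) := Nat.isCoprime_iff_coprime.mpr hcop
  have ha2 : (0:ℤ) < a2 := by exact_mod_cast Nat.lt_of_lt_of_le Nat.zero_lt_one h2.le
  constructor
  · intro hnr
    obtain ⟨s, t, hst⟩ := hcopZ
    have hbez : (z:ℤ) = (z * s) * a1 + (z * t) * a2 := by
      have : (z:ℤ) * (s * a1 + t * a2) = z * 1 := by rw [hst]
      linarith [this]
    set u : ℤ := z * s
    set v : ℤ := z * t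
    set u' : ℤ := u % a2 with hu'
    set v' : ℤ := v + (u / a2) * a1 with hv'
    have hdm : (a2:ℤ) * (u / a2) + u % a2 = u := Int.mul_ediv_add_emod u a2
    have hz2 : (z:ℤ) = u' * a1 + v' * a2 := by
      rw [hu', hv']; nlinarith [hdm, hbez]
    have hu0 : 0 ≤ u' := Int.emod_nonneg u (by positivity)
    have hua : u' < a2 := Int.emod_lt_of_pos u ha2
    by_cases hv0 : 0 ≤ v'
    · exfalso
      apply hnr
      refine ⟨u'.toNat, v'.toNat, ?_⟩
      have : (z:ℤ) = (u'.toNat : ℤ) * a1 + (v'.toNat : ℤ) * a2 := by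
        rw [Int.toNat_of_nonneg hu0, Int.toNat_of_nonneg hv0]; exact hz2
      exact_mod_cast this
    · push_neg at hv0
      refine ⟨a2 - u', -v', by linarith, by linarith, by linarith [hz2]⟩
  · rintro ⟨k1, k2, hk1, hk2, heq⟩ ⟨x1, x2, hx⟩
    have hxZ : (z:ℤ) = x1 * a1 + x2 * a2 := by exact_mod_cast hx
    have hsum : ((x1:ℤ) + k1) * a1 + ((x2:ℤ) + k2) * a2 = a1 * a2 := by linarith
    have hd1 : (a1:ℤ) ∣ ((x2:ℤ) + k2) * a2 := by
      refine ⟨a2 - ((x1:ℤ) + k1), ?_⟩; linarith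
    have hd1' : (a1:ℤ) ∣ ((x2:ℤ) + k2) := hcopZ.dvd_of_dvd_mul_right hd1
    have hd2 : (a2:ℤ) ∣ ((x1:ℤ) + k1) * a1 := by
      refine ⟨a1 - ((x2:ℤ) + k2), ?_⟩; linarith
    have hd2' : (a2:ℤ) ∣ ((x1:ℤ) + k1) := hcopZ.symm.dvd_of_dvd_mul_right hd2
    have hx1p : (0:ℤ) < (x1:ℤ) + k1 := by positivity
    have hx2p : (0:ℤ) < (x2:ℤ) + k2 := by positivity
    have h1' : (a1:ℤ) ≤ (x2:ℤ) + k2 := Int.le_of_dvd hx2p hd1'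
    have h2' : (a2:ℤ) ≤ (x1:ℤ) + k1 := Int.le_of_dvd hx1p hd2'
    have ha1 : (0:ℤ) < a1 := by exact_mod_cast Nat.lt_of_lt_of_le Nat.zero_lt_one h1.le
    nlinarith [hsum]
end

section
/- Let a₁, a₂, a₃ be pairwise coprime positive integers with lᵢ ≥ 2 for all i, where l₃ := min{l > 0 : l·a₃ ∈ T(a₁,a₂)} (and cyclically). Then in any representation l₃·a₃ = x₃₁a₁ + x₃₂a₂ with x₃₁, x₃₂ ∈ ℕ, both x₃₁ ≥ 1 and x₃₂ ≥ 1 (and cyclically for the other indices). -/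
lemma key_lt (a b c la lb : ℕ)
    (hac : Nat.Coprime a c) (hbc : Nat.Coprime b c) (hc : 2 ≤ c)
    (hla : ∀ u : ℕ, 0 < u → (∃ x y : ℕ, u * a = x * b + y * c) → la ≤ u)
    (hlb : ∀ u : ℕ, 0 < u → (∃ x y : ℕ, u * b = x * a + y * c) → lb ≤ u)
    (h2lb : 2 ≤ lb) : la < c := by
  haveI : NeZero c := ⟨by omega⟩
  set w : ZMod c := (b : ZMod c) * (a : ZMod c)⁻¹ with hw
  set u : ℕ := w.val with hudef
  have hcast : (u : ZMod c) = w := by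
    simp [hudef, ZMod.natCast_val, ZMod.cast_id]
  have hua : ((u * a : ℕ) : ZMod c) = ((b : ℕ) : ZMod c) := by
    push_cast
    rw [hcast, hw, mul_assoc, mul_comm ((a : ZMod c))⁻¹ (a : ZMod c),
      ZMod.coe_mul_inv_eq_one a hac, mul_one]
  have hmod : u * a ≡ b [MOD c] := (ZMod.natCast_eq_natCast_iff _ _ _).mp hua
  have hult : u < c := ZMod.val_lt w
  have hune : u ≠ 0 := by
    intro h0
    have : ((b : ℕ) : ZMod c) = 0 := by
      rw [← hua, h0]; push_cast; ring
    have hdvd : c ∣ b := (ZMod.natCast_eq_zero_iff _ _).mp this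
    have : c ∣ Nat.gcd b c := Nat.dvd_gcd hdvd dvd_rfl
    rw [hbc] at this
    have := Nat.le_of_dvd one_pos this
    omega
  rcases le_or_gt b (u * a) with hle | hlt
  · obtain ⟨t, ht⟩ := (Nat.modEq_iff_dvd' hle).mp hmod.symm
    have hmem : ∃ x y : ℕ, u * a = x * b + y * c := ⟨1, t, by rw [one_mul, mul_comm t c]; omega⟩
    have := hla u (Nat.pos_of_ne_zero hune) hmem
    omega
  · obtain ⟨s, hs⟩ := (Nat.modEq_iff_dvd' hlt.le).mp hmod
    have hmem : ∃ x y : ℕ, 1 * b = x * a + y * c := ⟨u, s, by rw [one_mul, mul_comm s c]; omega⟩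
    have := hlb 1 one_pos hmem
    omega

theorem coefficients_positive (a1 a2 a3 l1 l2 l3 : ℕ)
    (ha1 : 0 < a1) (ha2 : 0 < a2) (ha3 : 0 < a3)
    (h12 : Nat.Coprime a1 a2) (h13 : Nat.Coprime a1 a3) (h23 : Nat.Coprime a2 a3)
    (hl1 : IsLeast {l : ℕ | 0 < l ∧ ∃ x y : ℕ, l * a1 = x * a2 + y * a3} l1)
    (hl2 : IsLeast {l : ℕ | 0 < l ∧ ∃ x y : ℕ, l * a2 = x * a1 + y * a3} l2)
    (hl3 : IsLeast {l : ℕ | 0 < l ∧ ∃ x y : ℕ, l * a3 = x * a1 + y * a2} l3)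
    (h2l1 : 2 ≤ l1) (h2l2 : 2 ≤ l2) (h2l3 : 2 ≤ l3) :
    (∀ x12 x13 : ℕ, l1 * a1 = x12 * a2 + x13 * a3 → 1 ≤ x12 ∧ 1 ≤ x13) ∧
    (∀ x21 x23 : ℕ, l2 * a2 = x21 * a1 + x23 * a3 → 1 ≤ x21 ∧ 1 ≤ x23) ∧
    (∀ x31 x32 : ℕ, l3 * a3 = x31 * a1 + x32 * a2 → 1 ≤ x31 ∧ 1 ≤ x32) := by
  have B1 := hl1.2
  have B2 := hl2.2
  have B3 := hl3.2
  simp only [lowerBounds, Set.mem_setOf_eq] at B1 B2 B3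
  -- all aᵢ ≥ 2
  have h2a3 : 2 ≤ a3 := by
    by_contra h
    have ha3' : a3 = 1 := by omega
    have : l1 ≤ 1 := B1 ⟨one_pos, 0, a1, by simp [ha3']⟩
    omega
  have h2a2 : 2 ≤ a2 := by
    by_contra h
    have ha2' : a2 = 1 := by omega
    have : l1 ≤ 1 := B1 ⟨one_pos, a1, 0, by simp [ha2']⟩
    omega
  have h2a1 : 2 ≤ a1 := by
    by_contra h
    have ha1' : a1 = 1 := by omega
    have : l2 ≤ 1 := B2 ⟨one_pos, a2, 0, by simp [ha1']⟩
    omega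
  have hl1pos : 0 < l1 := by omega
  have hl2pos : 0 < l2 := by omega
  have hl3pos : 0 < l3 := by omega
  -- strict inequalities
  have L13 : l1 < a3 := key_lt a1 a2 a3 l1 l2 h13 h23 h2a3
    (fun u hu hex => B1 ⟨hu, hex⟩) (fun u hu hex => B2 ⟨hu, hex⟩) h2l2
  have L12 : l1 < a2 := key_lt a1 a3 a2 l1 l3 h12 h23.symm h2a2
    (fun u hu ⟨x, y, hxy⟩ => B1 ⟨hu, y, x, by omega⟩)
    (fun u hu hex => B3 ⟨hu, hex⟩) h2l3
  have L23 : l2 < a3 := key_lt a2 a1 a3 l2 l1 h23 h13 h2a3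
    (fun u hu hex => B2 ⟨hu, hex⟩) (fun u hu hex => B1 ⟨hu, hex⟩) h2l1
  have L21 : l2 < a1 := key_lt a2 a3 a1 l2 l3 h12.symm h13.symm h2a1
    (fun u hu ⟨x, y, hxy⟩ => B2 ⟨hu, y, x, by omega⟩)
    (fun u hu ⟨x, y, hxy⟩ => B3 ⟨hu, y, x, by omega⟩) h2l3
  have L31 : l3 < a1 := key_lt a3 a2 a1 l3 l2 h13.symm h12.symm h2a1
    (fun u hu ⟨x, y, hxy⟩ => B3 ⟨hu, y, x, by omega⟩)
    (fun u hu ⟨x, y, hxy⟩ => B2 ⟨hu, y, x, by omega⟩) h2l2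
  have L32 : l3 < a2 := key_lt a3 a1 a2 l3 l1 h23.symm h12 h2a2
    (fun u hu hex => B3 ⟨hu, hex⟩)
    (fun u hu ⟨x, y, hxy⟩ => B1 ⟨hu, y, x, by omega⟩) h2l1
  refine ⟨fun x12 x13 heq => ?_, fun x21 x23 heq => ?_, fun x31 x32 heq => ?_⟩
  · constructor
    · by_contra h
      have hx : x12 = 0 := by omega
      rw [hx] at heq
      have hdvd : a3 ∣ l1 := (h13.symm).dvd_of_dvd_mul_right ⟨x13, by rw [heq]; ring⟩
      have := Nat.le_of_dvd hl1pos hdvd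
      omega
    · by_contra h
      have hx : x13 = 0 := by omega
      rw [hx] at heq
      have hdvd : a2 ∣ l1 := (h12.symm).dvd_of_dvd_mul_right ⟨x12, by rw [heq]; ring⟩
      have := Nat.le_of_dvd hl1pos hdvd
      omega
  · constructor
    · by_contra h
      have hx : x21 = 0 := by omega
      rw [hx] at heq
      have hdvd : a3 ∣ l2 := (h23.symm).dvd_of_dvd_mul_right ⟨x23, by rw [heq]; ring⟩
      have := Nat.le_of_dvd hl2pos hdvd
      omega
    · by_contra h
      have hx : x23 = 0 := by omega
      rw [hx] at heq
      have hdvd : a1 ∣ l2 := h12.dvd_of_dvd_mul_right ⟨x21, by rw [heq]; ring⟩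
      have := Nat.le_of_dvd hl2pos hdvd
      omega
  · constructor
    · by_contra h
      have hx : x31 = 0 := by omega
      rw [hx] at heq
      have hdvd : a2 ∣ l3 := h23.dvd_of_dvd_mul_right ⟨x32, by rw [heq]; ring⟩
      have := Nat.le_of_dvd hl3pos hdvd
      omega
    · by_contra h
      have hx : x32 = 0 := by omega
      rw [hx] at heq
      have hdvd : a1 ∣ l3 := h13.dvd_of_dvd_mul_right ⟨x31, by rw [heq]; ring⟩
      have := Nat.le_of_dvd hl3pos hdvd
      omega
end

section
/- Let a₁, a₂, a₃ be pairwise coprime positive integers with lᵢ ≥ 2 for all i. Then the representations lᵢaᵢ = Σⱼ≠ᵢ xᵢⱼaⱼ with xᵢⱼ ∈ ℕ are uniquely determined, and l₃ = x₁₃ + x₂₃, l₁ = x₂₁ + x₃₁, l₂ = x₃₂ + x₁₂. -/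
/-- Core lemma: if `n` is not a ℕ-combination of coprime `a, b`, then
`n` "plus a positive multiple of `b`" is a small multiple of `a`. -/
lemma core_rep (a b n : ℕ) (hab : Nat.Coprime a b) (hb : 0 < b)
    (h : ∀ x y : ℕ, n ≠ x * a + y * b) :
    ∃ u w : ℕ, 0 < u ∧ u < b ∧ u * a = w * b + n := by
  have hg : (1 : ℤ) = a * Nat.gcdA a b + b * Nat.gcdB a b := by
    have := Nat.gcd_eq_gcd_ab a b
    rw [hab] at this
    exact_mod_cast this
  set s := Nat.gcdA a b with hs
  set t := Nat.gcdB a b with ht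
  set u : ℤ := (n * s) % b with hu
  have hb' : (0 : ℤ) < b := by exact_mod_cast hb
  have hu0 : 0 ≤ u := Int.emod_nonneg _ (by exact_mod_cast hb.ne')
  have hub : u < b := Int.emod_lt_of_pos _ hb'
  obtain ⟨c, hc⟩ : (b : ℤ) ∣ u - n * s := ⟨-(n * s / b), by rw [hu, Int.emod_def]; ring⟩
  have hdvd : (b : ℤ) ∣ u * a - n := ⟨c * a - n * t, by linear_combination (a : ℤ) * hc - (n : ℤ) * hg⟩
  obtain ⟨v, hv⟩ := hdvd
  rcases le_or_gt v 0 with hv0 | hv0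
  · exfalso
    apply h u.toNat (-v).toNat
    have h1 : ((u.toNat : ℤ)) = u := Int.toNat_of_nonneg hu0
    have h2 : (((-v).toNat : ℤ)) = -v := Int.toNat_of_nonneg (by linarith)
    have : (n : ℤ) = (u.toNat : ℤ) * a + ((-v).toNat : ℤ) * b := by
      rw [h1, h2]; linarith
    exact_mod_cast this
  · have hune : u ≠ 0 := by
      intro h0
      rw [h0] at hv
      simp at hv
      nlinarith [hv0, hb']
    have hupos : 0 < u := lt_of_le_of_ne hu0 (Ne.symm hune)
    refine ⟨u.toNat, v.toNat, ?_, ?_, ?_⟩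
    · omega
    · omega
    · have h1 : ((u.toNat : ℤ)) = u := Int.toNat_of_nonneg hu0
      have h2 : ((v.toNat : ℤ)) = v := Int.toNat_of_nonneg (le_of_lt hv0)
      have : (u.toNat : ℤ) * a = (v.toNat : ℤ) * b + n := by rw [h1, h2]; linarith
      exact_mod_cast this

/-- Positivity of the coefficient of `r` in any representation of the minimal multiple. -/
lemma coeff_r_pos (p q r l : ℕ) (hq : 0 < q)
    (hpq : Nat.Coprime p q)
    (hl0 : 0 < l)
    (hlb : ∀ m x y : ℕ, 0 < m → m * p = x * q + y * r → l ≤ m)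
    (hnr : ∀ x y : ℕ, r ≠ x * p + y * q) :
    ∀ x y : ℕ, l * p = x * q + y * r → 0 < y := by
  intro x y he
  rcases Nat.eq_zero_or_pos y with hy | hy
  · exfalso
    subst hy
    rw [Nat.zero_mul, Nat.add_zero] at he
    have hdvd : q ∣ l * p := ⟨x, by rw [he, Nat.mul_comm]⟩
    have hql : q ∣ l := Nat.Coprime.dvd_of_dvd_mul_right hpq.symm hdvd
    have hlq : q ≤ l := Nat.le_of_dvd hl0 hql
    have hlq' : l ≤ q := hlb q p 0 hq (by ring)
    obtain ⟨u, w, hu0, huq, hue⟩ := core_rep p q r hpq hq hnr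
    have : l ≤ u := hlb u w 1 hu0 (by rw [Nat.one_mul]; exact hue)
    omega
  · exact hy

/-- Bound: the coefficient of `q` in a representation of `lp * p` is less than `lq`. -/
lemma coeff_lt_gen (p q r lp lq xpq xpr xqp xqr : ℕ) (hr : 0 < r)
    (e1 : lp * p = xpq * q + xpr * r) (hxpr : 0 < xpr)
    (e2 : lq * q = xqp * p + xqr * r) (hxqp : 0 < xqp)
    (hlb : ∀ m x y : ℕ, 0 < m → m * p = x * q + y * r → lp ≤ m) :
    xpq < lq := by
  by_contra hge
  push_neg at hge
  have e1' : (lp : ℤ) * p = xpq * q + xpr * r := by exact_mod_cast e1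
  have e2' : (lq : ℤ) * q = xqp * p + xqr * r := by exact_mod_cast e2
  rcases lt_or_ge xqp lp with hcase | hcase
  · have key : (lp - xqp) * p = (xpq - lq) * q + (xpr + xqr) * r := by
      zify [Nat.le_of_lt hcase, hge]
      linear_combination e1' + e2'
    have := hlb (lp - xqp) _ _ (by omega) key
    omega
  · have h1 : lp * p ≤ xqp * p := Nat.mul_le_mul_right _ hcase
    have h2 : lq * q ≤ xpq * q := Nat.mul_le_mul_right _ hge
    have hpos : 0 < xpr * r := Nat.mul_pos hxpr hr
    have h1' : (lp : ℤ) * p ≤ (xqp : ℤ) * p := by exact_mod_cast h1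
    have h2' : (lq : ℤ) * q ≤ (xpq : ℤ) * q := by exact_mod_cast h2
    have hpos' : (0 : ℤ) < (xpr : ℤ) * r := by exact_mod_cast hpos
    have hq0 : (0 : ℤ) ≤ (xqr : ℤ) * r := by positivity
    linarith

/-- Cancellation helper (ordered version). -/
lemma cancel_aux' (q r x y x' y' : ℕ) (hqr : Nat.Coprime q r)
    (hx : x < r) (hx' : x' ≤ x) (he : x * q + y * r = x' * q + y' * r) :
    x = x' ∧ y = y' := by
  have hr0 : 0 < r := lt_of_le_of_lt (Nat.zero_le _) hx
  have h1 : x' * q ≤ x * q := Nat.mul_le_mul_right _ hx'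
  have h2 : y * r ≤ y' * r := by linarith
  have h3 : (x - x') * q = (y' - y) * r := by
    rw [Nat.sub_mul, Nat.sub_mul]
    omega
  have h4 : r ∣ (x - x') * q := ⟨y' - y, by rw [h3, Nat.mul_comm]⟩
  have h5 : r ∣ (x - x') := Nat.Coprime.dvd_of_dvd_mul_right hqr.symm h4
  have h6 : x - x' = 0 := by
    rcases Nat.eq_zero_or_pos (x - x') with h | h
    · exact h
    · have := Nat.le_of_dvd h h5
      omega
  have hxx : x = x' := by omega
  subst hxx
  refine ⟨rfl, ?_⟩
  have : y * r = y' * r := by omega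
  exact Nat.eq_of_mul_eq_mul_right hr0 this

/-- Cancellation helper. -/
lemma cancel_aux (q r x y x' y' : ℕ) (hqr : Nat.Coprime q r)
    (hx : x < r) (hx' : x' < r) (he : x * q + y * r = x' * q + y' * r) :
    x = x' ∧ y = y' := by
  rcases le_total x' x with h | h
  · exact cancel_aux' q r x y x' y' hqr hx h he
  · obtain ⟨h1, h2⟩ := cancel_aux' q r x' y' x y hqr hx' h he.symm
    exact ⟨h1.symm, h2.symm⟩

theorem representation_unique_and_sum (a1 a2 a3 l1 l2 l3 : ℕ)
    (ha1 : 0 < a1) (ha2 : 0 < a2) (ha3 : 0 < a3)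
    (h12 : Nat.Coprime a1 a2) (h13 : Nat.Coprime a1 a3) (h23 : Nat.Coprime a2 a3)
    (hl1 : IsLeast {l : ℕ | 0 < l ∧ ∃ x y : ℕ, l * a1 = x * a2 + y * a3} l1)
    (hl2 : IsLeast {l : ℕ | 0 < l ∧ ∃ x y : ℕ, l * a2 = x * a1 + y * a3} l2)
    (hl3 : IsLeast {l : ℕ | 0 < l ∧ ∃ x y : ℕ, l * a3 = x * a1 + y * a2} l3)
    (h2l1 : 2 ≤ l1) (h2l2 : 2 ≤ l2) (h2l3 : 2 ≤ l3) :
    (∀ x y x' y' : ℕ, l1 * a1 = x * a2 + y * a3 → l1 * a1 = x' * a2 + y' * a3 →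
      x = x' ∧ y = y') ∧
    (∀ x y x' y' : ℕ, l2 * a2 = x * a1 + y * a3 → l2 * a2 = x' * a1 + y' * a3 →
      x = x' ∧ y = y') ∧
    (∀ x y x' y' : ℕ, l3 * a3 = x * a1 + y * a2 → l3 * a3 = x' * a1 + y' * a2 →
      x = x' ∧ y = y') ∧
    (∀ x12 x13 x21 x23 x31 x32 : ℕ,
      l1 * a1 = x12 * a2 + x13 * a3 →
      l2 * a2 = x21 * a1 + x23 * a3 →
      l3 * a3 = x31 * a1 + x32 * a2 →
      l3 = x13 + x23 ∧ l1 = x21 + x31 ∧ l2 = x32 + x12) := by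
  -- non-membership facts (from l_i ≥ 2)
  have n1 : ∀ x y : ℕ, a1 ≠ x * a2 + y * a3 := fun x y h => by
    have := hl1.2 ⟨Nat.one_pos, x, y, by rw [Nat.one_mul]; exact h⟩
    omega
  have n2 : ∀ x y : ℕ, a2 ≠ x * a1 + y * a3 := fun x y h => by
    have := hl2.2 ⟨Nat.one_pos, x, y, by rw [Nat.one_mul]; exact h⟩
    omega
  have n3 : ∀ x y : ℕ, a3 ≠ x * a1 + y * a2 := fun x y h => by
    have := hl3.2 ⟨Nat.one_pos, x, y, by rw [Nat.one_mul]; exact h⟩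
    omega
  have n1' : ∀ x y : ℕ, a1 ≠ x * a3 + y * a2 := fun x y h => n1 y x (by rw [h, Nat.add_comm])
  have n2' : ∀ x y : ℕ, a2 ≠ x * a3 + y * a1 := fun x y h => n2 y x (by rw [h, Nat.add_comm])
  have n3' : ∀ x y : ℕ, a3 ≠ x * a2 + y * a1 := fun x y h => n3 y x (by rw [h, Nat.add_comm])
  -- lower-bound helpers
  have lb1 : ∀ m x y : ℕ, 0 < m → m * a1 = x * a2 + y * a3 → l1 ≤ m :=
    fun m x y hm he => hl1.2 ⟨hm, x, y, he⟩
  have lb1' : ∀ m x y : ℕ, 0 < m → m * a1 = x * a3 + y * a2 → l1 ≤ m :=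
    fun m x y hm he => hl1.2 ⟨hm, y, x, by rw [he, Nat.add_comm]⟩
  have lb2 : ∀ m x y : ℕ, 0 < m → m * a2 = x * a1 + y * a3 → l2 ≤ m :=
    fun m x y hm he => hl2.2 ⟨hm, x, y, he⟩
  have lb2' : ∀ m x y : ℕ, 0 < m → m * a2 = x * a3 + y * a1 → l2 ≤ m :=
    fun m x y hm he => hl2.2 ⟨hm, y, x, by rw [he, Nat.add_comm]⟩
  have lb3 : ∀ m x y : ℕ, 0 < m → m * a3 = x * a1 + y * a2 → l3 ≤ m :=
    fun m x y hm he => hl3.2 ⟨hm, x, y, he⟩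
  have lb3' : ∀ m x y : ℕ, 0 < m → m * a3 = x * a2 + y * a1 → l3 ≤ m :=
    fun m x y hm he => hl3.2 ⟨hm, y, x, by rw [he, Nat.add_comm]⟩
  -- positivity of all coefficients
  have P13 : ∀ x y : ℕ, l1 * a1 = x * a2 + y * a3 → 0 < y :=
    fun x y he => coeff_r_pos a1 a2 a3 l1 ha2 h12 hl1.1.1 lb1 n3 x y he
  have P12 : ∀ x y : ℕ, l1 * a1 = x * a2 + y * a3 → 0 < x :=
    fun x y he => coeff_r_pos a1 a3 a2 l1 ha3 h13 hl1.1.1 lb1' n2 y x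
      (by rw [he]; exact Nat.add_comm _ _)
  have P23 : ∀ x y : ℕ, l2 * a2 = x * a1 + y * a3 → 0 < y :=
    fun x y he => coeff_r_pos a2 a1 a3 l2 ha1 h12.symm hl2.1.1 lb2 n3' x y he
  have P21 : ∀ x y : ℕ, l2 * a2 = x * a1 + y * a3 → 0 < x :=
    fun x y he => coeff_r_pos a2 a3 a1 l2 ha3 h23 hl2.1.1 lb2' n1 y x
      (by rw [he]; exact Nat.add_comm _ _)
  have P32 : ∀ x y : ℕ, l3 * a3 = x * a1 + y * a2 → 0 < y :=
    fun x y he => coeff_r_pos a3 a1 a2 l3 ha1 h13.symm hl3.1.1 lb3 n2' x y he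
  have P31 : ∀ x y : ℕ, l3 * a3 = x * a1 + y * a2 → 0 < x :=
    fun x y he => coeff_r_pos a3 a2 a1 l3 ha2 h23.symm hl3.1.1 lb3' n1' y x
      (by rw [he]; exact Nat.add_comm _ _)
  -- canonical representations
  obtain ⟨hl1pos, r12, r13, E1⟩ := hl1.1
  obtain ⟨hl2pos, r21, r23, E2⟩ := hl2.1
  obtain ⟨hl3pos, r31, r32, E3⟩ := hl3.1
  -- bounds on coefficients
  have Q12 : ∀ x y : ℕ, l1 * a1 = x * a2 + y * a3 → x < l2 :=
    fun x y he => coeff_lt_gen a1 a2 a3 l1 l2 x y r21 r23 ha3 he (P13 x y he)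
      E2 (P21 _ _ E2) lb1
  have Q13 : ∀ x y : ℕ, l1 * a1 = x * a2 + y * a3 → y < l3 :=
    fun x y he => coeff_lt_gen a1 a3 a2 l1 l3 y x r31 r32 ha2
      (by rw [he]; exact Nat.add_comm _ _) (P12 x y he) E3 (P31 _ _ E3) lb1'
  have Q21 : ∀ x y : ℕ, l2 * a2 = x * a1 + y * a3 → x < l1 :=
    fun x y he => coeff_lt_gen a2 a1 a3 l2 l1 x y r12 r13 ha3 he (P23 x y he)
      E1 (P12 _ _ E1) lb2
  have Q23 : ∀ x y : ℕ, l2 * a2 = x * a1 + y * a3 → y < l3 :=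
    fun x y he => coeff_lt_gen a2 a3 a1 l2 l3 y x r32 r31 ha1
      (by rw [he]; exact Nat.add_comm _ _) (P21 x y he)
      (by rw [E3]; exact Nat.add_comm _ _) (P32 _ _ E3) lb2'
  have Q31 : ∀ x y : ℕ, l3 * a3 = x * a1 + y * a2 → x < l1 :=
    fun x y he => coeff_lt_gen a3 a1 a2 l3 l1 x y r13 r12 ha2 he (P32 x y he)
      (by rw [E1]; exact Nat.add_comm _ _) (P13 _ _ E1) lb3
  have Q32 : ∀ x y : ℕ, l3 * a3 = x * a1 + y * a2 → y < l2 :=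
    fun x y he => coeff_lt_gen a3 a2 a1 l3 l2 y x r23 r21 ha1
      (by rw [he]; exact Nat.add_comm _ _) (P31 x y he)
      (by rw [E2]; exact Nat.add_comm _ _) (P23 _ _ E2) lb3'
  -- simple upper bounds on the l_i
  have l2a3 : l2 ≤ a3 := hl2.2 ⟨ha3, 0, a2, by ring⟩
  have l1a3 : l1 ≤ a3 := hl1.2 ⟨ha3, 0, a1, by ring⟩
  have l1a2 : l1 ≤ a2 := hl1.2 ⟨ha2, a1, 0, by ring⟩
  refine ⟨?_, ?_, ?_, ?_⟩
  · intro x y x' y' h h'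
    exact cancel_aux a2 a3 x y x' y' h23 (lt_of_lt_of_le (Q12 x y h) l2a3)
      (lt_of_lt_of_le (Q12 x' y' h') l2a3) (h.symm.trans h')
  · intro x y x' y' h h'
    exact cancel_aux a1 a3 x y x' y' h13 (lt_of_lt_of_le (Q21 x y h) l1a3)
      (lt_of_lt_of_le (Q21 x' y' h') l1a3) (h.symm.trans h')
  · intro x y x' y' h h'
    exact cancel_aux a1 a2 x y x' y' h12 (lt_of_lt_of_le (Q31 x y h) l1a2)
      (lt_of_lt_of_le (Q31 x' y' h') l1a2) (h.symm.trans h')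
  · intro x12 x13 x21 x23 x31 x32 e1 e2 e3
    have p12 := P12 _ _ e1
    have p13 := P13 _ _ e1
    have p21 := P21 _ _ e2
    have p23 := P23 _ _ e2
    have p31 := P31 _ _ e3
    have p32 := P32 _ _ e3
    have q12 := Q12 _ _ e1
    have q13 := Q13 _ _ e1
    have q21 := Q21 _ _ e2
    have q23 := Q23 _ _ e2
    have q31 := Q31 _ _ e3
    have q32 := Q32 _ _ e3
    have e1' : (l1 : ℤ) * a1 = x12 * a2 + x13 * a3 := by exact_mod_cast e1
    have e2' : (l2 : ℤ) * a2 = x21 * a1 + x23 * a3 := by exact_mod_cast e2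
    have e3' : (l3 : ℤ) * a3 = x31 * a1 + x32 * a2 := by exact_mod_cast e3
    have key1 : (x21 + x31) * a1 = (l2 - x32) * a2 + (l3 - x23) * a3 := by
      zify [Nat.le_of_lt q32, Nat.le_of_lt q23]
      linear_combination -e2' - e3'
    have key2 : (x32 + x12) * a2 = (l1 - x31) * a1 + (l3 - x13) * a3 := by
      zify [Nat.le_of_lt q31, Nat.le_of_lt q13]
      linear_combination -e1' - e3'
    have key3 : (x13 + x23) * a3 = (l1 - x21) * a1 + (l2 - x12) * a2 := by
      zify [Nat.le_of_lt q21, Nat.le_of_lt q12]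
      linear_combination -e1' - e2'
    have m1 : l1 ≤ x21 + x31 := lb1 _ _ _ (by omega) key1
    have m2 : l2 ≤ x32 + x12 := lb2 _ _ _ (by omega) key2
    have m3 : l3 ≤ x13 + x23 := lb3 _ _ _ (by omega) key3
    have S : l1 * a1 + l2 * a2 + l3 * a3
        = (x21 + x31) * a1 + (x32 + x12) * a2 + (x13 + x23) * a3 := by
      rw [Nat.add_mul, Nat.add_mul, Nat.add_mul]
      linarith [e1, e2, e3]
    have h1 : l1 * a1 ≤ (x21 + x31) * a1 := Nat.mul_le_mul_right _ m1
    have h2 : l2 * a2 ≤ (x32 + x12) * a2 := Nat.mul_le_mul_right _ m2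
    have h3 : l3 * a3 ≤ (x13 + x23) * a3 := Nat.mul_le_mul_right _ m3
    have E1eq : l1 * a1 = (x21 + x31) * a1 := by linarith
    have E2eq : l2 * a2 = (x32 + x12) * a2 := by linarith
    have E3eq : l3 * a3 = (x13 + x23) * a3 := by linarith
    exact ⟨Nat.eq_of_mul_eq_mul_right ha3 E3eq,
      Nat.eq_of_mul_eq_mul_right ha1 E1eq,
      Nat.eq_of_mul_eq_mul_right ha2 E2eq⟩
end

section
/- Let a₁, a₂, a₃ be pairwise coprime positive integers with lᵢ ≥ 2 for all i, and let xᵢⱼ be the coefficients of the minimal representations lᵢaᵢ = Σⱼ≠ᵢ xᵢⱼaⱼ. Then the Frobenius number g(a₁,a₂,a₃) = l₁l₂l₃ + max{x₁₂x₂₃x₃₁, x₂₁x₃₂x₁₃} - a₁ - a₂ - a₃. -/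
structure FS where
  a1 : ℕ
  a2 : ℕ
  a3 : ℕ
  l1 : ℕ
  l2 : ℕ
  l3 : ℕ
  x12 : ℕ
  x13 : ℕ
  x21 : ℕ
  x23 : ℕ
  x31 : ℕ
  x32 : ℕ
  ha1 : 0 < a1
  ha2 : 0 < a2
  ha3 : 0 < a3
  h12 : Nat.Coprime a1 a2
  h13 : Nat.Coprime a1 a3
  h23 : Nat.Coprime a2 a3
  hl1 : IsLeast {l : ℕ | 0 < l ∧ ∃ x y : ℕ, l * a1 = x * a2 + y * a3} l1
  hl2 : IsLeast {l : ℕ | 0 < l ∧ ∃ x y : ℕ, l * a2 = x * a1 + y * a3} l2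
  hl3 : IsLeast {l : ℕ | 0 < l ∧ ∃ x y : ℕ, l * a3 = x * a1 + y * a2} l3
  h2l1 : 2 ≤ l1
  h2l2 : 2 ≤ l2
  h2l3 : 2 ≤ l3
  hx1 : l1 * a1 = x12 * a2 + x13 * a3
  hx2 : l2 * a2 = x21 * a1 + x23 * a3
  hx3 : l3 * a3 = x31 * a1 + x32 * a2

namespace FS

lemma isLeast_swap {a b c L : ℕ}
    (h : IsLeast {l : ℕ | 0 < l ∧ ∃ x y : ℕ, l * a = x * b + y * c} L) :
    IsLeast {l : ℕ | 0 < l ∧ ∃ x y : ℕ, l * a = x * c + y * b} L := by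
  obtain ⟨⟨hL, x, y, hxy⟩, hub⟩ := h
  refine ⟨⟨hL, y, x, by omega⟩, ?_⟩
  rintro l ⟨hl, x, y, hxy⟩
  exact hub ⟨hl, y, x, by omega⟩

/-- swap indices 1 and 2 -/
def sw12 (S : FS) : FS where
  a1 := S.a2
  a2 := S.a1
  a3 := S.a3
  l1 := S.l2
  l2 := S.l1
  l3 := S.l3
  x12 := S.x21
  x13 := S.x23
  x21 := S.x12
  x23 := S.x13
  x31 := S.x32
  x32 := S.x31
  ha1 := S.ha2
  ha2 := S.ha1
  ha3 := S.ha3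
  h12 := S.h12.symm
  h13 := S.h23
  h23 := S.h13
  hl1 := S.hl2
  hl2 := S.hl1
  hl3 := isLeast_swap S.hl3
  h2l1 := S.h2l2
  h2l2 := S.h2l1
  h2l3 := S.h2l3
  hx1 := S.hx2
  hx2 := S.hx1
  hx3 := by rw [S.hx3]; omega

/-- swap indices 2 and 3 -/
def sw23 (S : FS) : FS where
  a1 := S.a1
  a2 := S.a3
  a3 := S.a2
  l1 := S.l1
  l2 := S.l3
  l3 := S.l2
  x12 := S.x13
  x13 := S.x12
  x21 := S.x31
  x23 := S.x32
  x31 := S.x21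
  x32 := S.x23
  ha1 := S.ha1
  ha2 := S.ha3
  ha3 := S.ha2
  h12 := S.h13
  h13 := S.h12
  h23 := S.h23.symm
  hl1 := isLeast_swap S.hl1
  hl2 := S.hl3
  hl3 := S.hl2
  h2l1 := S.h2l1
  h2l2 := S.h2l3
  h2l3 := S.h2l2
  hx1 := by rw [S.hx1]; omega
  hx2 := S.hx3
  hx3 := S.hx2

/-- swap indices 1 and 3 -/
def sw13 (S : FS) : FS := S.sw12.sw23.sw12

example (S : FS) : S.sw13.a1 = S.a3 := rfl
example (S : FS) : S.sw13.a2 = S.a2 := rfl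
example (S : FS) : S.sw13.x12 = S.x32 := rfl
example (S : FS) : S.sw13.x21 = S.x23 := rfl
example (S : FS) : S.sw13.x13 = S.x31 := rfl
example (S : FS) : S.sw13.x23 = S.x21 := rfl
example (S : FS) : S.sw13.x31 = S.x13 := rfl
example (S : FS) : S.sw13.l1 = S.l3 := rfl

/-- basic size facts -/
lemma two_le_a1 (S : FS) : 2 ≤ S.a1 := by
  by_contra h
  have ha := S.ha1
  have h2 := S.h2l2
  have h1 : S.a1 = 1 := by omega
  have : S.l2 ≤ 1 := S.hl2.2 ⟨one_pos, S.a2, 0, by rw [h1]; ring⟩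
  omega

lemma two_le_a2 (S : FS) : 2 ≤ S.a2 := S.sw12.two_le_a1
lemma two_le_a3 (S : FS) : 2 ≤ S.a3 := S.sw13.two_le_a1

lemma l1_le_a2 (S : FS) : S.l1 ≤ S.a2 := S.hl1.2 ⟨S.ha2, S.a1, 0, by ring⟩
lemma l1_le_a3 (S : FS) : S.l1 ≤ S.a3 := S.sw23.l1_le_a2
lemma l2_le_a1 (S : FS) : S.l2 ≤ S.a1 := S.sw12.l1_le_a2
lemma l2_le_a3 (S : FS) : S.l2 ≤ S.a3 := S.sw12.l1_le_a3
lemma l3_le_a1 (S : FS) : S.l3 ≤ S.a1 := S.sw13.l1_le_a3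
lemma l3_le_a2 (S : FS) : S.l3 ≤ S.a2 := S.sw13.l1_le_a2

lemma l1_pos (S : FS) : 0 < S.l1 := S.hl1.1.1

end FS

namespace FS

lemma x12_pos (S : FS) : 0 < S.x12 := by
  obtain ⟨a1, a2, a3, l1, l2, l3, x12, x13, x21, x23, x31, x32,
    ha1, ha2, ha3, h12, h13, h23, hl1, hl2, hl3, h2l1, h2l2, h2l3, hx1, hx2, hx3⟩ := S
  have t1 : 2 ≤ a1 := FS.two_le_a1 ⟨a1, a2, a3, l1, l2, l3, x12, x13, x21, x23, x31, x32,
    ha1, ha2, ha3, h12, h13, h23, hl1, hl2, hl3, h2l1, h2l2, h2l3, hx1, hx2, hx3⟩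
  have t3 : 2 ≤ a3 := FS.two_le_a3 ⟨a1, a2, a3, l1, l2, l3, x12, x13, x21, x23, x31, x32,
    ha1, ha2, ha3, h12, h13, h23, hl1, hl2, hl3, h2l1, h2l2, h2l3, hx1, hx2, hx3⟩
  have hle : l1 ≤ a3 := FS.l1_le_a3 ⟨a1, a2, a3, l1, l2, l3, x12, x13, x21, x23, x31, x32,
    ha1, ha2, ha3, h12, h13, h23, hl1, hl2, hl3, h2l1, h2l2, h2l3, hx1, hx2, hx3⟩
  simp only at *
  by_contra h
  have hx12 : x12 = 0 := by omega
  rw [hx12, zero_mul, zero_add] at hx1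
  -- a3 ∣ l1 hence l1 = a3
  have hdvd : a3 ∣ l1 := by
    have : a3 ∣ l1 * a1 := ⟨x13, by rw [hx1]; ring⟩
    exact (Nat.Coprime.dvd_of_dvd_mul_right (h13.symm) this)
  have hl1a3 : l1 = a3 := le_antisymm hle (Nat.le_of_dvd hl1.1.1 hdvd)
  -- the residue trick
  haveI : NeZero a3 := ⟨by omega⟩
  set m : ℕ := ((a2 : ZMod a3) * (a1 : ZMod a3)⁻¹).val with hm
  have hmlt : m < a3 := ZMod.val_lt _
  have hcast : ((m : ℕ) : ZMod a3) = (a2 : ZMod a3) * (a1 : ZMod a3)⁻¹ := by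
    rw [hm, ZMod.natCast_val, ZMod.cast_id]
  have hunit : IsUnit ((a1 : ZMod a3)) := (ZMod.isUnit_iff_coprime a1 a3).2 h13
  have hma1 : ((m * a1 : ℕ) : ZMod a3) = ((a2 : ℕ) : ZMod a3) := by
    push_cast
    rw [hcast, mul_assoc, ZMod.inv_mul_of_unit _ hunit, mul_one]
  have hmod : m * a1 ≡ a2 [MOD a3] := (ZMod.natCast_eq_natCast_iff _ _ _).1 hma1
  have hm0 : m ≠ 0 := by
    intro h0
    rw [h0, zero_mul] at hmod
    have : a3 ∣ a2 := (Nat.modEq_zero_iff_dvd).1 hmod.symm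
    have : a3 ∣ Nat.gcd a2 a3 := Nat.dvd_gcd this dvd_rfl
    rw [h23] at this
    have := Nat.le_of_dvd one_pos this
    omega
  rcases le_or_gt a2 (m * a1) with hge | hlt
  · -- m * a1 = a2 + k * a3 : contradicts minimality of l1 = a3
    have hdvd2 : a3 ∣ m * a1 - a2 := (Nat.modEq_iff_dvd' hge).1 hmod.symm
    obtain ⟨k, hk⟩ := hdvd2
    have hmem : m * a1 = 1 * a2 + k * a3 := by
      rw [one_mul, Nat.mul_comm k a3]
      omega
    have : l1 ≤ m := hl1.2 ⟨by omega, 1, k, hmem⟩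
    omega
  · -- a2 = m * a1 + k * a3 : l2 = 1
    have hdvd2 : a3 ∣ a2 - m * a1 := (Nat.modEq_iff_dvd' hlt.le).1 hmod
    obtain ⟨k, hk⟩ := hdvd2
    have hmem : 1 * a2 = m * a1 + k * a3 := by
      rw [one_mul, Nat.mul_comm k a3]
      omega
    have : l2 ≤ 1 := hl2.2 ⟨one_pos, m, k, hmem⟩
    omega

lemma x13_pos (S : FS) : 0 < S.x13 := S.sw23.x12_pos
lemma x21_pos (S : FS) : 0 < S.x21 := S.sw12.x12_pos
lemma x23_pos (S : FS) : 0 < S.x23 := S.sw12.sw23.x12_pos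
lemma x31_pos (S : FS) : 0 < S.x31 := S.sw13.sw23.x12_pos
lemma x32_pos (S : FS) : 0 < S.x32 := S.sw13.x12_pos

end FS

namespace FS

lemma x21_le_l1 (S : FS) : S.x21 ≤ S.l1 := by
  have hpos := S.x12_pos
  have ha1 := S.ha1
  by_contra hcon
  push_neg at hcon
  rcases le_or_gt S.l2 S.x12 with hle | hlt
  · have h1 : S.l2 * S.a2 ≤ S.x12 * S.a2 := Nat.mul_le_mul_right _ hle
    rw [S.hx2] at h1
    have h2 : S.x12 * S.a2 ≤ S.l1 * S.a1 := by rw [S.hx1]; omega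
    have h3 : S.x21 * S.a1 ≤ S.l1 * S.a1 := by omega
    have := Nat.le_of_mul_le_mul_right (by omega : S.x21 * S.a1 ≤ S.l1 * S.a1) ha1
    omega
  · have hx1' : (S.l1 : ℤ) * S.a1 = S.x12 * S.a2 + S.x13 * S.a3 := by exact_mod_cast S.hx1
    have hx2' : (S.l2 : ℤ) * S.a2 = S.x21 * S.a1 + S.x23 * S.a3 := by exact_mod_cast S.hx2
    have heq : (S.l2 - S.x12) * S.a2 = (S.x21 - S.l1) * S.a1 + (S.x13 + S.x23) * S.a3 := by
      zify [hlt.le, hcon.le]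
      linarith [hx1', hx2']
    have := S.hl2.2 ⟨by omega, S.x21 - S.l1, S.x13 + S.x23, heq⟩
    omega

lemma x31_le_l1 (S : FS) : S.x31 ≤ S.l1 := S.sw23.x21_le_l1
lemma x12_le_l2 (S : FS) : S.x12 ≤ S.l2 := S.sw12.x21_le_l1
lemma x32_le_l2 (S : FS) : S.x32 ≤ S.l2 := S.sw12.sw23.x21_le_l1
lemma x13_le_l3 (S : FS) : S.x13 ≤ S.l3 := S.sw13.sw23.x21_le_l1
lemma x23_le_l3 (S : FS) : S.x23 ≤ S.l3 := S.sw13.x21_le_l1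

lemma l1_le_sum (S : FS) : S.l1 ≤ S.x21 + S.x31 := by
  have h1 := S.x32_le_l2
  have h2 := S.x23_le_l3
  have hx2' : (S.l2 : ℤ) * S.a2 = S.x21 * S.a1 + S.x23 * S.a3 := by exact_mod_cast S.hx2
  have hx3' : (S.l3 : ℤ) * S.a3 = S.x31 * S.a1 + S.x32 * S.a2 := by exact_mod_cast S.hx3
  have heq : (S.x21 + S.x31) * S.a1 = (S.l2 - S.x32) * S.a2 + (S.l3 - S.x23) * S.a3 := by
    zify [h1, h2]
    linarith [hx2', hx3']
  have hpos : 0 < S.x21 + S.x31 := by have := S.x21_pos; omega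
  exact S.hl1.2 ⟨hpos, S.l2 - S.x32, S.l3 - S.x23, heq⟩

lemma l2_le_sum (S : FS) : S.l2 ≤ S.x12 + S.x32 := S.sw12.l1_le_sum
lemma l3_le_sum (S : FS) : S.l3 ≤ S.x13 + S.x23 := by
  have h : S.l3 ≤ S.x23 + S.x13 := S.sw13.l1_le_sum
  omega

lemma l1_eq (S : FS) : S.l1 = S.x21 + S.x31 ∧ S.l2 = S.x12 + S.x32 ∧ S.l3 = S.x13 + S.x23 := by
  have h1 := S.l1_le_sum
  have h2 := S.l2_le_sum
  have h3 := S.l3_le_sum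
  have hsum : S.l1 * S.a1 + S.l2 * S.a2 + S.l3 * S.a3
      = (S.x21 + S.x31) * S.a1 + (S.x12 + S.x32) * S.a2 + (S.x13 + S.x23) * S.a3 := by
    rw [S.hx1, S.hx2, S.hx3]; ring
  have m1 : S.l1 * S.a1 ≤ (S.x21 + S.x31) * S.a1 := Nat.mul_le_mul_right _ h1
  have m2 : S.l2 * S.a2 ≤ (S.x12 + S.x32) * S.a2 := Nat.mul_le_mul_right _ h2
  have m3 : S.l3 * S.a3 ≤ (S.x13 + S.x23) * S.a3 := Nat.mul_le_mul_right _ h3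
  have e1 : S.l1 * S.a1 = (S.x21 + S.x31) * S.a1 := by omega
  have e2 : S.l2 * S.a2 = (S.x12 + S.x32) * S.a2 := by omega
  have e3 : S.l3 * S.a3 = (S.x13 + S.x23) * S.a3 := by omega
  have := S.ha1; have := S.ha2; have := S.ha3
  exact ⟨Nat.eq_of_mul_eq_mul_right S.ha1 e1, Nat.eq_of_mul_eq_mul_right S.ha2 e2,
    Nat.eq_of_mul_eq_mul_right S.ha3 e3⟩

end FS

namespace FS

lemma hx1z (S : FS) : (S.l1 : ℤ) * S.a1 = S.x12 * S.a2 + S.x13 * S.a3 := by exact_mod_cast S.hx1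
lemma hx2z (S : FS) : (S.l2 : ℤ) * S.a2 = S.x21 * S.a1 + S.x23 * S.a3 := by exact_mod_cast S.hx2
lemma hx3z (S : FS) : (S.l3 : ℤ) * S.a3 = S.x31 * S.a1 + S.x32 * S.a2 := by exact_mod_cast S.hx3

lemma keyZ (S : FS) : ((S.l2 : ℤ) - S.x32) * S.a2 + ((S.l3 : ℤ) - S.x23) * S.a3
    = S.l1 * S.a1 := by
  have h := S.l1_eq.1
  have hz : (S.l1 : ℤ) = S.x21 + S.x31 := by exact_mod_cast h
  have := S.hx2z
  have := S.hx3z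
  linear_combination S.hx2z + S.hx3z - S.a1 * hz

lemma memS2 (S : FS) {d k e : ℤ} (hd : 0 < d) (hk : 0 ≤ k) (he : 0 ≤ e)
    (heq : d * S.a2 = k * S.a1 + e * S.a3) : (S.l2 : ℤ) ≤ d := by
  have hnat : d.toNat * S.a2 = k.toNat * S.a1 + e.toNat * S.a3 := by
    have hh : ((d.toNat * S.a2 : ℕ) : ℤ) = ((k.toNat * S.a1 + e.toNat * S.a3 : ℕ) : ℤ) := by
      push_cast [Int.toNat_of_nonneg hd.le, Int.toNat_of_nonneg hk, Int.toNat_of_nonneg he]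
      linarith
    exact_mod_cast hh
  have h1 : S.l2 ≤ d.toNat := S.hl2.2 ⟨by omega, k.toNat, e.toNat, hnat⟩
  omega

lemma memS1 (S : FS) {d k e : ℤ} (hd : 0 < d) (hk : 0 ≤ k) (he : 0 ≤ e)
    (heq : d * S.a1 = k * S.a2 + e * S.a3) : (S.l1 : ℤ) ≤ d := S.sw12.memS2 hd hk he heq

lemma memS3 (S : FS) {d k e : ℤ} (hd : 0 < d) (hk : 0 ≤ k) (he : 0 ≤ e)
    (heq : d * S.a3 = k * S.a1 + e * S.a2) : (S.l3 : ℤ) ≤ d := S.sw23.memS2 hd hk he heq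

lemma aux_pp (S : FS) (d1 d2 k : ℤ) (h1 : 0 ≤ d1) (h2 : 0 ≤ d2) (hne : ¬(d1 = 0 ∧ d2 = 0))
    (heq : d1 * S.a2 + d2 * S.a3 = k * S.a1)
    (hb1 : d1 < S.l2) (hb2 : d2 < S.l3)
    (hD : d1 + S.x32 < S.l2 ∨ d2 + S.x23 < S.l3) : False := by
  have ha1 : (0:ℤ) < S.a1 := by exact_mod_cast S.ha1
  have ha2 : (0:ℤ) < S.a2 := by exact_mod_cast S.ha2
  have ha3 : (0:ℤ) < S.a3 := by exact_mod_cast S.ha3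
  have hx23 : S.x23 ≤ S.l3 := S.x23_le_l3
  have hx32 : S.x32 ≤ S.l2 := S.x32_le_l2
  have hx23' : (S.x23 : ℤ) ≤ S.l3 := by exact_mod_cast hx23
  have hx32' : (S.x32 : ℤ) ≤ S.l2 := by exact_mod_cast hx32
  -- k is at least l1
  have hval : 0 < d1 * S.a2 + d2 * S.a3 := by
    rcases (by omega : 0 < d1 ∨ 0 < d2) with h | h
    · nlinarith
    · nlinarith
  have hkpos : 0 < k := by nlinarith
  have hl1k : (S.l1 : ℤ) ≤ k := S.memS1 hkpos h1 h2 (by linarith)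
  set e1 : ℤ := d1 + S.x32 - S.l2 with he1
  set e2 : ℤ := d2 + S.x23 - S.l3 with he2
  have hval2 : e1 * S.a2 + e2 * S.a3 = (k - S.l1) * S.a1 := by
    have := S.keyZ
    linear_combination heq - S.keyZ
  rcases hD with hd | hd
  · -- e1 < 0
    have he1neg : e1 < 0 := by omega
    rcases lt_or_ge e2 0 with h | h
    · have hn1 : e1 * S.a2 < 0 := mul_neg_of_neg_of_pos he1neg ha2
      have hn2 : e2 * S.a3 < 0 := mul_neg_of_neg_of_pos h ha3
      have hn3 : 0 ≤ (k - S.l1) * S.a1 := mul_nonneg (by linarith) ha1.le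
      linarith [hval2]
    · have hq1 : 0 ≤ (k - S.l1) * S.a1 := mul_nonneg (by linarith) ha1.le
      have hq2 : 0 < (-e1) * S.a2 := mul_pos (by linarith) ha2
      have hq3 : e2 * S.a3 = (k - S.l1) * S.a1 + (-e1) * S.a2 := by linear_combination hval2
      have he2pos : 0 < e2 := by nlinarith
      have : (S.l3 : ℤ) ≤ e2 := S.memS3 (d := e2) (k := k - S.l1) (e := -e1) he2pos
        (by linarith) (by linarith) (by linear_combination hval2)
      omega
  · -- e2 < 0
    have he2neg : e2 < 0 := by omega
    rcases lt_or_ge e1 0 with h | h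
    · have hn1 : e1 * S.a2 < 0 := mul_neg_of_neg_of_pos h ha2
      have hn2 : e2 * S.a3 < 0 := mul_neg_of_neg_of_pos he2neg ha3
      have hn3 : 0 ≤ (k - S.l1) * S.a1 := mul_nonneg (by linarith) ha1.le
      linarith [hval2]
    · have hq1 : 0 ≤ (k - S.l1) * S.a1 := mul_nonneg (by linarith) ha1.le
      have hq2 : 0 < (-e2) * S.a3 := mul_pos (by linarith) ha3
      have hq3 : e1 * S.a2 = (k - S.l1) * S.a1 + (-e2) * S.a3 := by linear_combination hval2
      have he1pos : 0 < e1 := by nlinarith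
      have : (S.l2 : ℤ) ≤ e1 := S.memS2 (d := e1) (k := k - S.l1) (e := -e2) he1pos
        (by linarith) (by linarith) (by linear_combination hval2)
      omega

end FS

namespace FS

lemma aux_inj (S : FS) (u v u' v' : ℕ)
    (hu : u < S.l2) (hv : v < S.l3) (hD : u + S.x32 < S.l2 ∨ v + S.x23 < S.l3)
    (hu' : u' < S.l2) (hv' : v' < S.l3) (hD' : u' + S.x32 < S.l2 ∨ v' + S.x23 < S.l3)
    (hcong : (S.a1 : ℤ) ∣ ((u : ℤ) * S.a2 + v * S.a3) - ((u' : ℤ) * S.a2 + v' * S.a3)) :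
    u = u' ∧ v = v' := by
  have ha1 : (0:ℤ) < S.a1 := by exact_mod_cast S.ha1
  have ha2 : (0:ℤ) < S.a2 := by exact_mod_cast S.ha2
  have ha3 : (0:ℤ) < S.a3 := by exact_mod_cast S.ha3
  have hl2a1 : (S.l2 : ℤ) ≤ S.a1 := by exact_mod_cast S.l2_le_a1
  have hl3a1 : (S.l3 : ℤ) ≤ S.a1 := by exact_mod_cast S.l3_le_a1
  obtain ⟨k, hk⟩ := hcong
  set d1 : ℤ := (u : ℤ) - u' with hd1
  set d2 : ℤ := (v : ℤ) - v' with hd2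
  have hk' : d1 * S.a2 + d2 * S.a3 = k * S.a1 := by linear_combination hk
  have hb1 : d1 < S.l2 := by
    have h : (u:ℤ) < S.l2 := by exact_mod_cast hu
    omega
  have hb1' : -(S.l2 : ℤ) < d1 := by
    have h : (u':ℤ) < S.l2 := by exact_mod_cast hu'
    omega
  have hb2 : d2 < S.l3 := by
    have h : (v:ℤ) < S.l3 := by exact_mod_cast hv
    omega
  have hb2' : -(S.l3 : ℤ) < d2 := by
    have h : (v':ℤ) < S.l3 := by exact_mod_cast hv'
    omega
  rcases lt_trichotomy d1 0 with hs1 | hs1 | hs1 <;> rcases lt_trichotomy d2 0 with hs2 | hs2 | hs2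
  · -- d1 < 0, d2 < 0 : use aux_pp on (-d1, -d2, -k) and hD'
    exfalso
    have hDi : -d1 + S.x32 < S.l2 ∨ -d2 + S.x23 < S.l3 := by
      rcases hD' with h | h
      · left
        have : ((u' : ℤ) + S.x32) < S.l2 := by exact_mod_cast h
        omega
      · right
        have : ((v' : ℤ) + S.x23) < S.l3 := by exact_mod_cast h
        omega
    exact S.aux_pp (-d1) (-d2) (-k) (by omega) (by omega) (by omega)
      (by linear_combination -hk') (by omega) (by omega) hDi
  · -- d1 < 0, d2 = 0 : a1 ∣ d1
    exfalso
    have hdvd : (S.a1 : ℤ) ∣ d1 * S.a2 := ⟨k, by linear_combination hk' - (S.a3:ℤ) * hs2⟩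
    have hcop : IsCoprime (S.a1 : ℤ) (S.a2 : ℤ) := Nat.isCoprime_iff_coprime.2 S.h12
    have hdvd2 : (S.a1 : ℤ) ∣ d1 := hcop.dvd_of_dvd_mul_right hdvd
    have := Int.le_of_dvd (by omega : (0:ℤ) < -d1) (hdvd2.neg_right)
    omega
  · -- d1 < 0, d2 > 0
    exfalso
    rcases le_or_gt 0 k with hks | hks
    · have : (S.l3 : ℤ) ≤ d2 := S.memS3 (d := d2) (k := k) (e := -d1) hs2 hks (by omega)
        (by linear_combination hk')
      omega
    · have : (S.l2 : ℤ) ≤ -d1 := S.memS2 (d := -d1) (k := -k) (e := d2) (by omega)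
        (by omega) (by omega) (by linear_combination -hk')
      omega
  · -- d1 = 0, d2 < 0
    exfalso
    have hdvd : (S.a1 : ℤ) ∣ d2 * S.a3 := ⟨k, by linear_combination hk' - (S.a2:ℤ) * hs1⟩
    have hcop : IsCoprime (S.a1 : ℤ) (S.a3 : ℤ) := Nat.isCoprime_iff_coprime.2 S.h13
    have hdvd2 : (S.a1 : ℤ) ∣ d2 := hcop.dvd_of_dvd_mul_right hdvd
    have := Int.le_of_dvd (by omega : (0:ℤ) < -d2) (hdvd2.neg_right)
    omega
  · -- both zero
    constructor <;> omega
  · -- d1 = 0, d2 > 0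
    exfalso
    have hdvd : (S.a1 : ℤ) ∣ d2 * S.a3 := ⟨k, by linear_combination hk' - (S.a2:ℤ) * hs1⟩
    have hcop : IsCoprime (S.a1 : ℤ) (S.a3 : ℤ) := Nat.isCoprime_iff_coprime.2 S.h13
    have hdvd2 : (S.a1 : ℤ) ∣ d2 := hcop.dvd_of_dvd_mul_right hdvd
    have := Int.le_of_dvd (by omega : (0:ℤ) < d2) hdvd2
    omega
  · -- d1 > 0, d2 < 0
    exfalso
    rcases le_or_gt 0 k with hks | hks
    · have : (S.l2 : ℤ) ≤ d1 := S.memS2 (d := d1) (k := k) (e := -d2) hs1 hks (by omega)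
        (by linear_combination hk')
      omega
    · have : (S.l3 : ℤ) ≤ -d2 := S.memS3 (d := -d2) (k := -k) (e := d1) (by omega)
        (by omega) (by omega) (by linear_combination -hk')
      omega
  · -- d1 > 0, d2 = 0
    exfalso
    have hdvd : (S.a1 : ℤ) ∣ d1 * S.a2 := ⟨k, by linear_combination hk' - (S.a3:ℤ) * hs2⟩
    have hcop : IsCoprime (S.a1 : ℤ) (S.a2 : ℤ) := Nat.isCoprime_iff_coprime.2 S.h12
    have hdvd2 : (S.a1 : ℤ) ∣ d1 := hcop.dvd_of_dvd_mul_right hdvd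
    have := Int.le_of_dvd (by omega : (0:ℤ) < d1) hdvd2
    omega
  · -- d1 > 0, d2 > 0
    exfalso
    have hDi : d1 + S.x32 < S.l2 ∨ d2 + S.x23 < S.l3 := by
      rcases hD with h | h
      · left
        have : ((u : ℤ) + S.x32) < S.l2 := by exact_mod_cast h
        omega
      · right
        have : ((v : ℤ) + S.x23) < S.l3 := by exact_mod_cast h
        omega
    exact S.aux_pp d1 d2 k (by omega) (by omega) (by omega) hk' hb1 hb2 hDi

end FS

namespace FS

/-- every residue class mod a1 has a value-minimal representative, and it lies in D -/
lemma minD (S : FS) (n : ℕ) : ∃ u v : ℕ, u < S.l2 ∧ v < S.l3 ∧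
    (u + S.x32 < S.l2 ∨ v + S.x23 < S.l3) ∧
    ((S.a1 : ℤ) ∣ ((u * S.a2 + v * S.a3 : ℕ) : ℤ) - n) ∧
    (∀ s t : ℕ, ((S.a1 : ℤ) ∣ ((s * S.a2 + t * S.a3 : ℕ) : ℤ) - n) →
      u * S.a2 + v * S.a3 ≤ s * S.a2 + t * S.a3) := by
  classical
  haveI : NeZero S.a1 := ⟨by have := S.ha1; omega⟩
  set P : ℕ → Prop := fun m => ∃ u v : ℕ, u * S.a2 + v * S.a3 = m ∧
    ((S.a1 : ℤ) ∣ (m : ℤ) - n) with hP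
  have hex : ∃ m, P m := by
    set u0 : ℕ := ((n : ZMod S.a1) * (S.a2 : ZMod S.a1)⁻¹).val with hu0
    refine ⟨u0 * S.a2 + 0 * S.a3, u0, 0, rfl, ?_⟩
    have hunit : IsUnit ((S.a2 : ZMod S.a1)) := (ZMod.isUnit_iff_coprime S.a2 S.a1).2 S.h12.symm
    have hcast : ((u0 : ℕ) : ZMod S.a1) = (n : ZMod S.a1) * (S.a2 : ZMod S.a1)⁻¹ := by
      rw [hu0, ZMod.natCast_val, ZMod.cast_id]
    have h2 : ((u0 * S.a2 + 0 * S.a3 : ℕ) : ZMod S.a1) = ((n : ℕ) : ZMod S.a1) := by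
      push_cast
      rw [hcast, mul_assoc, ZMod.inv_mul_of_unit _ hunit, mul_one]
      ring
    have h3 := (ZMod.natCast_eq_natCast_iff _ _ _).1 h2
    have h4 := h3.dvd
    exact dvd_sub_comm.mp h4
  obtain ⟨m, hPm, hmin, hmin2⟩ : ∃ m, P m ∧ (∀ m', m' < m → ¬ P m') ∧ (∀ m', P m' → m ≤ m') :=
    ⟨Nat.find hex, Nat.find_spec hex, fun m' h => Nat.find_min hex h,
      fun m' h => Nat.find_min' hex h⟩
  obtain ⟨u, v, huv, hdvd⟩ := hPm
  have huvz : ((u : ℤ) * S.a2 + v * S.a3) = (m : ℤ) := by exact_mod_cast huv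
  have hu : u < S.l2 := by
    by_contra hcon
    push_neg at hcon
    have hbig : S.x21 * S.a1 ≤ m := by
      have h1 : S.l2 * S.a2 ≤ u * S.a2 := Nat.mul_le_mul_right _ hcon
      rw [S.hx2] at h1
      omega
    apply hmin (m - S.x21 * S.a1)
      (by have h := Nat.mul_pos S.x21_pos S.ha1; omega)
    refine ⟨u - S.l2, v + S.x23, ?_, ?_⟩
    · zify [hcon, hbig]
      linarith [S.hx2z, huvz]
    · have hc : ((m - S.x21 * S.a1 : ℕ) : ℤ) = (m : ℤ) - S.x21 * S.a1 := by zify [hbig]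
      rw [hc]
      have h5 : ((m : ℤ) - S.x21 * S.a1) - n = ((m : ℤ) - n) - S.x21 * S.a1 := by ring
      rw [h5]
      exact dvd_sub hdvd ⟨S.x21, by ring⟩
  have hv : v < S.l3 := by
    by_contra hcon
    push_neg at hcon
    have hbig : S.x31 * S.a1 ≤ m := by
      have h1 : S.l3 * S.a3 ≤ v * S.a3 := Nat.mul_le_mul_right _ hcon
      rw [S.hx3] at h1
      omega
    apply hmin (m - S.x31 * S.a1)
      (by have h := Nat.mul_pos S.x31_pos S.ha1; omega)
    refine ⟨u + S.x32, v - S.l3, ?_, ?_⟩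
    · zify [hcon, hbig]
      linarith [S.hx3z, huvz]
    · have hc : ((m - S.x31 * S.a1 : ℕ) : ℤ) = (m : ℤ) - S.x31 * S.a1 := by zify [hbig]
      rw [hc]
      have h5 : ((m : ℤ) - S.x31 * S.a1) - n = ((m : ℤ) - n) - S.x31 * S.a1 := by ring
      rw [h5]
      exact dvd_sub hdvd ⟨S.x31, by ring⟩
  have hD : u + S.x32 < S.l2 ∨ v + S.x23 < S.l3 := by
    by_contra hcon
    push_neg at hcon
    obtain ⟨hc1, hc2⟩ := hcon
    have hu1 : S.x12 ≤ u := by have := S.l1_eq.2.1; omega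
    have hv1 : S.x13 ≤ v := by have := S.l1_eq.2.2; omega
    have hbig : S.l1 * S.a1 ≤ m := by
      have h1 : S.x12 * S.a2 ≤ u * S.a2 := Nat.mul_le_mul_right _ hu1
      have h2 : S.x13 * S.a3 ≤ v * S.a3 := Nat.mul_le_mul_right _ hv1
      have h3 := S.hx1
      omega
    apply hmin (m - S.l1 * S.a1)
      (by have h := Nat.mul_pos S.l1_pos S.ha1; omega)
    have hx32l2 : S.x32 ≤ S.l2 := S.x32_le_l2
    have hx23l3 : S.x23 ≤ S.l3 := S.x23_le_l3
    refine ⟨u + S.x32 - S.l2, v + S.x23 - S.l3, ?_, ?_⟩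
    · zify [hc1, hc2, hbig]
      linarith [S.keyZ, huvz]
    · have hc : ((m - S.l1 * S.a1 : ℕ) : ℤ) = (m : ℤ) - S.l1 * S.a1 := by zify [hbig]
      rw [hc]
      have h5 : ((m : ℤ) - S.l1 * S.a1) - n = ((m : ℤ) - n) - S.l1 * S.a1 := by ring
      rw [h5]
      exact dvd_sub hdvd ⟨S.l1, by ring⟩
  refine ⟨u, v, hu, hv, hD, by rw [huv]; exact hdvd, ?_⟩
  intro s t hst
  rw [huv]
  exact hmin2 _ ⟨s, t, rfl, hst⟩

end FS

namespace FS

lemma card_filter_aux (L x : ℕ) (h : x ≤ L) :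
    ((Finset.range L).filter (fun u => L ≤ u + x)).card = x := by
  have he : (Finset.range L).filter (fun u => L ≤ u + x) = Finset.Ico (L - x) L := by
    ext a
    simp only [Finset.mem_filter, Finset.mem_range, Finset.mem_Ico]
    omega
  rw [he, Nat.card_Ico]
  omega

lemma a1_eq (S : FS) : S.a1 + S.x23 * S.x32 = S.l2 * S.l3 := by
  classical
  haveI : NeZero S.a1 := ⟨by have := S.ha1; omega⟩
  have hx32 : S.x32 ≤ S.l2 := S.x32_le_l2
  have hx23 : S.x23 ≤ S.l3 := S.x23_le_l3
  set D : Finset (ℕ × ℕ) := (Finset.range S.l2 ×ˢ Finset.range S.l3).filter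
    (fun p => p.1 + S.x32 < S.l2 ∨ p.2 + S.x23 < S.l3) with hD
  -- cardinality of D
  have hDcard : D.card = S.l2 * S.l3 - S.x32 * S.x23 := by
    have h1 := Finset.card_filter_add_card_filter_not
      (s := Finset.range S.l2 ×ˢ Finset.range S.l3)
      (p := fun p => p.1 + S.x32 < S.l2 ∨ p.2 + S.x23 < S.l3)
    have h3 : ((Finset.range S.l2 ×ˢ Finset.range S.l3).filter
        (fun p => ¬(p.1 + S.x32 < S.l2 ∨ p.2 + S.x23 < S.l3))).card = S.x32 * S.x23 := by
      have he : (Finset.range S.l2 ×ˢ Finset.range S.l3).filter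
          (fun p => ¬(p.1 + S.x32 < S.l2 ∨ p.2 + S.x23 < S.l3))
          = Finset.Ico (S.l2 - S.x32) S.l2 ×ˢ Finset.Ico (S.l3 - S.x23) S.l3 := by
        ext ⟨a, b⟩
        simp only [Finset.mem_filter, Finset.mem_product, Finset.mem_range, Finset.mem_Ico]
        omega
      rw [he, Finset.card_product, Nat.card_Ico, Nat.card_Ico]
      have e1 : S.l2 - (S.l2 - S.x32) = S.x32 := by omega
      have e2 : S.l3 - (S.l3 - S.x23) = S.x23 := by omega
      rw [e1, e2]
    have h4 : (Finset.range S.l2 ×ˢ Finset.range S.l3).card = S.l2 * S.l3 := by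
      rw [Finset.card_product, Finset.card_range, Finset.card_range]
    have h5 : D.card + S.x32 * S.x23 = S.l2 * S.l3 := by
      rw [hD, ← h3, ← h4]
      exact h1
    omega
  -- injectivity into ZMod a1
  have hinj : D.card ≤ S.a1 := by
    have := Finset.card_le_card_of_injOn
      (f := fun p : ℕ × ℕ => ((p.1 * S.a2 + p.2 * S.a3 : ℕ) : ZMod S.a1))
      (s := D) (t := Finset.univ) (fun p _ => Finset.mem_univ _) ?_
    · calc D.card ≤ (Finset.univ : Finset (ZMod S.a1)).card := this
        _ = S.a1 := by rw [Finset.card_univ, ZMod.card]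
    · intro p hp q hq hfeq
      simp only [hD, Finset.mem_coe, Finset.mem_filter, Finset.mem_product,
        Finset.mem_range] at hp hq
      obtain ⟨⟨hp1, hp2⟩, hp3⟩ := hp
      obtain ⟨⟨hq1, hq2⟩, hq3⟩ := hq
      have hmod := (ZMod.natCast_eq_natCast_iff _ _ _).1 hfeq
      have hdvd := hmod.dvd
      have hcast : ((q.1 * S.a2 + q.2 * S.a3 : ℕ) : ℤ) - ((p.1 * S.a2 + p.2 * S.a3 : ℕ) : ℤ)
          = -((((p.1 : ℤ) * S.a2 + p.2 * S.a3)) - (((q.1 : ℤ) * S.a2 + q.2 * S.a3))) := by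
        push_cast
        ring
      rw [hcast] at hdvd
      have hdvd2 := (dvd_neg.1 hdvd)
      obtain ⟨e1, e2⟩ := S.aux_inj p.1 p.2 q.1 q.2 hp1 hp2 hp3 hq1 hq2 hq3 hdvd2
      exact Prod.ext e1 e2
  -- divisibility
  have ha1 : (0:ℤ) < S.a1 := by exact_mod_cast S.ha1
  have ha2 : (0:ℤ) < S.a2 := by exact_mod_cast S.ha2
  have ha3 : (0:ℤ) < S.a3 := by exact_mod_cast S.ha3
  have hid : ((S.l2 : ℤ) * S.l3 - S.x23 * S.x32) * (S.a2 * S.a3)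
      = S.a1 * (S.x21 * S.x31 * S.a1 + S.x21 * S.x32 * S.a2 + S.x23 * S.x31 * S.a3) := by
    linear_combination (S.l3 : ℤ) * S.a3 * S.hx2z + ((S.x21 : ℤ) * S.a1 + S.x23 * S.a3) * S.hx3z
  have hcop : IsCoprime (S.a1 : ℤ) ((S.a2 : ℤ) * S.a3) :=
    (Nat.isCoprime_iff_coprime.2 S.h12).mul_right (Nat.isCoprime_iff_coprime.2 S.h13)
  have hdvd : (S.a1 : ℤ) ∣ ((S.l2 : ℤ) * S.l3 - S.x23 * S.x32) :=
    hcop.dvd_of_dvd_mul_right ⟨_, hid⟩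
  have hpos : (0:ℤ) < (S.l2 : ℤ) * S.l3 - S.x23 * S.x32 := by
    have h1 : (S.x23 : ℤ) ≤ (S.l3 : ℤ) - 1 := by
      have := S.l1_eq.2.2
      have := S.x13_pos
      have : (S.l3 : ℤ) = S.x13 + S.x23 := by exact_mod_cast S.l1_eq.2.2
      have hx13 : (1:ℤ) ≤ S.x13 := by exact_mod_cast S.x13_pos
      omega
    have h2 : (S.x32 : ℤ) ≤ S.l2 := by exact_mod_cast hx32
    have h32n : (0:ℤ) ≤ S.x32 := by positivity
    have hl3 : (0:ℤ) < S.l3 := by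
      have := S.h2l3; have h : (2:ℤ) ≤ S.l3 := by exact_mod_cast this
      omega
    have hl2 : (0:ℤ) < S.l2 := by
      have := S.h2l2; have h : (2:ℤ) ≤ S.l2 := by exact_mod_cast this
      omega
    have m1 : (S.x23 : ℤ) * S.x32 ≤ ((S.l3 : ℤ) - 1) * S.x32 :=
      mul_le_mul_of_nonneg_right h1 h32n
    have m2 : ((S.l3 : ℤ) - 1) * S.x32 ≤ ((S.l3 : ℤ) - 1) * S.l2 :=
      mul_le_mul_of_nonneg_left h2 (by omega)
    nlinarith
  have hle : (S.a1 : ℤ) ≤ (S.l2 : ℤ) * S.l3 - S.x23 * S.x32 := Int.le_of_dvd hpos hdvd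
  -- combine
  have hcard2 : ((S.l2 * S.l3 - S.x32 * S.x23 : ℕ) : ℤ) ≤ S.a1 := by
    rw [← hDcard]
    exact_mod_cast hinj
  have hsub : ((S.l2 * S.l3 - S.x32 * S.x23 : ℕ) : ℤ)
      = (S.l2 : ℤ) * S.l3 - S.x32 * S.x23 := by
    have : S.x32 * S.x23 ≤ S.l2 * S.l3 := Nat.mul_le_mul hx32 hx23
    zify [this]
  rw [hsub] at hcard2
  have : (S.a1 : ℤ) + S.x23 * S.x32 = S.l2 * S.l3 := by linarith [hcard2, hle]
  exact_mod_cast this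

lemma a2_eq (S : FS) : S.a2 + S.x13 * S.x31 = S.l1 * S.l3 := S.sw12.a1_eq
lemma a3_eq (S : FS) : S.a3 + S.x12 * S.x21 = S.l1 * S.l2 := by
  have h : S.a3 + S.x21 * S.x12 = S.l2 * S.l1 := S.sw13.a1_eq
  rw [Nat.mul_comm S.l2 S.l1] at h
  rw [← h, Nat.mul_comm S.x12 S.x21]

end FS

namespace FS

lemma corner_min (S : FS) (s t : ℕ)
    (hst : (S.a1 : ℤ) ∣ ((s * S.a2 + t * S.a3 : ℕ) : ℤ)
      - (((S.l2 - 1) * S.a2 + (S.x13 - 1) * S.a3 : ℕ) : ℤ)) :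
    (S.l2 - 1) * S.a2 + (S.x13 - 1) * S.a3 ≤ s * S.a2 + t * S.a3 := by
  obtain ⟨u, v, hu, hv, hD, hcong, hmin⟩ := S.minD ((S.l2 - 1) * S.a2 + (S.x13 - 1) * S.a3)
  have h2l2 := S.h2l2
  have hx13p := S.x13_pos
  have hx13l := S.x13_le_l3
  have hl3e := S.l1_eq.2.2
  have hx23p := S.x23_pos
  -- the corner is in D, and (u,v) is congruent to corner, so they coincide
  have hUV : u = S.l2 - 1 ∧ v = S.x13 - 1 := by
    apply S.aux_inj u v (S.l2 - 1) (S.x13 - 1) hu hv hD (by omega) (by omega) (by right; omega)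
    have hc : (((S.l2 - 1) * S.a2 + (S.x13 - 1) * S.a3 : ℕ) : ℤ)
        = ((S.l2 - 1 : ℕ) : ℤ) * S.a2 + ((S.x13 - 1 : ℕ) : ℤ) * S.a3 := by push_cast; ring
    have hc2 : (((u * S.a2 + v * S.a3 : ℕ)) : ℤ)
        = (u : ℤ) * S.a2 + (v : ℤ) * S.a3 := by push_cast; ring
    rw [← hc2, ← hc]
    exact hcong
  have hval : u * S.a2 + v * S.a3 = (S.l2 - 1) * S.a2 + (S.x13 - 1) * S.a3 := by
    rw [hUV.1, hUV.2]
  rw [← hval]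
  exact hmin s t hst

lemma partB (S : FS) (n : ℕ) : ∃ u v : ℕ,
    ((S.a1 : ℤ) ∣ ((u * S.a2 + v * S.a3 : ℕ) : ℤ) - n) ∧
    u * S.a2 + v * S.a3 ≤
      max ((S.l2 - 1) * S.a2 + (S.x13 - 1) * S.a3) ((S.x12 - 1) * S.a2 + (S.l3 - 1) * S.a3) := by
  obtain ⟨u, v, hu, hv, hD, hcong, hmin⟩ := S.minD n
  refine ⟨u, v, hcong, ?_⟩
  have he2 := S.l1_eq.2.1
  have he3 := S.l1_eq.2.2
  rcases hD with h | h
  · refine le_trans ?_ (le_max_right _ _)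
    have h1 : u ≤ S.x12 - 1 := by omega
    have h2 : v ≤ S.l3 - 1 := by omega
    exact Nat.add_le_add (Nat.mul_le_mul_right _ h1) (Nat.mul_le_mul_right _ h2)
  · refine le_trans ?_ (le_max_left _ _)
    have h1 : u ≤ S.l2 - 1 := by omega
    have h2 : v ≤ S.x13 - 1 := by omega
    exact Nat.add_le_add (Nat.mul_le_mul_right _ h1) (Nat.mul_le_mul_right _ h2)

lemma c_gt (S : FS) : S.a1 + 1 ≤
    max ((S.l2 - 1) * S.a2 + (S.x13 - 1) * S.a3) ((S.x12 - 1) * S.a2 + (S.l3 - 1) * S.a3) := by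
  by_contra hcon
  push_neg at hcon
  obtain ⟨u, v, hcong, hle⟩ := S.partB 1
  have hval_le : u * S.a2 + v * S.a3 ≤ S.a1 := by omega
  have ha1 := S.two_le_a1
  have ha2 := S.two_le_a2
  have ha3 := S.two_le_a3
  set w : ℕ := u * S.a2 + v * S.a3 with hw
  have hne : w ≠ 1 := by
    intro h1
    rcases Nat.eq_zero_or_pos u with h | h
    · rcases Nat.eq_zero_or_pos v with h' | h'
      · rw [h, h'] at hw; simp at hw; omega
      · have : S.a3 ≤ w := by
          calc S.a3 = 1 * S.a3 := by ring
          _ ≤ v * S.a3 := Nat.mul_le_mul_right _ h'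
          _ ≤ w := by omega
        omega
    · have : S.a2 ≤ w := by
        calc S.a2 = 1 * S.a2 := by ring
        _ ≤ u * S.a2 := Nat.mul_le_mul_right _ h
        _ ≤ w := by omega
      omega
  -- (a1 : ℤ) ∣ w - 1 with -1 ≤ w - 1 ≤ a1 - 1 forces w = 1
  have hd : (S.a1 : ℤ) ∣ (w : ℤ) - 1 := by exact_mod_cast hcong
  rcases lt_trichotomy ((w : ℤ) - 1) 0 with h | h | h
  · have hw0 : (w : ℤ) = 0 := by
      have : (0:ℤ) ≤ (w:ℤ) := by positivity
      omega
    have := Int.le_of_dvd (by omega) (dvd_neg.2 hd)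
    omega
  · have : (w : ℤ) = 1 := by omega
    have : w = 1 := by exact_mod_cast this
    exact hne this
  · have := Int.le_of_dvd h hd
    have hwle : (w : ℤ) ≤ S.a1 := by exact_mod_cast hval_le
    omega

end FS

namespace FS

lemma f1z (S : FS) : (S.a1 : ℤ) + S.x23 * S.x32 = S.l2 * S.l3 := by exact_mod_cast S.a1_eq
lemma f2z (S : FS) : (S.a2 : ℤ) + S.x13 * S.x31 = S.l1 * S.l3 := by exact_mod_cast S.a2_eq
lemma f3z (S : FS) : (S.a3 : ℤ) + S.x12 * S.x21 = S.l1 * S.l2 := by exact_mod_cast S.a3_eq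
lemma e1z (S : FS) : (S.l1 : ℤ) = S.x21 + S.x31 := by exact_mod_cast S.l1_eq.1
lemma e2z (S : FS) : (S.l2 : ℤ) = S.x12 + S.x32 := by exact_mod_cast S.l1_eq.2.1
lemma e3z (S : FS) : (S.l3 : ℤ) = S.x13 + S.x23 := by exact_mod_cast S.l1_eq.2.2

lemma idc1 (S : FS) : (S.l2 - 1) * S.a2 + (S.x13 - 1) * S.a3 + (S.a2 + S.a3)
    = S.l1 * S.l2 * S.l3 + S.x21 * S.x32 * S.x13 := by
  have h2 : 1 ≤ S.l2 := by have := S.h2l2; omega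
  have h3 : 1 ≤ S.x13 := S.x13_pos
  zify [h2, h3]
  linear_combination S.hx2z - (S.a3 : ℤ) * S.e3z + S.hx3z - (S.a1 : ℤ) * S.e1z
    + (S.l1 : ℤ) * S.f1z + (S.x32 : ℤ) * S.f2z
    + ((S.x32 : ℤ) * S.l1) * S.e3z + ((S.x32 : ℤ) * S.x13) * S.e1z

lemma idc2 (S : FS) : (S.x12 - 1) * S.a2 + (S.l3 - 1) * S.a3 + (S.a2 + S.a3)
    = S.l1 * S.l2 * S.l3 + S.x12 * S.x23 * S.x31 := by
  have h2 : 1 ≤ S.x12 := S.x12_pos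
  have h3 : 1 ≤ S.l3 := by have := S.h2l3; omega
  zify [h2, h3]
  linear_combination S.hx3z - (S.a2 : ℤ) * S.e2z + S.hx2z - (S.a1 : ℤ) * S.e1z
    + (S.l1 : ℤ) * S.f1z + (S.x23 : ℤ) * S.f3z
    + ((S.x23 : ℤ) * S.l1) * S.e2z + ((S.x23 : ℤ) * S.x12) * S.e1z

end FS

theorem frobenius_number_three (a1 a2 a3 l1 l2 l3 x12 x13 x21 x23 x31 x32 : ℕ)
    (ha1 : 0 < a1) (ha2 : 0 < a2) (ha3 : 0 < a3)
    (h12 : Nat.Coprime a1 a2) (h13 : Nat.Coprime a1 a3) (h23 : Nat.Coprime a2 a3)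
    (hl1 : IsLeast {l : ℕ | 0 < l ∧ ∃ x y : ℕ, l * a1 = x * a2 + y * a3} l1)
    (hl2 : IsLeast {l : ℕ | 0 < l ∧ ∃ x y : ℕ, l * a2 = x * a1 + y * a3} l2)
    (hl3 : IsLeast {l : ℕ | 0 < l ∧ ∃ x y : ℕ, l * a3 = x * a1 + y * a2} l3)
    (h2l1 : 2 ≤ l1) (h2l2 : 2 ≤ l2) (h2l3 : 2 ≤ l3)
    (hx1 : l1 * a1 = x12 * a2 + x13 * a3)
    (hx2 : l2 * a2 = x21 * a1 + x23 * a3)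
    (hx3 : l3 * a3 = x31 * a1 + x32 * a2) :
    IsGreatest {z : ℕ | ¬∃ y1 y2 y3 : ℕ, z = y1 * a1 + y2 * a2 + y3 * a3}
      (l1 * l2 * l3 + max (x12 * x23 * x31) (x21 * x32 * x13) - (a1 + a2 + a3)) := by
  set S : FS := ⟨a1, a2, a3, l1, l2, l3, x12, x13, x21, x23, x31, x32,
    ha1, ha2, ha3, h12, h13, h23, hl1, hl2, hl3, h2l1, h2l2, h2l3, hx1, hx2, hx3⟩ with hS
  set c1 : ℕ := (l2 - 1) * a2 + (x13 - 1) * a3 with hc1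
  set c2 : ℕ := (x12 - 1) * a2 + (l3 - 1) * a3 with hc2
  have idc1 : c1 + (a2 + a3) = l1 * l2 * l3 + x21 * x32 * x13 := S.idc1
  have idc2 : c2 + (a2 + a3) = l1 * l2 * l3 + x12 * x23 * x31 := S.idc2
  have hcgt : a1 + 1 ≤ max c1 c2 := S.c_gt
  set M : ℕ := l1 * l2 * l3 + max (x12 * x23 * x31) (x21 * x32 * x13) - (a1 + a2 + a3) with hM
  have hMc : M + a1 = max c1 c2 := by
    rcases max_cases (x12 * x23 * x31) (x21 * x32 * x13) with ⟨hm1, hm2⟩ | ⟨hm1, hm2⟩ <;>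
      rcases max_cases c1 c2 with ⟨hn1, hn2⟩ | ⟨hn1, hn2⟩ <;>
      omega
  constructor
  · -- M is not representable
    rintro ⟨y1, y2, y3, hy⟩
    have hy23 : y2 * a2 + y3 * a3 ≤ M := by omega
    rcases max_cases c1 c2 with ⟨hn1, hn2⟩ | ⟨hn1, hn2⟩
    · -- max = c1
      have hdvd : (a1 : ℤ) ∣ ((y2 * a2 + y3 * a3 : ℕ) : ℤ) - ((c1 : ℕ) : ℤ) := by
        refine ⟨-((y1 : ℤ) + 1), ?_⟩
        have hyz : (M : ℤ) = y1 * a1 + y2 * a2 + y3 * a3 := by exact_mod_cast hy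
        have hMcz : (M : ℤ) + a1 = c1 := by
          have : M + a1 = c1 := by omega
          exact_mod_cast this
        push_cast
        linarith
      have hge : c1 ≤ y2 * a2 + y3 * a3 := by
        have h := S.corner_min y2 y3
        exact h hdvd
      omega
    · -- max = c2
      have hdvd : (a1 : ℤ) ∣ ((y3 * a3 + y2 * a2 : ℕ) : ℤ)
          - (((l3 - 1) * a3 + (x12 - 1) * a2 : ℕ) : ℤ) := by
        refine ⟨-((y1 : ℤ) + 1), ?_⟩
        have hyz : (M : ℤ) = y1 * a1 + y2 * a2 + y3 * a3 := by exact_mod_cast hy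
        have hc2' : (l3 - 1) * a3 + (x12 - 1) * a2 = c2 := by omega
        have hMcz : (M : ℤ) + a1 = ((l3 - 1) * a3 + (x12 - 1) * a2 : ℕ) := by
          have : M + a1 = (l3 - 1) * a3 + (x12 - 1) * a2 := by omega
          exact_mod_cast this
        push_cast
        linarith
      have hge' : (l3 - 1) * a3 + (x12 - 1) * a2 ≤ y3 * a3 + y2 * a2 := S.sw23.corner_min y3 y2 hdvd
      omega
  · -- upper bound
    intro z hz
    by_contra hcon
    push_neg at hcon
    obtain ⟨u, v, hcong, hle⟩ := S.partB z
    have hle' : u * a2 + v * a3 ≤ max c1 c2 := hle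
    have hdz : (a1 : ℤ) ∣ (z : ℤ) - ((u * a2 + v * a3 : ℕ) : ℤ) := by
      have h := dvd_neg.2 hcong
      rwa [neg_sub] at h
    have hwz : (z : ℤ) - ((u * a2 + v * a3 : ℕ) : ℤ) > -(a1 : ℤ) := by
      have h1 : ((u * a2 + v * a3 : ℕ) : ℤ) ≤ ((max c1 c2 : ℕ) : ℤ) := by exact_mod_cast hle'
      have h2 : ((M : ℕ) : ℤ) < (z : ℤ) := by exact_mod_cast hcon
      have h3 : ((M : ℕ) : ℤ) + (a1 : ℤ) = ((max c1 c2 : ℕ) : ℤ) := by exact_mod_cast hMc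
      linarith
    have hnn : (0 : ℤ) ≤ (z : ℤ) - ((u * a2 + v * a3 : ℕ) : ℤ) := by
      rcases lt_or_ge ((z : ℤ) - ((u * a2 + v * a3 : ℕ) : ℤ)) 0 with h | h
      · exfalso
        have h4 := Int.le_of_dvd (by linarith : (0:ℤ) < -((z : ℤ) - ((u * a2 + v * a3 : ℕ) : ℤ)))
          (dvd_neg.2 hdz)
        linarith
      · exact h
    obtain ⟨k, hk⟩ := hdz
    have ha1z : (0:ℤ) < a1 := by exact_mod_cast ha1
    have hk0 : 0 ≤ k := by
      rcases lt_or_ge k 0 with hkneg | h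
      · exfalso
        have h5 : (a1 : ℤ) * k < 0 := mul_neg_of_pos_of_neg ha1z hkneg
        linarith
      · exact h
    apply hz
    refine ⟨k.toNat, u, v, ?_⟩
    have hfin : (z : ℤ) = ((k.toNat * a1 + u * a2 + v * a3 : ℕ) : ℤ) := by
      have hlink : ((u * a2 + v * a3 : ℕ) : ℤ) = (u : ℤ) * a2 + (v : ℤ) * a3 := by
        push_cast
        ring
      push_cast
      rw [Int.toNat_of_nonneg hk0]
      linarith [hk, hlink]
    exact_mod_cast hfin
end

section
/- Let a₁, a₂, a₃ be pairwise coprime positive integers with lᵢ ≥ 2 for all i. Then the number of non-representable natural numbers is N(a) = ½(Σᵢ (lᵢ-1)aᵢ - l₁l₂l₃ + 1). -/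
/-!
Assume `a1` is the smallest generator, and write the minimal relations as
`l1 a1 = A a2 + B a3`, `l2 a2 = C a1 + D a3`, `l3 a3 = E a1 + F a2`; since `a1 ≤ a2, a3` they
can be chosen with `C, E > 0`. Using them, every `u a2 + v a3` can be rewritten as
`x a1 + u' a2 + v' a3` with `(u', v')` in the L-shaped region
`[0, l2) × [0, l3) \ [A, l2) × [B, l3)`, while the minimality of the `lᵢ` forbids
`u a2 + v a3 = x a1 + u' a2 + v' a3` for two distinct points of the region. So the numbers
`u a2 + v a3` over the region form the Apéry set of `a1`: one per residue class mod `a1`, each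
the least element of the semigroup in its class. The region therefore has `a1` points, i.e.
`a1 = l2 l3 - (l2 - A)(l3 - B)`, and Selmer's formula `a1 N + a1 (a1 - 1) / 2 = ∑ w` over the
Apéry set, with the sum computed explicitly over the region, gives the formula after dividing
by `a1`.
-/

open Finset

theorem Nat.ncard_setOf_exists_modEq_lt {ι : Type*} {a : ℕ} (ha : 0 < a) (s : Finset ι)
    (g : ι → ℕ) (hg : Set.InjOn (fun i => g i % a) s) :
    {n : ℕ | ∃ i ∈ s, n ≡ g i [MOD a] ∧ n < g i}.ncard = ∑ i ∈ s, g i / a := by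
  have hset : {n : ℕ | ∃ i ∈ s, n ≡ g i [MOD a] ∧ n < g i}
      = ↑(s.biUnion fun i => {n ∈ range (g i) | n ≡ g i [MOD a]}) := by
    ext n
    simp only [coe_biUnion, coe_filter, mem_range, Set.mem_iUnion, Set.mem_ofPred_eq, exists_prop]
    exact exists_congr fun i => and_congr_right fun _ => and_comm
  rw [hset, Set.ncard_coe_finset, card_biUnion]
  · refine sum_congr rfl fun i _ => ?_
    rw [← Nat.count_eq_card_filter_range, Nat.count_modEq_card _ ha]
    simp
  · intro i hi j hj hij
    simp only [Function.onFun, disjoint_left, mem_filter]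
    exact fun n hn hn' => hij (hg hi hj (hn.2.symm.trans hn'.2))

theorem Finset.image_mod_eq_range {ι : Type*} {a : ℕ} (ha : 0 < a) (s : Finset ι)
    (g : ι → ℕ) (hg : ∀ n, ∃ i ∈ s, n ≡ g i [MOD a]) :
    s.image (fun i => g i % a) = range a := by
  ext r
  simp only [mem_image, mem_range]
  refine ⟨fun ⟨i, _, hi⟩ => hi ▸ Nat.mod_lt _ ha, fun hr => ?_⟩
  obtain ⟨i, hi, hri⟩ := hg r
  exact ⟨i, hi, Eq.trans hri.symm (Nat.mod_eq_of_lt hr)⟩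

theorem Finset.card_eq_of_injOn_mod {ι : Type*} {a : ℕ} (ha : 0 < a) (s : Finset ι)
    (g : ι → ℕ) (hg : Set.InjOn (fun i => g i % a) s)
    (hsurj : ∀ n, ∃ i ∈ s, n ≡ g i [MOD a]) : #s = a := by
  rw [← Finset.card_image_of_injOn hg, Finset.image_mod_eq_range ha s g hsurj, card_range]

/-- Selmer's formula, for `S` whose Apéry set with respect to `a` is `{g i | i ∈ s}`. -/
theorem Nat.mul_ncard_compl_add_sum_range {ι : Type*} {S : Set ℕ} {a : ℕ} (ha : 0 < a)
    (s : Finset ι) (g : ι → ℕ) (hg : Set.InjOn (fun i => g i % a) s)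
    (hsurj : ∀ n, ∃ i ∈ s, n ≡ g i [MOD a])
    (hS : ∀ n, n ∈ S ↔ ∃ i ∈ s, ∃ x, n = x * a + g i) :
    a * Sᶜ.ncard + ∑ r ∈ range a, r = ∑ i ∈ s, g i := by
  have hcompl : Sᶜ = {n | ∃ i ∈ s, n ≡ g i [MOD a] ∧ n < g i} := by
    ext n
    simp only [Set.mem_compl_iff, hS, Set.mem_ofPred_eq]
    constructor
    · intro hn
      obtain ⟨i, hi, hni⟩ := hsurj n
      refine ⟨i, hi, hni, lt_of_not_ge fun hle => hn ⟨i, hi, (n - g i) / a, ?_⟩⟩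
      rw [Nat.div_mul_cancel ((Nat.modEq_iff_dvd' hle).mp hni.symm)]
      omega
    · rintro ⟨i, hi, hni, hlt⟩ ⟨j, hj, x, rfl⟩
      obtain rfl : j = i := hg hj hi (by simpa [Nat.ModEq] using hni)
      omega
  rw [hcompl, ncard_setOf_exists_modEq_lt ha s g hg, ← Finset.image_mod_eq_range ha s g hsurj,
    sum_image hg, mul_sum, ← sum_add_distrib]
  exact sum_congr rfl fun i _ => Nat.div_add_mod (g i) a

theorem two_mul_sum_range_id_add (n : ℕ) : 2 * ∑ i ∈ range n, i + n = n * n := by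
  rcases n with _ | n
  · simp
  · have h := sum_range_id_mul_two (n + 1)
    rw [Nat.add_sub_cancel] at h
    linear_combination h

theorem two_mul_sum_range_product_add (m n b c : ℕ) :
    2 * ∑ p ∈ range m ×ˢ range n, (p.1 * b + p.2 * c) + m * n * (b + c)
      = m * n * (m * b + n * c) := by
  simp only [sum_product, sum_add_distrib, ← sum_mul, sum_const, card_range, smul_eq_mul]
  rw [← mul_sum]
  linear_combination (n * b) * two_mul_sum_range_id_add m + (m * c) * two_mul_sum_range_id_add n

def relMultiples (a b c : ℕ) : Set ℕ := {l | 0 < l ∧ ∃ x y : ℕ, l * a = x * b + y * c}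

def gaps (a b c : ℕ) : Set ℕ := {z | ¬∃ y1 y2 y3 : ℕ, z = y1 * a + y2 * b + y3 * c}

def lShape (l2 l3 A B : ℕ) : Finset (ℕ × ℕ) :=
  {p ∈ range l2 ×ˢ range l3 | p.1 < A ∨ p.2 < B}

theorem relMultiples_swap (a b c : ℕ) : relMultiples a c b = relMultiples a b c := by
  ext l
  simp only [relMultiples, Set.mem_ofPred_eq]
  exact and_congr_right fun _ => exists_comm.trans (by simp only [add_comm])

theorem gaps_swap (a b c : ℕ) : gaps b a c = gaps a b c := by
  ext z
  simp only [gaps, Set.mem_ofPred_eq]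
  exact not_congr <| exists_comm.trans <| by simp only [add_comm (_ * b)]

theorem gaps_rotate (a b c : ℕ) : gaps c a b = gaps a b c := by
  ext z
  simp only [gaps, Set.mem_ofPred_eq]
  constructor <;> rintro h ⟨y1, y2, y3, rfl⟩
  · exact h ⟨y3, y1, y2, by ring⟩
  · exact h ⟨y2, y3, y1, by ring⟩

theorem filter_not_lShape (l2 l3 A B : ℕ) :
    {p ∈ range l2 ×ˢ range l3 | ¬(p.1 < A ∨ p.2 < B)}
      = (range (l2 - A) ×ˢ range (l3 - B)).map (addLeftEmbedding (A, B)) := by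
  ext ⟨u, v⟩
  simp only [mem_filter, mem_product, mem_range, mem_map, addLeftEmbedding_apply, Prod.exists,
    Prod.mk_add_mk, Prod.mk.injEq]
  constructor
  · rintro ⟨⟨hu, hv⟩, h⟩
    exact ⟨u - A, v - B, ⟨by omega, by omega⟩, by omega, by omega⟩
  · rintro ⟨x, y, ⟨hx, hy⟩, rfl, rfl⟩
    omega

theorem card_lShape_add (l2 l3 A B : ℕ) :
    #(lShape l2 l3 A B) + (l2 - A) * (l3 - B) = l2 * l3 := by
  have h := card_filter_add_card_filter_not (s := range l2 ×ˢ range l3)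
    (fun p : ℕ × ℕ => p.1 < A ∨ p.2 < B)
  rwa [filter_not_lShape, card_map, card_product, card_product, card_range, card_range,
    card_range, card_range] at h

theorem sum_lShape_add (l2 l3 A B b c : ℕ) :
    ∑ p ∈ lShape l2 l3 A B, (p.1 * b + p.2 * c)
      + (∑ p ∈ range (l2 - A) ×ˢ range (l3 - B), (p.1 * b + p.2 * c)
        + (l2 - A) * (l3 - B) * (A * b + B * c))
      = ∑ p ∈ range l2 ×ˢ range l3, (p.1 * b + p.2 * c) := by
  rw [← sum_filter_add_sum_filter_not (range l2 ×ˢ range l3)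
    (fun p : ℕ × ℕ => p.1 < A ∨ p.2 < B), filter_not_lShape, sum_map]
  congr 1
  simp only [addLeftEmbedding_apply, Prod.fst_add, Prod.snd_add]
  rw [sum_congr rfl fun (p : ℕ × ℕ) _ =>
      show (A + p.1) * b + (B + p.2) * c = (p.1 * b + p.2 * c) + (A * b + B * c) by ring,
    sum_add_distrib (g := fun _ => A * b + B * c), sum_const, card_product, card_range, card_range,
    smul_eq_mul]

theorem le_of_mem_lowerBounds_relMultiples {a b c l : ℕ}
    (hl : l ∈ lowerBounds (relMultiples a b c)) {m x y : ℤ} (hx : 0 ≤ x) (hy : 0 ≤ y)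
    (hpos : 0 < x * b + y * c) (h : m * a = x * b + y * c) : (l : ℤ) ≤ m := by
  have hm : 0 < m := pos_of_mul_pos_left (h ▸ hpos) (Nat.cast_nonneg a)
  lift m to ℕ using hm.le
  lift x to ℕ using hx
  lift y to ℕ using hy
  exact_mod_cast hl ⟨by exact_mod_cast hm, x, y, by exact_mod_cast h⟩

theorem exists_eq_mul_add_mul_of_isLeast {a b c l : ℕ} (hl : IsLeast (relMultiples b a c) l)
    (hbc : b.Coprime c) (hab : a ≤ b) (hc : 0 < c) :
    ∃ x y : ℕ, 0 < x ∧ l * b = x * a + y * c := by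
  obtain ⟨⟨hl0, x, y, h⟩, hmin⟩ := hl
  rcases Nat.eq_zero_or_pos x with rfl | hx
  · have hcl : c ∣ l := hbc.symm.dvd_of_dvd_mul_right ⟨y, by rw [h]; ring⟩
    have hlc : l = c := le_antisymm (hmin ⟨hc, 0, b, by ring⟩) (Nat.le_of_dvd hl0 hcl)
    obtain ⟨d, rfl⟩ := Nat.exists_eq_add_of_le hab
    exact ⟨c, d, hc, by rw [hlc]; ring⟩
  · exact ⟨x, y, hx, h⟩

theorem coeff_le_of_relations {a b c l m x y C D : ℕ}
    (hl : l ∈ lowerBounds (relMultiples a b c)) (h : l * a = x * b + y * c) (hb : 0 < b)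
    (hC : 0 < C) (hm : m * b = C * a + D * c) : x ≤ m := by
  by_contra! hlt
  have h : (l : ℤ) * a = x * b + y * c := by exact_mod_cast h
  have hm : (m : ℤ) * b = C * a + D * c := by exact_mod_cast hm
  have := le_of_mem_lowerBounds_relMultiples hl (m := l - C) (x := x - m) (y := y + D)
    (by omega) (by omega) (by nlinarith) (by linear_combination h + hm)
  omega

section

variable {a1 a2 a3 l1 l2 l3 A B : ℕ}

theorem exists_eq_add_mem_lShape {C D E F : ℕ} (ha1 : 0 < a1) (hl1 : 0 < l1)
    (h1 : l1 * a1 = A * a2 + B * a3) (hC : 0 < C) (h2 : l2 * a2 = C * a1 + D * a3)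
    (hE : 0 < E) (h3 : l3 * a3 = E * a1 + F * a2) (u v : ℕ) :
    ∃ x, ∃ p ∈ lShape l2 l3 A B, u * a2 + v * a3 = x * a1 + (p.1 * a2 + p.2 * a3) := by
  induction h : u * a2 + v * a3 using Nat.strong_induction_on generalizing u v with
  | _ m ih =>
  have step : ∀ c u' v', 0 < c → u * a2 + v * a3 = c * a1 + (u' * a2 + v' * a3) →
      ∃ x, ∃ p ∈ lShape l2 l3 A B, m = x * a1 + (p.1 * a2 + p.2 * a3) := by
    intro c u' v' hc e
    obtain ⟨x, p, hp, hx⟩ := ih _ (by nlinarith) u' v' rfl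
    exact ⟨c + x, p, hp, by rw [← h, e, hx]; ring⟩
  by_cases hv : l3 ≤ v
  · obtain ⟨v, rfl⟩ := Nat.exists_eq_add_of_le hv
    exact step E (u + F) v hE (by linear_combination h3)
  by_cases hu : l2 ≤ u
  · obtain ⟨u, rfl⟩ := Nat.exists_eq_add_of_le hu
    exact step C u (v + D) hC (by linear_combination h2)
  by_cases huv : A ≤ u ∧ B ≤ v
  · obtain ⟨⟨u, rfl⟩, ⟨v, rfl⟩⟩ :=
      And.imp Nat.exists_eq_add_of_le Nat.exists_eq_add_of_le huv
    exact step l1 u v hl1 (by linear_combination h1.symm)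
  refine ⟨0, (u, v), ?_, by rw [← h]; ring⟩
  simp only [lShape, mem_filter, mem_product, mem_range]
  omega

theorem exists_comb_iff_exists_mem_lShape {C D E F : ℕ} (ha1 : 0 < a1) (hl1 : 0 < l1)
    (h1 : l1 * a1 = A * a2 + B * a3) (hC : 0 < C) (h2 : l2 * a2 = C * a1 + D * a3)
    (hE : 0 < E) (h3 : l3 * a3 = E * a1 + F * a2) (n : ℕ) :
    (∃ y1 y2 y3 : ℕ, n = y1 * a1 + y2 * a2 + y3 * a3)
      ↔ ∃ p ∈ lShape l2 l3 A B, ∃ x, n = x * a1 + (p.1 * a2 + p.2 * a3) := by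
  constructor
  · rintro ⟨y1, y2, y3, rfl⟩
    obtain ⟨x, p, hp, h⟩ := exists_eq_add_mem_lShape ha1 hl1 h1 hC h2 hE h3 y2 y3
    exact ⟨p, hp, y1 + x, by rw [add_assoc, h]; ring⟩
  · rintro ⟨p, -, x, rfl⟩
    exact ⟨x, p.1, p.2, by ring⟩

theorem exists_mem_lShape_modEq {C D E F : ℕ} (ha1 : 0 < a1) (hl1 : 0 < l1)
    (h1 : l1 * a1 = A * a2 + B * a3) (hC : 0 < C) (h2 : l2 * a2 = C * a1 + D * a3)
    (hE : 0 < E) (h3 : l3 * a3 = E * a1 + F * a2) (h12 : a1.Coprime a2) (n : ℕ) :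
    ∃ p ∈ lShape l2 l3 A B, n ≡ p.1 * a2 + p.2 * a3 [MOD a1] := by
  obtain ⟨k, -, hk⟩ := Nat.exists_mul_mod_eq_of_coprime n h12.symm ha1.ne'
  obtain ⟨x, p, hp, h⟩ := exists_eq_add_mem_lShape ha1 hl1 h1 hC h2 hE h3 k 0
  refine ⟨p, hp, ?_⟩
  calc n ≡ a2 * k [MOD a1] := hk.symm
    _ = x * a1 + (p.1 * a2 + p.2 * a3) := by rw [← h]; ring
    _ ≡ p.1 * a2 + p.2 * a3 [MOD a1] := by simp [Nat.ModEq]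

theorem eq_of_mem_lShape_of_eq_add (ha1 : 0 < a1) (ha2 : 0 < a2) (ha3 : 0 < a3)
    (hl1 : l1 ∈ lowerBounds (relMultiples a1 a2 a3)) (h1 : l1 * a1 = A * a2 + B * a3)
    (hl2 : l2 ∈ lowerBounds (relMultiples a2 a1 a3))
    (hl3 : l3 ∈ lowerBounds (relMultiples a3 a1 a2))
    {p q : ℕ × ℕ} (hp : p ∈ lShape l2 l3 A B) (hq : q ∈ lShape l2 l3 A B) {x : ℕ}
    (h : p.1 * a2 + p.2 * a3 = x * a1 + (q.1 * a2 + q.2 * a3)) : p = q := by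
  obtain ⟨u, v⟩ := p
  obtain ⟨u', v'⟩ := q
  simp only [lShape, mem_filter, mem_product, mem_range] at hp hq
  have H : ((u : ℤ) - u') * a2 + ((v : ℤ) - v') * a3 = x * a1 := by
    have := congrArg (Nat.cast : ℕ → ℤ) h
    push_cast at this
    linear_combination this
  have h1 : (l1 : ℤ) * a1 = A * a2 + B * a3 := by exact_mod_cast h1
  rcases le_or_gt u' u with hu | hu <;> rcases le_or_gt v' v with hv | hv
  · rcases Nat.eq_zero_or_pos x with rfl | hx
    · have : u = u' ∧ v = v' := by constructor <;> nlinarith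
      simp [this]
    have hl1x := le_of_mem_lowerBounds_relMultiples hl1 (x := u - u') (y := v - v')
      (by omega) (by omega) (by rw [H]; positivity) H.symm
    exfalso
    -- subtracting the relation for `l1` leaves a relation for `a3` (or `a2`) below `l3` (or `l2`)
    rcases hp.2 with hA | hB
    · have := le_of_mem_lowerBounds_relMultiples hl3 (m := v - v' - B) (x := x - l1)
        (y := A - (u - u')) (by omega) (by omega) (by nlinarith) (by linear_combination H + h1)
      omega
    · have := le_of_mem_lowerBounds_relMultiples hl2 (m := u - u' - A) (x := x - l1)
        (y := B - (v - v')) (by omega) (by omega) (by nlinarith) (by linear_combination H + h1)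
      omega
  · have := le_of_mem_lowerBounds_relMultiples hl2 (m := u - u') (x := x) (y := v' - v)
      (by omega) (by omega) (by nlinarith) (by linear_combination H)
    omega
  · have := le_of_mem_lowerBounds_relMultiples hl3 (m := v - v') (x := x) (y := u' - u)
      (by omega) (by omega) (by nlinarith) (by linear_combination H)
    omega
  · nlinarith

theorem injOn_mod_lShape (ha1 : 0 < a1) (ha2 : 0 < a2) (ha3 : 0 < a3)
    (hl1 : l1 ∈ lowerBounds (relMultiples a1 a2 a3)) (h1 : l1 * a1 = A * a2 + B * a3)
    (hl2 : l2 ∈ lowerBounds (relMultiples a2 a1 a3))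
    (hl3 : l3 ∈ lowerBounds (relMultiples a3 a1 a2)) :
    Set.InjOn (fun p : ℕ × ℕ => (p.1 * a2 + p.2 * a3) % a1) (lShape l2 l3 A B) := by
  intro p hp q hq hpq
  wlog hle : q.1 * a2 + q.2 * a3 ≤ p.1 * a2 + p.2 * a3 generalizing p q
  · exact (this hq hp hpq.symm (le_of_not_ge hle)).symm
  obtain ⟨k, hk⟩ := (Nat.modEq_iff_dvd' hle).mp hpq.symm
  exact eq_of_mem_lShape_of_eq_add ha1 ha2 ha3 hl1 h1 hl2 hl3 hp hq (x := k) (by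
    rw [← Nat.sub_add_cancel hle, hk, Nat.mul_comm a1 k])

end

theorem two_mul_ncard_gaps_add_of_le {a1 a2 a3 l1 l2 l3 : ℕ} (ha1 : 0 < a1) (ha2 : 0 < a2)
    (ha3 : 0 < a3) (h12 : a1.Coprime a2) (h23 : a2.Coprime a3)
    (hl1 : IsLeast (relMultiples a1 a2 a3) l1) (hl2 : IsLeast (relMultiples a2 a1 a3) l2)
    (hl3 : IsLeast (relMultiples a3 a1 a2) l3) (hle2 : a1 ≤ a2) (hle3 : a1 ≤ a3) :
    2 * (gaps a1 a2 a3).ncard + l1 * l2 * l3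
      = (l1 - 1) * a1 + (l2 - 1) * a2 + (l3 - 1) * a3 + 1 := by
  obtain ⟨⟨hl1pos, A, B, h1⟩, hl1min⟩ := hl1
  obtain ⟨C, D, hC, h2⟩ := exists_eq_mul_add_mul_of_isLeast hl2 h23 hle2 ha3
  obtain ⟨E, F, hE, h3⟩ := exists_eq_mul_add_mul_of_isLeast hl3 h23.symm hle3 ha2
  have hinj := injOn_mod_lShape ha1 ha2 ha3 hl1min h1 hl2.2 hl3.2
  have hsurj := exists_mem_lShape_modEq ha1 hl1pos h1 hC h2 hE h3 h12
  have hselmer := Nat.mul_ncard_compl_add_sum_range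
    (S := {n | ∃ y1 y2 y3 : ℕ, n = y1 * a1 + y2 * a2 + y3 * a3}) ha1 _ _ hinj hsurj
    (exists_comb_iff_exists_mem_lShape ha1 hl1pos h1 hC h2 hE h3)
  change a1 * (gaps a1 a2 a3).ncard + _ = _ at hselmer
  have hcard := card_lShape_add l2 l3 A B
  rw [Finset.card_eq_of_injOn_mod ha1 _ _ hinj hsurj] at hcard
  have hA : A ≤ l2 := coeff_le_of_relations hl1min h1 ha2 hC h2
  have hB : B ≤ l3 :=
    coeff_le_of_relations (by rwa [relMultiples_swap]) (by rw [h1, add_comm]) ha3 hE h3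
  have hsum := sum_lShape_add l2 l3 A B a2 a3
  have hbox := two_mul_sum_range_product_add l2 l3 a2 a3
  have hbox' := two_mul_sum_range_product_add (l2 - A) (l3 - B) a2 a3
  have hgauss := two_mul_sum_range_id_add a1
  apply Nat.eq_of_mul_eq_mul_left ha1
  zify [hA, hB, hl1pos, hl2.1.1, hl3.1.1] at hselmer hcard hsum hbox hbox' hgauss h1 ⊢
  linear_combination 2 * hselmer - hgauss + 2 * hsum + hbox - hbox'
    - (l1 * a1 + (l2 - 1) * a2 + (l3 - 1) * a3 : ℤ) * hcard + ((l2 - A) * (l3 - B) : ℤ) * h1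

theorem frobenius_count_three_general (a1 a2 a3 l1 l2 l3 : ℕ)
    (ha1 : 0 < a1) (ha2 : 0 < a2) (ha3 : 0 < a3)
    (h12 : Nat.Coprime a1 a2) (h13 : Nat.Coprime a1 a3) (h23 : Nat.Coprime a2 a3)
    (hl1 : IsLeast {l : ℕ | 0 < l ∧ ∃ x y : ℕ, l * a1 = x * a2 + y * a3} l1)
    (hl2 : IsLeast {l : ℕ | 0 < l ∧ ∃ x y : ℕ, l * a2 = x * a1 + y * a3} l2)
    (hl3 : IsLeast {l : ℕ | 0 < l ∧ ∃ x y : ℕ, l * a3 = x * a1 + y * a2} l3) :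
    2 * {z : ℕ | ¬∃ y1 y2 y3 : ℕ, z = y1 * a1 + y2 * a2 + y3 * a3}.ncard
      + l1 * l2 * l3
      = (l1 - 1) * a1 + (l2 - 1) * a2 + (l3 - 1) * a3 + 1 := by
  change 2 * (gaps a1 a2 a3).ncard + _ = _
  obtain h | h | h :
      (a1 ≤ a2 ∧ a1 ≤ a3) ∨ (a2 ≤ a1 ∧ a2 ≤ a3) ∨ (a3 ≤ a1 ∧ a3 ≤ a2) := by omega
  · exact two_mul_ncard_gaps_add_of_le ha1 ha2 ha3 h12 h23 hl1 hl2 hl3 h.1 h.2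
  · have := two_mul_ncard_gaps_add_of_le ha2 ha1 ha3 h12.symm h13 hl2 hl1
      (by rwa [relMultiples_swap]) h.1 h.2
    rw [gaps_swap] at this
    linarith
  · have := two_mul_ncard_gaps_add_of_le ha3 ha1 ha2 h13.symm h12 hl3
      (by rwa [relMultiples_swap]) (by rwa [relMultiples_swap]) h.1 h.2
    rw [gaps_rotate] at this
    linarith

theorem frobenius_count_three (a1 a2 a3 l1 l2 l3 : ℕ)
    (ha1 : 0 < a1) (ha2 : 0 < a2) (ha3 : 0 < a3)
    (h12 : Nat.Coprime a1 a2) (h13 : Nat.Coprime a1 a3) (h23 : Nat.Coprime a2 a3)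
    (hl1 : IsLeast {l : ℕ | 0 < l ∧ ∃ x y : ℕ, l * a1 = x * a2 + y * a3} l1)
    (hl2 : IsLeast {l : ℕ | 0 < l ∧ ∃ x y : ℕ, l * a2 = x * a1 + y * a3} l2)
    (hl3 : IsLeast {l : ℕ | 0 < l ∧ ∃ x y : ℕ, l * a3 = x * a1 + y * a2} l3)
    (h2l1 : 2 ≤ l1) (h2l2 : 2 ≤ l2) (h2l3 : 2 ≤ l3) :
    2 * {z : ℕ | ¬∃ y1 y2 y3 : ℕ, z = y1 * a1 + y2 * a2 + y3 * a3}.ncard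
      + l1 * l2 * l3
      = (l1 - 1) * a1 + (l2 - 1) * a2 + (l3 - 1) * a3 + 1 :=
  frobenius_count_three_general a1 a2 a3 l1 l2 l3 ha1 ha2 ha3 h12 h13 h23 hl1 hl2 hl3
end

section
/- Let a₁, a₂, a₃ be pairwise coprime positive integers with lᵢ ≥ 2 and minimal representation coefficients xᵢⱼ. Then a₁ = x₁₂l₃ + x₁₃x₃₂, a₂ = x₂₁l₃ + x₂₃x₃₁, and a₃ = l₁l₂ - x₁₂x₂₁ (and cyclically). -/
lemma exists_small (a b c : ℕ) (ha : 0 < a) (hb : 0 < b) (hbc : Nat.Coprime b c)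
    (hno : ¬ ∃ x y : ℕ, a = x * b + y * c) :
    ∃ m x : ℕ, 0 < m ∧ m < b ∧ m * c = a + x * b := by
  haveI : NeZero b := ⟨hb.ne'⟩
  set u := ZMod.unitOfCoprime c hbc.symm with hu
  set m := ((a : ZMod b) * ((u⁻¹ : (ZMod b)ˣ) : ZMod b)).val with hm
  have hmb : m < b := ZMod.val_lt _
  have hcast : ((m : ℕ) : ZMod b) = (a : ZMod b) * ((u⁻¹ : (ZMod b)ˣ) : ZMod b) := by
    rw [hm, ZMod.natCast_val, ZMod.cast_id]
  have hmc : ((m * c : ℕ) : ZMod b) = ((a : ℕ) : ZMod b) := by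
    push_cast
    rw [hcast]
    have hc : ((c : ZMod b)) = (u : ZMod b) := (ZMod.coe_unitOfCoprime c hbc.symm).symm
    rw [hc, mul_assoc]
    norm_cast
    simp [Units.inv_mul]
  have hmod : m * c ≡ a [MOD b] := (ZMod.natCast_eq_natCast_iff _ _ _).mp hmc
  have hm0 : 0 < m := by
    rcases Nat.eq_zero_or_pos m with h0 | h0
    · exfalso
      rw [h0, zero_mul] at hmod
      have hdvd : b ∣ a := (Nat.modEq_zero_iff_dvd).mp hmod.symm
      exact hno ⟨a / b, 0, by rw [Nat.div_mul_cancel hdvd]; simp⟩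
    · exact h0
  rcases le_or_gt a (m * c) with hle | hlt
  · have hdvd : b ∣ m * c - a := (Nat.modEq_iff_dvd' hle).mp hmod.symm
    obtain ⟨x, hx⟩ := hdvd
    exact ⟨m, x, hm0, hmb, by rw [mul_comm x b]; omega⟩
  · exfalso
    have hdvd : b ∣ a - m * c := (Nat.modEq_iff_dvd' hlt.le).mp hmod
    obtain ⟨x, hx⟩ := hdvd
    exact hno ⟨x, m, by rw [mul_comm x b]; omega⟩

lemma coeff_lt (a b c L M u v w q : ℕ) (ha : 0 < a) (hc : 0 < c)
    (lbc : ∀ l x y : ℕ, 0 < l → l * c = x * a + y * b → M ≤ l)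
    (relc : M * c = u * a + v * b) (relb : L * b = w * a + q * c)
    (hw : 0 < w) (hq : 0 < q) : v < L := by
  by_contra hcon
  push_neg at hcon   -- L ≤ v
  have hqM : q < M := by
    by_contra hq2
    push_neg at hq2  -- M ≤ q
    have e1 : M * c ≤ q * c := Nat.mul_le_mul_right _ hq2
    have e2 : L * b ≤ v * b := Nat.mul_le_mul_right _ hcon
    nlinarith [relc, relb]
  have key : (M - q) * c = (u + w) * a + (v - L) * b := by
    have h1 : q ≤ M := hqM.le
    zify [h1, hcon]
    have relc' : (M : ℤ) * c = u * a + v * b := by exact_mod_cast relc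
    have relb' : (L : ℤ) * b = w * a + q * c := by exact_mod_cast relb
    linarith
  have := lbc (M - q) (u + w) (v - L) (by omega) key
  omega

set_option maxHeartbeats 1000000 in
lemma lattice_gen (a1 a2 a3 l1 l2 l3 x12 x13 x31 x32 : ℕ)
    (ha1 : 0 < a1) (ha2 : 0 < a2) (ha3 : 0 < a3)
    (h23 : Nat.Coprime a2 a3)
    (lb1 : ∀ l x y : ℕ, 0 < l → l * a1 = x * a2 + y * a3 → l1 ≤ l)
    (lb2 : ∀ l x y : ℕ, 0 < l → l * a2 = x * a1 + y * a3 → l2 ≤ l)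
    (lb3 : ∀ l x y : ℕ, 0 < l → l * a3 = x * a1 + y * a2 → l3 ≤ l)
    (hx1 : l1 * a1 = x12 * a2 + x13 * a3)
    (hx3 : l3 * a3 = x31 * a1 + x32 * a2)
    (hp12 : 0 < x12) (hp13 : 0 < x13) (hp32 : 0 < x32) (hl3p : 0 < l3)
    (hsum2 : l2 = x12 + x32) (hl2a3 : l2 < a3)
    (z1 z2 : ℤ) (hz : (a1 : ℤ) ∣ z1 * a2 + z2 * a3) :
    ∃ s t : ℤ, z1 = s * x12 + t * x32 ∧ z2 = s * x13 - t * l3 := by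
  have hx1' : (l1 : ℤ) * a1 = x12 * a2 + x13 * a3 := by exact_mod_cast hx1
  have hx3' : (l3 : ℤ) * a3 = x31 * a1 + x32 * a2 := by exact_mod_cast hx3
  have c12 : (1 : ℤ) ≤ x12 := by exact_mod_cast hp12
  have c13 : (1 : ℤ) ≤ x13 := by exact_mod_cast hp13
  have c32 : (1 : ℤ) ≤ x32 := by exact_mod_cast hp32
  have cl3 : (1 : ℤ) ≤ l3 := by exact_mod_cast hl3p
  have ca1 : (1 : ℤ) ≤ a1 := by exact_mod_cast ha1
  have ca2 : (1 : ℤ) ≤ a2 := by exact_mod_cast ha2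
  have ca3 : (1 : ℤ) ≤ a3 := by exact_mod_cast ha3
  have csum2 : (l2 : ℤ) = x12 + x32 := by exact_mod_cast hsum2
  have cl2a3 : (l2 : ℤ) < a3 := by exact_mod_cast hl2a3
  obtain ⟨D, hDdef⟩ : ∃ D : ℤ, D = (x12 : ℤ) * l3 + (x13 : ℤ) * x32 := ⟨_, rfl⟩
  have hD : 0 < D := by rw [hDdef]; nlinarith
  obtain ⟨A, hAdef⟩ : ∃ A : ℤ, A = z1 * l3 + z2 * x32 := ⟨_, rfl⟩
  obtain ⟨B, hBdef⟩ : ∃ B : ℤ, B = (x13 : ℤ) * z1 - (x12 : ℤ) * z2 := ⟨_, rfl⟩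
  obtain ⟨s, hsdef⟩ : ∃ s : ℤ, s = A / D := ⟨_, rfl⟩
  obtain ⟨t, htdef⟩ : ∃ t : ℤ, t = B / D := ⟨_, rfl⟩
  obtain ⟨ra, hradef⟩ : ∃ ra : ℤ, ra = A % D := ⟨_, rfl⟩
  obtain ⟨rb, hrbdef⟩ : ∃ rb : ℤ, rb = B % D := ⟨_, rfl⟩
  have hra0 : 0 ≤ ra := hradef ▸ Int.emod_nonneg _ hD.ne'
  have hraD : ra < D := hradef ▸ Int.emod_lt_of_pos _ hD
  have hrb0 : 0 ≤ rb := hrbdef ▸ Int.emod_nonneg _ hD.ne'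
  have hrbD : rb < D := hrbdef ▸ Int.emod_lt_of_pos _ hD
  have h1 : D * s + ra = A := by rw [hsdef, hradef]; exact Int.mul_ediv_add_emod A D
  have h2 : D * t + rb = B := by rw [htdef, hrbdef]; exact Int.mul_ediv_add_emod B D
  obtain ⟨p, hpdef⟩ : ∃ p : ℤ, p = z1 - s * x12 - t * x32 := ⟨_, rfl⟩
  obtain ⟨q, hqdef⟩ : ∃ q : ℤ, q = z2 - s * x13 + t * l3 := ⟨_, rfl⟩
  have key1 : D * p = ra * x12 + rb * x32 := by
    linear_combination (D : ℤ) * hpdef - (x12 : ℤ) * h1 - (x32 : ℤ) * h2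
      + z1 * hDdef - (x12 : ℤ) * hAdef - (x32 : ℤ) * hBdef
  have key2 : D * q = ra * x13 - rb * l3 := by
    linear_combination (D : ℤ) * hqdef - (x13 : ℤ) * h1 + (l3 : ℤ) * h2
      + z2 * hDdef - (x13 : ℤ) * hAdef + (l3 : ℤ) * hBdef
  by_cases h0 : ra = 0 ∧ rb = 0
  · refine ⟨s, t, ?_, ?_⟩
    · have hz0 : D * p = 0 := by rw [key1, h0.1, h0.2]; ring
      have hp0 : p = 0 := by
        rcases mul_eq_zero.mp hz0 with h | h
        · exact absurd h hD.ne'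
        · exact h
      rw [hp0] at hpdef; linarith
    · have hz0 : D * q = 0 := by rw [key2, h0.1, h0.2]; ring
      have hq0 : q = 0 := by
        rcases mul_eq_zero.mp hz0 with h | h
        · exact absurd h hD.ne'
        · exact h
      rw [hq0] at hqdef; linarith
  · exfalso
    have hor : 0 < ra ∨ 0 < rb := by
      rcases eq_or_lt_of_le hra0 with h | h
      · rcases eq_or_lt_of_le hrb0 with h' | h'
        · exact absurd ⟨h.symm, h'.symm⟩ h0
        · exact Or.inr h'
      · exact Or.inl h
    have hppos : 0 < p := by
      have hval : 0 < ra * x12 + rb * x32 := by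
        rcases hor with h | h
        · have t1 : ra * 1 ≤ ra * x12 := mul_le_mul_of_nonneg_left c12 hra0
          have t2 : 0 ≤ rb * x32 := mul_nonneg hrb0 (by linarith)
          linarith
        · have t1 : rb * 1 ≤ rb * x32 := mul_le_mul_of_nonneg_left c32 hrb0
          have t2 : 0 ≤ ra * x12 := mul_nonneg hra0 (by linarith)
          linarith
      have hDp : 0 < D * p := by rw [key1]; exact hval
      rcases mul_pos_iff.mp hDp with ⟨_, h⟩ | ⟨h, _⟩
      · exact h
      · linarith
    have hplt : p < l2 := by
      have e1 : ra * x12 ≤ (D - 1) * x12 :=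
        mul_le_mul_of_nonneg_right (by linarith) (by linarith)
      have e2 : rb * x32 ≤ (D - 1) * x32 :=
        mul_le_mul_of_nonneg_right (by linarith) (by linarith)
      have hlt : D * p < D * l2 := by rw [key1, csum2]; ring_nf; linarith
      exact lt_of_mul_lt_mul_left hlt hD.le
    have hqlt : q < x13 := by
      have e1 : ra * x13 ≤ (D - 1) * x13 :=
        mul_le_mul_of_nonneg_right (by linarith) (by linarith)
      have e3 : 0 ≤ rb * l3 := mul_nonneg hrb0 (by linarith)
      have hlt : D * q < D * x13 := by rw [key2]; linarith
      exact lt_of_mul_lt_mul_left hlt hD.le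
    have hqgt : -(l3 : ℤ) < q := by
      have e1 : rb * l3 ≤ (D - 1) * l3 :=
        mul_le_mul_of_nonneg_right (by linarith) (by linarith)
      have e3 : 0 ≤ ra * x13 := mul_nonneg hra0 (by linarith)
      have hlt : D * (-(l3 : ℤ)) < D * q := by rw [key2]; linarith
      exact lt_of_mul_lt_mul_left hlt hD.le
    have hval_eq : p * a2 + q * a3 = (z1 * a2 + z2 * a3) + a1 * (t * x31 - s * l1) := by
      linear_combination (a2 : ℤ) * hpdef + (a3 : ℤ) * hqdef + s * hx1' + t * hx3'
    have hdvd : (a1 : ℤ) ∣ p * a2 + q * a3 := by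
      rw [hval_eq]
      exact dvd_add hz (Dvd.intro _ rfl)
    obtain ⟨μ, hμ⟩ := hdvd
    rcases le_or_gt 0 q with cq | cq
    · -- q ≥ 0
      have hNpos : 0 < p * a2 + q * a3 := by
        have t1 : 0 < p * a2 := mul_pos hppos (by linarith)
        have t2 : 0 ≤ q * a3 := mul_nonneg cq (by linarith)
        linarith
      have hμpos : 0 < μ := by
        rw [hμ] at hNpos
        rcases mul_pos_iff.mp hNpos with ⟨_, h⟩ | ⟨h, _⟩
        · exact h
        · linarith
      have hl1μ : (l1 : ℤ) ≤ μ := by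
        have e1 : (μ.toNat : ℤ) = μ := Int.toNat_of_nonneg hμpos.le
        have e2 : (p.toNat : ℤ) = p := Int.toNat_of_nonneg hppos.le
        have e3 : (q.toNat : ℤ) = q := Int.toNat_of_nonneg cq
        have hZ : (μ.toNat : ℤ) * a1 = (p.toNat : ℤ) * a2 + (q.toNat : ℤ) * a3 := by
          rw [e1, e2, e3]; linarith [hμ]
        have hN : μ.toNat * a1 = p.toNat * a2 + q.toNat * a3 := by exact_mod_cast hZ
        have hlb := lb1 μ.toNat p.toNat q.toNat (by omega) hN
        have hle : (l1 : ℤ) ≤ (μ.toNat : ℤ) := by exact_mod_cast hlb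
        rwa [e1] at hle
      have heq2 : (p - x12) * a2 = (μ - l1) * a1 + ((x13 : ℤ) - q) * a3 := by
        linear_combination hμ + hx1'
      have hpx12 : (x12 : ℤ) < p := by
        have t1 : 0 ≤ (μ - l1) * a1 := mul_nonneg (by linarith) (by linarith)
        have t2 : 0 < ((x13 : ℤ) - q) * a3 := mul_pos (by linarith) (by linarith)
        have hdiff : 0 < (p - x12) * a2 := by linarith
        rcases mul_pos_iff.mp hdiff with ⟨h, _⟩ | ⟨_, h⟩
        · linarith
        · linarith
      have e1 : ((p - (x12:ℤ)).toNat : ℤ) = p - x12 := Int.toNat_of_nonneg (by linarith)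
      have e2 : ((μ - (l1:ℤ)).toNat : ℤ) = μ - l1 := Int.toNat_of_nonneg (by linarith)
      have e3 : (((x13:ℤ) - q).toNat : ℤ) = (x13 : ℤ) - q := Int.toNat_of_nonneg (by linarith)
      have hZ : ((p - (x12:ℤ)).toNat : ℤ) * a2
          = ((μ - (l1:ℤ)).toNat : ℤ) * a1 + (((x13:ℤ) - q).toNat : ℤ) * a3 := by
        rw [e1, e2, e3]; linarith [heq2]
      have hN : (p - (x12:ℤ)).toNat * a2
          = (μ - (l1:ℤ)).toNat * a1 + ((x13:ℤ) - q).toNat * a3 := by exact_mod_cast hZ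
      have hlb := lb2 _ _ _ (by omega) hN
      have hfin : (l2 : ℤ) ≤ ((p - (x12:ℤ)).toNat : ℤ) := by exact_mod_cast hlb
      rw [e1] at hfin
      linarith
    · -- q < 0
      rcases lt_trichotomy μ 0 with cμ | cμ | cμ
      · have heq2 : (-q) * a3 = (-μ) * a1 + p * a2 := by linear_combination -hμ
        have e1 : ((-q).toNat : ℤ) = -q := Int.toNat_of_nonneg (by linarith)
        have e2 : ((-μ).toNat : ℤ) = -μ := Int.toNat_of_nonneg (by linarith)
        have e3 : (p.toNat : ℤ) = p := Int.toNat_of_nonneg hppos.le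
        have hZ : ((-q).toNat : ℤ) * a3 = ((-μ).toNat : ℤ) * a1 + (p.toNat : ℤ) * a2 := by
          rw [e1, e2, e3]; linarith [heq2]
        have hN : (-q).toNat * a3 = (-μ).toNat * a1 + p.toNat * a2 := by exact_mod_cast hZ
        have hlb := lb3 _ _ _ (by omega) hN
        have hfin : (l3 : ℤ) ≤ ((-q).toNat : ℤ) := by exact_mod_cast hlb
        rw [e1] at hfin
        linarith
      · have heq2 : p * a2 = (-q) * a3 := by
          rw [cμ, mul_zero] at hμ; linarith [hμ]
        have e1 : ((-q).toNat : ℤ) = -q := Int.toNat_of_nonneg (by linarith)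
        have e3 : (p.toNat : ℤ) = p := Int.toNat_of_nonneg hppos.le
        have hZ : (p.toNat : ℤ) * a2 = ((-q).toNat : ℤ) * a3 := by rw [e1, e3]; linarith [heq2]
        have hN : p.toNat * a2 = (-q).toNat * a3 := by exact_mod_cast hZ
        have hdvd3 : a3 ∣ p.toNat * a2 := ⟨(-q).toNat, by rw [hN]; ring⟩
        have hdvd3' : a3 ∣ p.toNat := (Nat.Coprime.dvd_of_dvd_mul_right h23.symm) hdvd3
        have hp3 : a3 ≤ p.toNat := Nat.le_of_dvd (by omega) hdvd3'
        have hfin : (a3 : ℤ) ≤ p := by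
          have h' := (Nat.cast_le (α := ℤ)).mpr hp3
          rwa [e3] at h'
        linarith
      · have heq2 : p * a2 = μ * a1 + (-q) * a3 := by linear_combination hμ
        have e1 : ((-q).toNat : ℤ) = -q := Int.toNat_of_nonneg (by linarith)
        have e2 : (μ.toNat : ℤ) = μ := Int.toNat_of_nonneg (by linarith)
        have e3 : (p.toNat : ℤ) = p := Int.toNat_of_nonneg hppos.le
        have hZ : (p.toNat : ℤ) * a2 = (μ.toNat : ℤ) * a1 + ((-q).toNat : ℤ) * a3 := by
          rw [e1, e2, e3]; linarith [heq2]
        have hN : p.toNat * a2 = μ.toNat * a1 + (-q).toNat * a3 := by exact_mod_cast hZ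
        have hlb := lb2 _ _ _ (by omega) hN
        have hfin : (l2 : ℤ) ≤ (p.toNat : ℤ) := by exact_mod_cast hlb
        rw [e3] at hfin
        linarith

lemma kdvd (a1 a2 a3 l1 l2 l3 x12 x13 x31 x32 : ℕ)
    (ha1 : 0 < a1) (ha2 : 0 < a2) (ha3 : 0 < a3)
    (h12 : Nat.Coprime a1 a2) (h23 : Nat.Coprime a2 a3)
    (lb1 : ∀ l x y : ℕ, 0 < l → l * a1 = x * a2 + y * a3 → l1 ≤ l)
    (lb2 : ∀ l x y : ℕ, 0 < l → l * a2 = x * a1 + y * a3 → l2 ≤ l)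
    (lb3 : ∀ l x y : ℕ, 0 < l → l * a3 = x * a1 + y * a2 → l3 ≤ l)
    (hx1 : l1 * a1 = x12 * a2 + x13 * a3)
    (hx3 : l3 * a3 = x31 * a1 + x32 * a2)
    (hp12 : 0 < x12) (hp13 : 0 < x13) (hp32 : 0 < x32) (hl3p : 0 < l3)
    (hsum2 : l2 = x12 + x32) (hl2a3 : l2 < a3) :
    ∃ k : ℕ, x12 * l3 + x13 * x32 = k * a1 ∧ k ∣ a1 := by
  have hx1' : (l1 : ℤ) * a1 = x12 * a2 + x13 * a3 := by exact_mod_cast hx1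
  have hx3' : (l3 : ℤ) * a3 = x31 * a1 + x32 * a2 := by exact_mod_cast hx3
  -- a1 divides D = x12*l3 + x13*x32
  have hida : ((x12 * l3 + x13 * x32 : ℕ) : ℤ) * a2 = a1 * ((l1:ℤ) * l3 - (x13:ℤ) * x31) := by
    push_cast
    linear_combination (-(l3 : ℤ)) * hx1' - (x13 : ℤ) * hx3'
  have hdvdZ : (a1 : ℤ) ∣ ((x12 * l3 + x13 * x32 : ℕ) : ℤ) * a2 := Dvd.intro _ hida.symm
  have hdvdN : a1 ∣ (x12 * l3 + x13 * x32) * a2 := by exact_mod_cast hdvdZ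
  have hdvdD : a1 ∣ x12 * l3 + x13 * x32 := (Nat.Coprime.dvd_of_dvd_mul_right h12) hdvdN
  obtain ⟨k, hk⟩ := hdvdD
  have hkZ : ((x12 : ℤ) * l3 + (x13 : ℤ) * x32) = (a1 : ℤ) * k := by exact_mod_cast hk
  have hDpos : 0 < x12 * l3 + x13 * x32 := by positivity
  have hkpos : 0 < k := by
    rcases Nat.eq_zero_or_pos k with h | h
    · rw [h, Nat.mul_zero] at hk; omega
    · exact h
  -- apply lattice_gen to (a1, 0) and (0, a1)
  obtain ⟨s, t, hs1, hs2⟩ := lattice_gen a1 a2 a3 l1 l2 l3 x12 x13 x31 x32 ha1 ha2 ha3 h23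
    lb1 lb2 lb3 hx1 hx3 hp12 hp13 hp32 hl3p hsum2 hl2a3 (a1 : ℤ) 0
    (by exact ⟨a2, by ring⟩)
  obtain ⟨s', t', hs1', hs2'⟩ := lattice_gen a1 a2 a3 l1 l2 l3 x12 x13 x31 x32 ha1 ha2 ha3 h23
    lb1 lb2 lb3 hx1 hx3 hp12 hp13 hp32 hl3p hsum2 hl2a3 0 (a1 : ℤ)
    (by exact ⟨a3, by ring⟩)
  have ca1 : (0 : ℤ) < a1 := by exact_mod_cast ha1
  have ckZ : (0 : ℤ) < k := by exact_mod_cast hkpos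
  -- l3 = s * k
  have el3 : (l3 : ℤ) = s * k := by
    have h' : (a1 : ℤ) * l3 = s * ((a1:ℤ) * k) := by
      rw [← hkZ]
      linear_combination (l3 : ℤ) * hs1 + (x32 : ℤ) * hs2
    have : (a1 : ℤ) * l3 = (a1 : ℤ) * (s * k) := by linarith [h']
    exact mul_left_cancel₀ ca1.ne' this
  have ex13 : (x13 : ℤ) = t * k := by
    have h' : (a1 : ℤ) * x13 = t * ((a1:ℤ) * k) := by
      rw [← hkZ]
      linear_combination (x13 : ℤ) * hs1 - (x12 : ℤ) * hs2
    have : (a1 : ℤ) * x13 = (a1 : ℤ) * (t * k) := by linarith [h']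
    exact mul_left_cancel₀ ca1.ne' this
  have ex32 : (x32 : ℤ) = s' * k := by
    have h' : (a1 : ℤ) * x32 = s' * ((a1:ℤ) * k) := by
      rw [← hkZ]
      linear_combination (l3 : ℤ) * hs1' + (x32 : ℤ) * hs2'
    have : (a1 : ℤ) * x32 = (a1 : ℤ) * (s' * k) := by linarith [h']
    exact mul_left_cancel₀ ca1.ne' this
  have ex12 : -(x12 : ℤ) = t' * k := by
    have h' : -((a1 : ℤ) * x12) = t' * ((a1:ℤ) * k) := by
      rw [← hkZ]
      linear_combination (x13 : ℤ) * hs1' - (x12 : ℤ) * hs2'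
    have : (a1 : ℤ) * (-(x12:ℤ)) = (a1 : ℤ) * (t' * k) := by linarith [h']
    exact mul_left_cancel₀ ca1.ne' this
  -- a1 = k * (t*s' - t'*s)
  have hfin : (a1 : ℤ) = k * (t * s' - t' * s) := by
    have h' : (k : ℤ) * a1 = k * (k * (t * s' - t' * s)) := by
      have expand : (a1 : ℤ) * k = (x12 : ℤ) * l3 + (x13 : ℤ) * x32 := hkZ.symm
      calc (k : ℤ) * a1 = (x12 : ℤ) * l3 + (x13 : ℤ) * x32 := by linarith [hkZ]
        _ = (-(t' * k)) * (s * k) + (t * k) * (s' * k) := by rw [← el3, ← ex13, ← ex32, ← ex12]; ring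
        _ = k * (k * (t * s' - t' * s)) := by ring
    exact mul_left_cancel₀ ckZ.ne' h'
  have hdvd : (k : ℤ) ∣ (a1 : ℤ) := Dvd.intro _ hfin.symm
  exact ⟨k, by rw [hk, Nat.mul_comm], by exact_mod_cast hdvd⟩


set_option maxHeartbeats 1600000 in
theorem area_identities (a1 a2 a3 l1 l2 l3 x12 x13 x21 x23 x31 x32 : ℕ)
    (ha1 : 0 < a1) (ha2 : 0 < a2) (ha3 : 0 < a3)
    (h12 : Nat.Coprime a1 a2) (h13 : Nat.Coprime a1 a3) (h23 : Nat.Coprime a2 a3)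
    (hl1 : IsLeast {l : ℕ | 0 < l ∧ ∃ x y : ℕ, l * a1 = x * a2 + y * a3} l1)
    (hl2 : IsLeast {l : ℕ | 0 < l ∧ ∃ x y : ℕ, l * a2 = x * a1 + y * a3} l2)
    (hl3 : IsLeast {l : ℕ | 0 < l ∧ ∃ x y : ℕ, l * a3 = x * a1 + y * a2} l3)
    (h2l1 : 2 ≤ l1) (h2l2 : 2 ≤ l2) (h2l3 : 2 ≤ l3)
    (hx1 : l1 * a1 = x12 * a2 + x13 * a3)
    (hx2 : l2 * a2 = x21 * a1 + x23 * a3)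
    (hx3 : l3 * a3 = x31 * a1 + x32 * a2) :
    (a1 = x12 * l3 + x13 * x32 ∧ a2 = x21 * l3 + x23 * x31 ∧ a3 + x12 * x21 = l1 * l2) ∧
    (a2 = x23 * l1 + x21 * x13 ∧ a3 = x32 * l1 + x31 * x12 ∧ a1 + x23 * x32 = l2 * l3) ∧
    (a3 = x31 * l2 + x32 * x21 ∧ a1 = x13 * l2 + x12 * x23 ∧ a2 + x31 * x13 = l3 * l1) := by
  have lb1 : ∀ l x y : ℕ, 0 < l → l * a1 = x * a2 + y * a3 → l1 ≤ l :=
    fun l x y h0 he => hl1.2 ⟨h0, x, y, he⟩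
  have lb2 : ∀ l x y : ℕ, 0 < l → l * a2 = x * a1 + y * a3 → l2 ≤ l :=
    fun l x y h0 he => hl2.2 ⟨h0, x, y, he⟩
  have lb3 : ∀ l x y : ℕ, 0 < l → l * a3 = x * a1 + y * a2 → l3 ≤ l :=
    fun l x y h0 he => hl3.2 ⟨h0, x, y, he⟩
  -- the aᵢ are not in the semigroup generated by the other two
  have hno1 : ¬ ∃ x y : ℕ, a1 = x * a2 + y * a3 := by
    rintro ⟨x, y, h⟩
    have := lb1 1 x y one_pos (by simpa using h)
    omega
  have hno1' : ¬ ∃ x y : ℕ, a1 = x * a3 + y * a2 := by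
    rintro ⟨x, y, h⟩
    have := lb1 1 y x one_pos (by rw [one_mul, h]; exact Nat.add_comm _ _)
    omega
  have hno2 : ¬ ∃ x y : ℕ, a2 = x * a1 + y * a3 := by
    rintro ⟨x, y, h⟩
    have := lb2 1 x y one_pos (by simpa using h)
    omega
  have hno2' : ¬ ∃ x y : ℕ, a2 = x * a3 + y * a1 := by
    rintro ⟨x, y, h⟩
    have := lb2 1 y x one_pos (by rw [one_mul, h]; exact Nat.add_comm _ _)
    omega
  have hno3 : ¬ ∃ x y : ℕ, a3 = x * a1 + y * a2 := by
    rintro ⟨x, y, h⟩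
    have := lb3 1 x y one_pos (by simpa using h)
    omega
  have hno3' : ¬ ∃ x y : ℕ, a3 = x * a2 + y * a1 := by
    rintro ⟨x, y, h⟩
    have := lb3 1 y x one_pos (by rw [one_mul, h]; exact Nat.add_comm _ _)
    omega
  -- strict bounds lᵢ < aⱼ
  have hl3a2 : l3 < a2 := by
    obtain ⟨m, x, hm0, hmb, he⟩ := exists_small a1 a2 a3 ha1 ha2 h23 hno1
    have := lb3 m 1 x hm0 (by rw [he, one_mul])
    omega
  have hl2a3 : l2 < a3 := by
    obtain ⟨m, x, hm0, hmb, he⟩ := exists_small a1 a3 a2 ha1 ha3 h23.symm hno1'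
    have := lb2 m 1 x hm0 (by rw [he, one_mul])
    omega
  have hl3a1 : l3 < a1 := by
    obtain ⟨m, x, hm0, hmb, he⟩ := exists_small a2 a1 a3 ha2 ha1 h13 hno2
    have := lb3 m x 1 hm0 (by rw [he, one_mul]; exact Nat.add_comm _ _)
    omega
  have hl1a3 : l1 < a3 := by
    obtain ⟨m, x, hm0, hmb, he⟩ := exists_small a2 a3 a1 ha2 ha3 h13.symm hno2'
    have := lb1 m 1 x hm0 (by rw [he, one_mul])
    omega
  have hl2a1 : l2 < a1 := by
    obtain ⟨m, x, hm0, hmb, he⟩ := exists_small a3 a1 a2 ha3 ha1 h12 hno3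
    have := lb2 m x 1 hm0 (by rw [he, one_mul]; exact Nat.add_comm _ _)
    omega
  have hl1a2 : l1 < a2 := by
    obtain ⟨m, x, hm0, hmb, he⟩ := exists_small a3 a2 a1 ha3 ha2 h12.symm hno3'
    have := lb1 m x 1 hm0 (by rw [he, one_mul]; exact Nat.add_comm _ _)
    omega
  -- positivity of all coefficients
  have hx12p : 0 < x12 := by
    rcases Nat.eq_zero_or_pos x12 with h | h
    · exfalso
      rw [h, zero_mul, zero_add] at hx1
      have hdvd : a3 ∣ l1 := (Nat.Coprime.dvd_of_dvd_mul_right h13.symm) ⟨x13, hx1.trans (Nat.mul_comm _ _)⟩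
      have := Nat.le_of_dvd (by omega) hdvd
      omega
    · exact h
  have hx13p : 0 < x13 := by
    rcases Nat.eq_zero_or_pos x13 with h | h
    · exfalso
      rw [h, zero_mul, add_zero] at hx1
      have hdvd : a2 ∣ l1 := (Nat.Coprime.dvd_of_dvd_mul_right h12.symm) ⟨x12, hx1.trans (Nat.mul_comm _ _)⟩
      have := Nat.le_of_dvd (by omega) hdvd
      omega
    · exact h
  have hx21p : 0 < x21 := by
    rcases Nat.eq_zero_or_pos x21 with h | h
    · exfalso
      rw [h, zero_mul, zero_add] at hx2
      have hdvd : a3 ∣ l2 := (Nat.Coprime.dvd_of_dvd_mul_right h23.symm) ⟨x23, hx2.trans (Nat.mul_comm _ _)⟩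
      have := Nat.le_of_dvd (by omega) hdvd
      omega
    · exact h
  have hx23p : 0 < x23 := by
    rcases Nat.eq_zero_or_pos x23 with h | h
    · exfalso
      rw [h, zero_mul, add_zero] at hx2
      have hdvd : a1 ∣ l2 := (Nat.Coprime.dvd_of_dvd_mul_right h12) ⟨x21, hx2.trans (Nat.mul_comm _ _)⟩
      have := Nat.le_of_dvd (by omega) hdvd
      omega
    · exact h
  have hx31p : 0 < x31 := by
    rcases Nat.eq_zero_or_pos x31 with h | h
    · exfalso
      rw [h, zero_mul, zero_add] at hx3
      have hdvd : a2 ∣ l3 := (Nat.Coprime.dvd_of_dvd_mul_right h23) ⟨x32, hx3.trans (Nat.mul_comm _ _)⟩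
      have := Nat.le_of_dvd (by omega) hdvd
      omega
    · exact h
  have hx32p : 0 < x32 := by
    rcases Nat.eq_zero_or_pos x32 with h | h
    · exfalso
      rw [h, zero_mul, add_zero] at hx3
      have hdvd : a1 ∣ l3 := (Nat.Coprime.dvd_of_dvd_mul_right h13) ⟨x31, hx3.trans (Nat.mul_comm _ _)⟩
      have := Nat.le_of_dvd (by omega) hdvd
      omega
    · exact h
  -- coefficient bounds xᵢⱼ < lⱼ
  have hx32l2 : x32 < l2 :=
    coeff_lt a1 a2 a3 l2 l3 x31 x32 x21 x23 ha1 ha3 lb3 hx3 hx2 hx21p hx23p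
  have hx31l1 : x31 < l1 :=
    coeff_lt a2 a1 a3 l1 l3 x32 x31 x12 x13
      ha2 ha3 (fun l x y h0 he => lb3 l y x h0 (by rw [he]; exact Nat.add_comm _ _))
      (by rw [hx3]; exact Nat.add_comm _ _) hx1 hx12p hx13p
  have hx21l1 : x21 < l1 :=
    coeff_lt a3 a1 a2 l1 l2 x23 x21 x13 x12
      ha3 ha2 (fun l x y h0 he => lb2 l y x h0 (by rw [he]; exact Nat.add_comm _ _))
      (by rw [hx2]; exact Nat.add_comm _ _) (by rw [hx1]; exact Nat.add_comm _ _) hx13p hx12p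
  have hx23l3 : x23 < l3 :=
    coeff_lt a1 a3 a2 l3 l2 x21 x23 x31 x32 ha1 ha2 lb2 hx2 hx3 hx31p hx32p
  have hx12l2 : x12 < l2 :=
    coeff_lt a3 a2 a1 l2 l1 x13 x12 x23 x21
      ha3 ha1 (fun l x y h0 he => lb1 l y x h0 (by rw [he]; exact Nat.add_comm _ _))
      (by rw [hx1]; exact Nat.add_comm _ _) (by rw [hx2]; exact Nat.add_comm _ _) hx23p hx21p
  have hx13l3 : x13 < l3 :=
    coeff_lt a2 a3 a1 l3 l1 x12 x13 x32 x31
      ha2 ha1 lb1 hx1 (by rw [hx3]; exact Nat.add_comm _ _) hx32p hx31p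
  -- column sums
  have hx1' : (l1 : ℤ) * a1 = x12 * a2 + x13 * a3 := by exact_mod_cast hx1
  have hx2' : (l2 : ℤ) * a2 = x21 * a1 + x23 * a3 := by exact_mod_cast hx2
  have hx3' : (l3 : ℤ) * a3 = x31 * a1 + x32 * a2 := by exact_mod_cast hx3
  have hs1le : l1 ≤ x21 + x31 := by
    apply lb1 (x21 + x31) (l2 - x32) (l3 - x23) (by omega)
    zify [hx32l2.le, hx23l3.le]
    linarith
  have hs2le : l2 ≤ x12 + x32 := by
    apply lb2 (x12 + x32) (l1 - x31) (l3 - x13) (by omega)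
    zify [hx31l1.le, hx13l3.le]
    linarith
  have hs3le : l3 ≤ x13 + x23 := by
    apply lb3 (x13 + x23) (l1 - x21) (l2 - x12) (by omega)
    zify [hx21l1.le, hx12l2.le]
    linarith
  have hsum0 : ((x21 : ℤ) + x31 - l1) * a1 + ((x12 : ℤ) + x32 - l2) * a2
      + ((x13 : ℤ) + x23 - l3) * a3 = 0 := by
    linear_combination (-1 : ℤ) * hx1' - hx2' - hx3'
  have ca1 : (1 : ℤ) ≤ a1 := by exact_mod_cast ha1
  have ca2 : (1 : ℤ) ≤ a2 := by exact_mod_cast ha2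
  have ca3 : (1 : ℤ) ≤ a3 := by exact_mod_cast ha3
  have t1 : (0 : ℤ) ≤ (x21 : ℤ) + x31 - l1 := by
    have : (l1 : ℤ) ≤ (x21 : ℤ) + x31 := by exact_mod_cast hs1le
    linarith
  have t2 : (0 : ℤ) ≤ (x12 : ℤ) + x32 - l2 := by
    have : (l2 : ℤ) ≤ (x12 : ℤ) + x32 := by exact_mod_cast hs2le
    linarith
  have t3 : (0 : ℤ) ≤ (x13 : ℤ) + x23 - l3 := by
    have : (l3 : ℤ) ≤ (x13 : ℤ) + x23 := by exact_mod_cast hs3le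
    linarith
  have p1 : (0 : ℤ) ≤ ((x21 : ℤ) + x31 - l1) * a1 := mul_nonneg t1 (by linarith)
  have p2 : (0 : ℤ) ≤ ((x12 : ℤ) + x32 - l2) * a2 := mul_nonneg t2 (by linarith)
  have p3 : (0 : ℤ) ≤ ((x13 : ℤ) + x23 - l3) * a3 := mul_nonneg t3 (by linarith)
  have z1 : ((x21 : ℤ) + x31 - l1) * a1 = 0 := by linarith
  have z2 : ((x12 : ℤ) + x32 - l2) * a2 = 0 := by linarith
  have z3 : ((x13 : ℤ) + x23 - l3) * a3 = 0 := by linarith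
  have hl1sum : l1 = x21 + x31 := by
    rcases mul_eq_zero.mp z1 with h | h
    · have : (l1 : ℤ) = (x21 : ℤ) + x31 := by linarith
      exact_mod_cast this
    · exfalso; have : a1 = 0 := by exact_mod_cast h
      omega
  have hl2sum : l2 = x12 + x32 := by
    rcases mul_eq_zero.mp z2 with h | h
    · have : (l2 : ℤ) = (x12 : ℤ) + x32 := by linarith
      exact_mod_cast this
    · exfalso; have : a2 = 0 := by exact_mod_cast h
      omega
  have hl3sum : l3 = x13 + x23 := by
    rcases mul_eq_zero.mp z3 with h | h
    · have : (l3 : ℤ) = (x13 : ℤ) + x23 := by linarith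
      exact_mod_cast this
    · exfalso; have : a3 = 0 := by exact_mod_cast h
      omega
  -- the two kdvd instances
  obtain ⟨k1, hk1, hk1d⟩ := kdvd a1 a2 a3 l1 l2 l3 x12 x13 x31 x32 ha1 ha2 ha3 h12 h23
    lb1 lb2 lb3 hx1 hx3 hx12p hx13p hx32p (by omega) hl2sum hl2a3
  obtain ⟨k2, hk2, hk2d⟩ := kdvd a2 a3 a1 l2 l3 l1 x23 x21 x12 x13 ha2 ha3 ha1 h23 h13.symm
    (fun l x y h0 he => lb2 l y x h0 (by rw [he]; exact Nat.add_comm _ _))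
    (fun l x y h0 he => lb3 l y x h0 (by rw [he]; exact Nat.add_comm _ _))
    lb1
    (by rw [hx2]; exact Nat.add_comm _ _) hx1 hx23p hx21p hx13p (by omega)
    (by rw [hl3sum]; exact Nat.add_comm _ _) hl3a1
  -- k1 = k2
  have hk1Z : ((x12 : ℤ) * l3 + (x13 : ℤ) * x32) = (k1 : ℤ) * a1 := by exact_mod_cast hk1
  have hk2Z : ((x23 : ℤ) * l1 + (x21 : ℤ) * x13) = (k2 : ℤ) * a2 := by exact_mod_cast hk2
  have hida : ((x12 : ℤ) * l3 + (x13 : ℤ) * x32) * a2 = ((l1 : ℤ) * l3 - (x13 : ℤ) * x31) * a1 := by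
    linear_combination (-(l3 : ℤ)) * hx1' - (x13 : ℤ) * hx3'
  have hk1a2 : (k1 : ℤ) * a2 = (l1 : ℤ) * l3 - (x13 : ℤ) * x31 := by
    have h' : ((k1 : ℤ) * a2) * a1 = ((l1 : ℤ) * l3 - (x13 : ℤ) * x31) * a1 := by
      linear_combination hida - (a2 : ℤ) * hk1Z
    exact mul_right_cancel₀ (by positivity) h'
  have hcross : (l1 : ℤ) * l3 - (x13 : ℤ) * x31 = (x23 : ℤ) * l1 + (x21 : ℤ) * x13 := by
    have s1 : (l1 : ℤ) = (x21 : ℤ) + x31 := by exact_mod_cast hl1sum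
    have s3 : (l3 : ℤ) = (x13 : ℤ) + x23 := by exact_mod_cast hl3sum
    rw [s1, s3]; ring
  have hk12 : k1 = k2 := by
    have h' : (k1 : ℤ) * a2 = (k2 : ℤ) * a2 := by rw [hk1a2, hcross, hk2Z]
    have : (k1 : ℤ) = (k2 : ℤ) := mul_right_cancel₀ (by positivity) h'
    exact_mod_cast this
  have hk1one : k1 = 1 := by
    have hg : k1 ∣ Nat.gcd a1 a2 := Nat.dvd_gcd hk1d (hk12 ▸ hk2d)
    rw [h12] at hg
    exact Nat.dvd_one.mp hg
  -- core identities
  have G1 : a1 = x12 * l3 + x13 * x32 := by rw [hk1one, one_mul] at hk1; exact hk1.symm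
  have A2 : a2 = x23 * l1 + x21 * x13 := by rw [← hk12, hk1one, one_mul] at hk2; exact hk2.symm
  -- identity for a3
  have hidc : ((l1 : ℤ) * l2 - (x12 : ℤ) * x21) * a1 = ((x12 : ℤ) * x23 + (x13 : ℤ) * l2) * a3 := by
    linear_combination (l2 : ℤ) * hx1' + (x12 : ℤ) * hx2'
  have hEa1 : (x12 : ℤ) * x23 + (x13 : ℤ) * l2 = (a1 : ℤ) := by
    have e : x12 * x23 + x13 * l2 = x12 * l3 + x13 * x32 := by
      rw [hl2sum, hl3sum]; ring
    have e' : ((x12 : ℤ)) * x23 + (x13 : ℤ) * l2 = (x12 : ℤ) * l3 + (x13 : ℤ) * x32 := by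
      exact_mod_cast e
    rw [e']
    have : (a1 : ℤ) = (x12 : ℤ) * l3 + (x13 : ℤ) * x32 := by exact_mod_cast G1
    linarith
  have HA3 : a3 + x12 * x21 = l1 * l2 := by
    have h' : ((l1 : ℤ) * l2 - (x12 : ℤ) * x21) * a1 = (a3 : ℤ) * a1 := by
      rw [hidc, hEa1]; ring
    have h'' : (l1 : ℤ) * l2 - (x12 : ℤ) * x21 = (a3 : ℤ) := mul_right_cancel₀ (by positivity) h'
    have : (a3 : ℤ) + (x12 : ℤ) * x21 = (l1 : ℤ) * l2 := by linarith
    exact_mod_cast this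
  refine ⟨⟨G1, ?_, HA3⟩, ⟨A2, ?_, ?_⟩, ⟨?_, ?_, ?_⟩⟩
  · -- a2 = x21 * l3 + x23 * x31
    have e : x21 * l3 + x23 * x31 = x23 * l1 + x21 * x13 := by
      rw [hl3sum, hl1sum]; ring
    rw [e]; exact A2
  · -- a3 = x32 * l1 + x31 * x12
    have e : l1 * l2 = x12 * x21 + (x32 * l1 + x31 * x12) := by
      rw [hl1sum, hl2sum]; ring
    linarith [HA3, e]
  · -- a1 + x23 * x32 = l2 * l3
    have e : l2 * l3 = (x12 * l3 + x13 * x32) + x23 * x32 := by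
      rw [hl2sum, hl3sum]; ring
    linarith [G1, e]
  · -- a3 = x31 * l2 + x32 * x21
    have e : l1 * l2 = x12 * x21 + (x31 * l2 + x32 * x21) := by
      rw [hl1sum, hl2sum]; ring
    linarith [HA3, e]
  · -- a1 = x13 * l2 + x12 * x23
    have e : x13 * l2 + x12 * x23 = x12 * l3 + x13 * x32 := by
      rw [hl2sum, hl3sum]; ring
    rw [e]; exact G1
  · -- a2 + x31 * x13 = l3 * l1
    have e : l3 * l1 = (x23 * l1 + x21 * x13) + x31 * x13 := by
      rw [hl3sum, hl1sum]; ring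
    linarith [A2, e]
end

section
/- Let a₁, a₂, a₃ be pairwise coprime positive integers with lᵢ ≥ 2 and coefficients xᵢⱼ of the minimal representations. Then g(a) = l₃a₃ + max{x₂₁a₁, x₁₂a₂} - a₁ - a₂ - a₃. -/
/-!
The coefficients of the three minimal relations are positive and the relations sum to zero,
so `l₁ = x₂₁ + x₃₁` and `l₂ = x₁₂ + x₃₂` (Herzog). Hence the values `x a₁ + y a₂` with `(x, y)`
in the L-shaped region `x < l₁, y < l₂, ¬(x₃₁ ≤ x ∧ x₃₂ ≤ y)` form the Apéry set of `a₃`: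
they meet every residue class modulo `a₃` (the smallest element of a class cannot be reduced
by any relation, so it lies in the region), and none of them is `a₃` plus an element of the
semigroup. The Frobenius number is the largest Apéry element minus `a₃`, attained at a corner
of the region.
-/

def IsMinMultiple (a b c l : ℕ) : Prop :=
  IsLeast {l : ℕ | 0 < l ∧ ∃ x y : ℕ, l * a = x * b + y * c} l

structure IsMinRel (a b c l x y : ℕ) : Prop where
  isMinMultiple : IsMinMultiple a b c l
  eq : l * a = x * b + y * c

def InLShape (l1 l2 r s x y : ℕ) : Prop :=
  x < l1 ∧ y < l2 ∧ (x < r ∨ y < s)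

section MinimalRelations

variable {a b c l la lb lc p q r s d e k : ℕ}

theorem IsMinMultiple.swap (h : IsMinMultiple a b c l) : IsMinMultiple a c b l :=
  ⟨⟨h.1.1, h.1.2.elim fun x ⟨y, hxy⟩ => ⟨y, x, by rw [hxy, add_comm]⟩⟩,
    fun _ ⟨hl, x, y, hxy⟩ => h.2 ⟨hl, y, x, by rw [hxy, add_comm]⟩⟩

theorem IsMinRel.swap (h : IsMinRel a b c l p q) : IsMinRel a c b l q p :=
  ⟨h.isMinMultiple.swap, by rw [h.eq, add_comm]⟩

theorem IsMinMultiple.add_le_of_mul_eq {x x' y z : ℕ} (hl : IsMinMultiple a b c l)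
    (h : x * a = x' * a + y * b + z * c) (hpos : 0 < y * b + z * c) : x' + l ≤ x := by
  obtain ⟨d, rfl⟩ := Nat.exists_eq_add_of_lt
    (Nat.lt_of_mul_lt_mul_right (show x' * a < x * a by omega))
  have : l ≤ d + 1 := hl.2 ⟨d.succ_pos, y, z, by linarith⟩
  omega

theorem IsMinMultiple.two_le_of_two_le (hb : IsMinMultiple b a c l) (hl : 2 ≤ l) (ha : 0 < a) :
    2 ≤ a := by
  by_contra! h
  obtain rfl : a = 1 := by omega
  have : l ≤ 1 := hb.2 ⟨one_pos, b, 0, by ring⟩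
  omega

/-- The multiplier `l0 < c` with `l0 * a ≡ b` either makes `l0 * a` a combination of `b` and `c`,
or makes `b` itself one, against `2 ≤ lb`. -/
theorem IsMinMultiple.lt_of_two_le (ha : IsMinMultiple a b c la) (hb : IsMinMultiple b a c lb)
    (hlb : 2 ≤ lb) (hc : 0 < c) (hac : Nat.Coprime a c) : la < c := by
  obtain ⟨l0, hl0c, hl0⟩ := Nat.exists_mul_mod_eq_of_coprime b hac hc.ne'
  rcases le_or_gt (a * l0) b with hle | hlt
  · obtain ⟨k, hk⟩ := (Nat.modEq_iff_dvd' hle).mp hl0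
    have : lb ≤ 1 := hb.2 ⟨one_pos, l0, k, by rw [mul_comm l0, mul_comm k]; omega⟩
    omega
  · obtain ⟨k, hk⟩ := (Nat.modEq_iff_dvd' hlt.le).mp hl0.symm
    have : la ≤ l0 := ha.2 ⟨Nat.pos_of_ne_zero (by rintro rfl; omega), 1, k,
      by rw [mul_comm l0, mul_comm k]; omega⟩
    omega

theorem IsMinRel.pos_left (h : IsMinRel a b c l p q) (hb : IsMinMultiple b a c lb) (hlb : 2 ≤ lb)
    (hc : 0 < c) (hac : Nat.Coprime a c) : 0 < p := by
  have hlc := h.isMinMultiple.lt_of_two_le hb hlb hc hac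
  by_contra! hp
  have hdvd : c ∣ l * a := ⟨q, by rw [h.eq]; simp [show p = 0 by omega, mul_comm]⟩
  have := Nat.le_of_dvd h.isMinMultiple.1.1 (hac.symm.dvd_of_dvd_mul_right hdvd)
  omega

theorem IsMinRel.coeffs_pos (h : IsMinRel a b c l p q) (hb : IsMinMultiple b a c lb)
    (hc : IsMinMultiple c a b lc) (hlb : 2 ≤ lb) (hlc : 2 ≤ lc) (hab : Nat.Coprime a b)
    (hac : Nat.Coprime a c) (hb0 : 0 < b) (hc0 : 0 < c) : 0 < p ∧ 0 < q :=
  ⟨h.pos_left hb hlb hc0 hac, h.swap.pos_left hc hlc hb0 hab⟩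

/-- If `la ≤ r`, substituting `la * a` into the relation of `c` yields a shorter one. -/
theorem IsMinRel.coeff_lt (ha : IsMinRel a b c la p q) (hc : IsMinRel c a b lc r s)
    (hp : 0 < p) (hq : 0 < q) (hb : 0 < b) : r < la := by
  by_contra! hr
  obtain ⟨t, rfl⟩ := Nat.exists_eq_add_of_le hr
  have := hc.isMinMultiple.add_le_of_mul_eq (x := lc) (x' := q) (y := t) (z := s + p)
    (by linarith [ha.eq, hc.eq]) (by nlinarith)
  omega

theorem IsMinRel.le_add (ha : IsMinRel a b c la p q) (hc : IsMinRel c a b lc r s)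
    (hb : IsMinMultiple b a c lb) (hp : 0 < p) (hq : 0 < q) (hr : 0 < r) (hs : 0 < s)
    (hb0 : 0 < b) (hc0 : 0 < c) : lb ≤ p + s := by
  obtain ⟨t, rfl⟩ := Nat.exists_eq_add_of_le (ha.coeff_lt hc hp hq hb0).le
  obtain ⟨u, rfl⟩ := Nat.exists_eq_add_of_lt (hc.swap.coeff_lt ha.swap hs hr hb0)
  have := hb.add_le_of_mul_eq (x := p + s) (x' := 0) (y := t) (z := u + 1)
    (by linarith [ha.eq, hc.eq]) (by nlinarith)
  omega

theorem IsMinMultiple.add_le_of_lt (hb : IsMinMultiple b a c lb) (hc : lc * c = r * a + s * b)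
    (hk : lc ≤ k) (h : d * a + e * b = k * c) (hd : d < r) (ha : 0 < a) : s + lb ≤ e := by
  obtain ⟨n, rfl⟩ := Nat.exists_eq_add_of_lt hd
  obtain ⟨j, rfl⟩ := Nat.exists_eq_add_of_le hk
  exact hb.add_le_of_mul_eq (x := e) (x' := s) (y := n + 1) (z := j) (by linarith)
    (by nlinarith)

end MinimalRelations

/-- By `le_add` each `lᵢ` is at most the sum of the other two relations' coefficients at `aᵢ`;
summing the three relations shows that the differences vanish. -/
theorem IsMinRel.eq_add_of_pos {a1 a2 a3 l1 l2 l3 x12 x13 x21 x23 x31 x32 : ℕ}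
    (h1 : IsMinRel a1 a2 a3 l1 x12 x13) (h2 : IsMinRel a2 a1 a3 l2 x21 x23)
    (h3 : IsMinRel a3 a1 a2 l3 x31 x32) (p12 : 0 < x12) (p13 : 0 < x13) (p21 : 0 < x21)
    (p23 : 0 < x23) (p31 : 0 < x31) (p32 : 0 < x32) (ha1 : 0 < a1) (ha2 : 0 < a2) (ha3 : 0 < a3) :
    l1 = x21 + x31 ∧ l2 = x12 + x32 := by
  obtain ⟨d1, hd1⟩ := Nat.exists_eq_add_of_le
    (h2.le_add h3.swap h1.isMinMultiple p21 p23 p32 p31 ha1 ha3)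
  obtain ⟨d2, hd2⟩ := Nat.exists_eq_add_of_le
    (h1.le_add h3 h2.isMinMultiple p12 p13 p31 p32 ha2 ha3)
  obtain ⟨d3, hd3⟩ := Nat.exists_eq_add_of_le
    (h1.swap.le_add h2 h3.isMinMultiple p13 p12 p21 p23 ha3 ha2)
  have hsum : d1 * a1 + d2 * a2 + d3 * a3 = 0 := by
    have e1 := congrArg (· * a1) hd1
    have e2 := congrArg (· * a2) hd2
    have e3 := congrArg (· * a3) hd3
    linarith [h1.eq, h2.eq, h3.eq]
  simp only [Nat.add_eq_zero_iff, Nat.mul_eq_zero] at hsum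
  omega

section LShape

variable {l1 l2 r s x y : ℕ}

theorem InLShape.add_le_max (h : InLShape l1 l2 r s x y) (a b : ℕ) :
    x * a + y * b + a + b ≤ max (l1 * a + s * b) (r * a + l2 * b) := by
  obtain ⟨hx, hy, hxr | hys⟩ := h
  · exact le_max_of_le_right (by nlinarith)
  · exact le_max_of_le_left (by nlinarith)

theorem exists_inLShape_add_eq_max (hr : 0 < r) (hs : 0 < s) (hrl : r ≤ l1) (hsl : s ≤ l2)
    (a b : ℕ) : ∃ x y, InLShape l1 l2 r s x y ∧
      x * a + y * b + a + b = max (l1 * a + s * b) (r * a + l2 * b) := by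
  obtain ⟨r, rfl⟩ : ∃ r', r = r' + 1 := ⟨r - 1, by omega⟩
  obtain ⟨s, rfl⟩ : ∃ s', s = s' + 1 := ⟨s - 1, by omega⟩
  obtain ⟨l1, rfl⟩ : ∃ l, l1 = l + 1 := ⟨l1 - 1, by omega⟩
  obtain ⟨l2, rfl⟩ : ∃ l, l2 = l + 1 := ⟨l2 - 1, by omega⟩
  rcases le_total ((l1 + 1) * a + (s + 1) * b) ((r + 1) * a + (l2 + 1) * b) with h | h
  · exact ⟨r, l2, ⟨by omega, by omega, Or.inl (by omega)⟩, by rw [max_eq_right h]; ring⟩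
  · exact ⟨l1, s, ⟨by omega, by omega, Or.inr (by omega)⟩, by rw [max_eq_left h]; ring⟩

variable {a1 a2 a3 l3 x12 x13 x21 x23 : ℕ}

theorem exists_eq_add_of_not_inLShape (h1 : l1 * a1 = x12 * a2 + x13 * a3)
    (h2 : l2 * a2 = x21 * a1 + x23 * a3) (h3 : l3 * a3 = r * a1 + s * a2) (hx13 : 0 < x13)
    (hx23 : 0 < x23) (hl3 : 0 < l3) (h : ¬InLShape l1 l2 r s x y) :
    ∃ x' y' k, 0 < k ∧ x * a1 + y * a2 = x' * a1 + y' * a2 + k * a3 := by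
  unfold InLShape at h
  by_cases hx : l1 ≤ x
  · obtain ⟨x', rfl⟩ := Nat.exists_eq_add_of_le hx
    exact ⟨x', y + x12, x13, hx13, by linarith⟩
  by_cases hy : l2 ≤ y
  · obtain ⟨y', rfl⟩ := Nat.exists_eq_add_of_le hy
    exact ⟨x + x21, y', x23, hx23, by linarith⟩
  obtain ⟨x', rfl⟩ := Nat.exists_eq_add_of_le (show r ≤ x by omega)
  obtain ⟨y', rfl⟩ := Nat.exists_eq_add_of_le (show s ≤ y by omega)
  exact ⟨x', y', l3, hl3, by linarith⟩

theorem exists_inLShape_modEq (h1 : l1 * a1 = x12 * a2 + x13 * a3)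
    (h2 : l2 * a2 = x21 * a1 + x23 * a3) (h3 : l3 * a3 = r * a1 + s * a2) (hx13 : 0 < x13)
    (hx23 : 0 < x23) (hl3 : 0 < l3) (ha3 : 0 < a3) (h13 : Nat.Coprime a1 a3) (z : ℕ) :
    ∃ x y, InLShape l1 l2 r s x y ∧ x * a1 + y * a2 ≡ z [MOD a3] := by
  have key : ∀ n x y, x * a1 + y * a2 = n →
      ∃ x' y', InLShape l1 l2 r s x' y' ∧ x' * a1 + y' * a2 ≡ n [MOD a3] := by
    intro n
    induction n using Nat.strong_induction_on with
    | _ n ih =>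
      intro x y hn
      by_cases h : InLShape l1 l2 r s x y
      · exact ⟨x, y, h, hn ▸ rfl⟩
      obtain ⟨x', y', k, hk, hxy⟩ := exists_eq_add_of_not_inLShape h1 h2 h3 hx13 hx23 hl3 h
      subst hn
      obtain ⟨x'', y'', h', hmod⟩ :=
        ih _ (hxy ▸ Nat.lt_add_of_pos_right (Nat.mul_pos hk ha3)) x' y' rfl
      exact ⟨x'', y'', h', hmod.trans (hxy ▸ (Nat.add_mul_mod_self_right _ _ _).symm)⟩
  obtain ⟨x, -, hx⟩ := Nat.exists_mul_mod_eq_of_coprime z h13 ha3.ne'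
  obtain ⟨x', y', h, hmod⟩ := key _ x 0 rfl
  exact ⟨x', y', h, hmod.trans (by rw [zero_mul, add_zero, mul_comm]; exact hx)⟩

theorem InLShape.ne_add {x' y' k : ℕ} (hxy : InLShape l1 l2 r s x y)
    (h1 : IsMinMultiple a1 a2 a3 l1) (h2 : IsMinMultiple a2 a1 a3 l2)
    (h3 : IsMinRel a3 a1 a2 l3 r s) (ha1 : 0 < a1) (ha2 : 0 < a2) (ha3 : 0 < a3) (hk : 0 < k) :
    x * a1 + y * a2 ≠ x' * a1 + y' * a2 + k * a3 := by
  obtain ⟨hx, hy, hxr⟩ := hxy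
  intro h
  have hka3 := Nat.mul_pos hk ha3
  rcases le_or_gt y y' with hyy | hyy
  · obtain ⟨t, rfl⟩ := Nat.exists_eq_add_of_le hyy
    have := h1.add_le_of_mul_eq (x := x) (x' := x') (y := t) (z := k) (by linarith) (by omega)
    omega
  rcases le_or_gt x x' with hxx | hxx
  · obtain ⟨t, rfl⟩ := Nat.exists_eq_add_of_le hxx
    have := h2.add_le_of_mul_eq (x := y) (x' := y') (y := t) (z := k) (by linarith) (by omega)
    omega
  obtain ⟨d, rfl⟩ := Nat.exists_eq_add_of_le hxx.le
  obtain ⟨e, rfl⟩ := Nat.exists_eq_add_of_le hyy.le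
  have hde : d * a1 + e * a2 = k * a3 := by linarith
  have hk3 : l3 ≤ k := h3.isMinMultiple.2 ⟨hk, d, e, hde.symm⟩
  rcases hxr with hxr | hys
  · have := h2.add_le_of_lt h3.eq hk3 hde (by omega) ha1
    omega
  · have := h1.add_le_of_lt h3.swap.eq hk3 (by linarith : e * a2 + d * a1 = k * a3) (by omega) ha2
    omega

end LShape

theorem isGreatest_compl_of_cover {S : Set ℕ} {m w g : ℕ} (hS : ∀ s ∈ S, ∀ k, s + k * m ∈ S)
    (hcover : ∀ z, ∃ v ∈ S, v ≤ w ∧ v ≡ z [MOD m]) (hw : ∀ s ∈ S, s + m ≠ w) (hg : g ∉ S) :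
    IsGreatest Sᶜ (w - m) := by
  have hgap : ∀ z ∉ S, z + m ≤ w := by
    intro z hz
    obtain ⟨v, hv, hvw, hvz⟩ := hcover z
    rcases le_or_gt v z with hle | hlt
    · obtain ⟨k, hk⟩ := (Nat.modEq_iff_dvd' hle).mp hvz
      exact absurd (show z ∈ S by convert hS v hv k using 1; rw [mul_comm]; omega) hz
    · have := Nat.le_of_dvd (by omega) ((Nat.modEq_iff_dvd' hlt.le).mp hvz.symm)
      omega
  have := hgap g hg
  exact ⟨fun hmem => hw _ hmem (by omega), fun z hz => by have := hgap z hz; omega⟩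

theorem frobenius_number_unsymmetric (a1 a2 a3 l1 l2 l3 x12 x13 x21 x23 x31 x32 : ℕ)
    (ha1 : 0 < a1) (ha2 : 0 < a2) (ha3 : 0 < a3)
    (h12 : Nat.Coprime a1 a2) (h13 : Nat.Coprime a1 a3) (h23 : Nat.Coprime a2 a3)
    (hl1 : IsLeast {l : ℕ | 0 < l ∧ ∃ x y : ℕ, l * a1 = x * a2 + y * a3} l1)
    (hl2 : IsLeast {l : ℕ | 0 < l ∧ ∃ x y : ℕ, l * a2 = x * a1 + y * a3} l2)
    (hl3 : IsLeast {l : ℕ | 0 < l ∧ ∃ x y : ℕ, l * a3 = x * a1 + y * a2} l3)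
    (h2l1 : 2 ≤ l1) (h2l2 : 2 ≤ l2) (h2l3 : 2 ≤ l3)
    (hx1 : l1 * a1 = x12 * a2 + x13 * a3)
    (hx2 : l2 * a2 = x21 * a1 + x23 * a3)
    (hx3 : l3 * a3 = x31 * a1 + x32 * a2) :
    IsGreatest {z : ℕ | ¬∃ y1 y2 y3 : ℕ, z = y1 * a1 + y2 * a2 + y3 * a3}
      (l3 * a3 + max (x21 * a1) (x12 * a2) - (a1 + a2 + a3)) := by
  have h1 : IsMinRel a1 a2 a3 l1 x12 x13 := ⟨hl1, hx1⟩
  have h2 : IsMinRel a2 a1 a3 l2 x21 x23 := ⟨hl2, hx2⟩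
  have h3 : IsMinRel a3 a1 a2 l3 x31 x32 := ⟨hl3, hx3⟩
  obtain ⟨p12, p13⟩ := h1.coeffs_pos hl2 hl3 h2l2 h2l3 h12 h13 ha2 ha3
  obtain ⟨p21, p23⟩ := h2.coeffs_pos hl1 h3.swap.isMinMultiple h2l1 h2l3 h12.symm h23 ha1 ha3
  obtain ⟨p31, p32⟩ := h3.coeffs_pos h1.swap.isMinMultiple h2.swap.isMinMultiple h2l1 h2l2
    h13.symm h23.symm ha1 ha2
  obtain ⟨hc1, hc2⟩ := h1.eq_add_of_pos h2 h3 p12 p13 p21 p23 p31 p32 ha1 ha2 ha3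
  obtain ⟨x, y, hxy, hcorner⟩ :=
    exists_inLShape_add_eq_max (l1 := l1) (l2 := l2) p31 p32 (by omega) (by omega) a1 a2
  have hval : l3 * a3 + max (x21 * a1) (x12 * a2) = x * a1 + y * a2 + a1 + a2 := by
    rw [hcorner, hx3, ← max_add_add_left, hc1, hc2]
    congr 1 <;> ring
  rw [hval, show x * a1 + y * a2 + a1 + a2 - (a1 + a2 + a3) = x * a1 + y * a2 - a3 by omega]
  refine isGreatest_compl_of_cover (S := {z | ∃ y1 y2 y3 : ℕ, z = y1 * a1 + y2 * a2 + y3 * a3})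
    (g := 1) ?_ (fun z => ?_) ?_ ?_
  · rintro _ ⟨y1, y2, y3, rfl⟩ k
    exact ⟨y1, y2, y3 + k, by ring⟩
  · obtain ⟨x', y', hxy', hmod⟩ := exists_inLShape_modEq hx1 hx2 hx3 p13 p23 hl3.1.1 ha3 h13 z
    have := hxy'.add_le_max a1 a2
    exact ⟨_, ⟨x', y', 0, by ring⟩, by omega, hmod⟩
  · rintro _ ⟨y1, y2, y3, rfl⟩ h
    exact hxy.ne_add hl1 hl2 h3 ha1 ha2 ha3 (x' := y1) (y' := y2) (k := y3 + 1) y3.succ_pos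
      (by linarith)
  · rintro ⟨y1, y2, y3, h⟩
    have := IsMinMultiple.two_le_of_two_le hl2 h2l2 ha1
    have := IsMinMultiple.two_le_of_two_le hl1 h2l1 ha2
    have := IsMinMultiple.two_le_of_two_le h1.swap.isMinMultiple h2l1 ha3
    simp only [eq_comm (a := 1), Nat.add_eq_one_iff, mul_eq_one] at h
    omega
end

section
/- For n ≥ 2 and a = (2n-1, 2n, 2n+1), the Frobenius number is g(a) = 2n² - 3n. -/
theorem frobenius_consecutive (n : ℕ) (hn : 2 ≤ n) :
    IsGreatest
      {z : ℕ | ¬∃ x1 x2 x3 : ℕ, z = x1 * (2 * n - 1) + x2 * (2 * n) + x3 * (2 * n + 1)}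
      (2 * n ^ 2 - 3 * n) := by
  have h1 : 1 ≤ 2 * n := by omega
  have h3 : 3 * n ≤ 2 * n ^ 2 := by nlinarith
  have hnZ : (2 : ℤ) ≤ (n : ℤ) := by exact_mod_cast hn
  constructor
  · rintro ⟨x1, x2, x3, h⟩
    zify [h1, h3] at h
    have hx1 : (0 : ℤ) ≤ (x1 : ℤ) := Int.natCast_nonneg _
    have hx2 : (0 : ℤ) ≤ (x2 : ℤ) := Int.natCast_nonneg _
    have hx3 : (0 : ℤ) ≤ (x3 : ℤ) := Int.natCast_nonneg _
    set k : ℤ := (x1 : ℤ) + x2 + x3 - n + 2 with hk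
    have hkey : (x3 : ℤ) - x1 = n - 2 * n * k := by
      rw [hk]; linear_combination -h
    rcases le_or_gt k 0 with hk0 | hk0
    · nlinarith [mul_nonneg (neg_nonneg.mpr hk0) (by linarith : (0:ℤ) ≤ 2 * n + 1)]
    · have hk1 : (1 : ℤ) ≤ k := hk0
      nlinarith [mul_nonneg (by linarith : (0:ℤ) ≤ k - 1) (by linarith : (0:ℤ) ≤ 2 * n - 1)]
  · intro z hz
    by_contra hlt
    push_neg at hlt
    set q := z / (2 * n) with hq
    set r := z % (2 * n) with hr
    have hdm : 2 * n * q + r = z := Nat.div_add_mod z (2 * n)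
    have hr2 : r < 2 * n := Nat.mod_lt _ (by omega)
    have hdmZ : 2 * (n : ℤ) * q + r = z := by exact_mod_cast hdm
    apply hz
    rcases le_or_gt r q with hrq | hrq
    · refine ⟨0, q - r, r, ?_⟩
      zify [hrq, h1]
      linear_combination -hdmZ
    · -- need 2*n ≤ q + r + 1
      have hgtZ : 2 * (n : ℤ) ^ 2 - 3 * n < z := by
        have := hlt; zify [h3] at this; exact this
      have hsum : 2 * n ≤ q + r + 1 := by
        by_contra hcon
        push_neg at hcon
        have hrqZ : (q : ℤ) < r := by exact_mod_cast hrq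
        have hr2Z : (r : ℤ) < 2 * n := by exact_mod_cast hr2
        have hconZ : (q : ℤ) + r + 1 < 2 * n := by exact_mod_cast hcon
        rcases lt_trichotomy (r : ℤ) (n : ℤ) with hc | hc | hc
        · nlinarith [mul_nonneg (by linarith : (0:ℤ) ≤ 2 * n) (by linarith : (0:ℤ) ≤ (r:ℤ) - 1 - q),
            mul_nonneg (by linarith : (0:ℤ) ≤ 2 * n + 1) (by linarith : (0:ℤ) ≤ (n:ℤ) - 1 - r)]
        · nlinarith [mul_nonneg (by linarith : (0:ℤ) ≤ 2 * n) (by linarith : (0:ℤ) ≤ (n:ℤ) - 2 - q)]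
        · nlinarith [mul_nonneg (by linarith : (0:ℤ) ≤ 2 * n) (by linarith : (0:ℤ) ≤ 2*(n:ℤ) - r - 2 - q),
            mul_nonneg (by linarith : (0:ℤ) ≤ 2 * n - 1) (by linarith : (0:ℤ) ≤ (r:ℤ) - n - 1)]
      refine ⟨2 * n - r, q + 1 - (2 * n - r), 0, ?_⟩
      have hle : 2 * n - r ≤ q + 1 := by omega
      zify [hle, h1, hr2.le]
      linear_combination -hdmZ
end

section
/- For n ≥ 2 and a = (2n-1, 2n, 2n+1), the number of natural numbers not expressible as a ℕ-linear combination of 2n-1, 2n, 2n+1 is n² - n. -/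
theorem frobenius_consecutive_aux_sum (p : ℕ) :
    ∑ k ∈ Finset.range p, 2 * (k + 1) = p ^ 2 + p := by
  induction p with
  | zero => simp
  | succ q ih => rw [Finset.sum_range_succ, ih]; ring

theorem frobenius_consecutive_count (n : ℕ) (hn : 2 ≤ n) :
    {z : ℕ | ¬∃ x1 x2 x3 : ℕ,
        z = x1 * (2 * n - 1) + x2 * (2 * n) + x3 * (2 * n + 1)}.ncard
      = n ^ 2 - n := by
  obtain ⟨m, hm⟩ : ∃ m, m = 2 * n - 1 := ⟨_, rfl⟩
  have e1 : 2 * n - 1 = m := hm.symm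
  have e2 : 2 * n = m + 1 := by omega
  have e3 : 2 * n + 1 = m + 2 := by omega
  have hm3 : 3 ≤ m := by omega
  rw [e3, e1, e2]
  -- representability criterion
  have hrep : ∀ z : ℕ, (∃ x1 x2 x3 : ℕ, z = x1 * m + x2 * (m + 1) + x3 * (m + 2)) ↔
      ∃ k : ℕ, m * k ≤ z ∧ z ≤ (m + 2) * k := by
    intro z
    constructor
    · rintro ⟨x1, x2, x3, rfl⟩
      refine ⟨x1 + x2 + x3, by nlinarith, by nlinarith⟩
    · rintro ⟨k, hk1, hk2⟩
      have hr : z - m * k ≤ 2 * k := by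
        have : (m + 2) * k = m * k + 2 * k := by ring
        omega
      rcases le_or_gt (z - m * k) k with h | h
      · refine ⟨k - (z - m * k), z - m * k, 0, ?_⟩
        have : (k - (z - m * k)) * m + (z - m * k) * (m + 1) + 0 * (m + 2)
            = ((k - (z - m * k)) + (z - m * k)) * m + (z - m * k) := by ring
        rw [this, Nat.sub_add_cancel h]
        have : k * m = m * k := by ring
        omega
      · refine ⟨0, k - (z - m * k - k), z - m * k - k, ?_⟩
        have hs : z - m * k - k ≤ k := by omega
        have : 0 * m + (k - (z - m * k - k)) * (m + 1) + (z - m * k - k) * (m + 2)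
            = ((k - (z - m * k - k)) + (z - m * k - k)) * (m + 1) + (z - m * k - k) := by
          ring
        rw [this, Nat.sub_add_cancel hs]
        have : k * (m + 1) = m * k + k := by ring
        omega
  -- non-representability criterion
  have hchar : ∀ z : ℕ, (¬∃ k : ℕ, m * k ≤ z ∧ z ≤ (m + 2) * k) ↔
      ∃ k, k < n - 1 ∧ (m + 2) * k < z ∧ z < m * (k + 1) := by
    intro z
    constructor
    · intro h
      push_neg at h
      set k := z / (m + 2) with hkdef
      have hk1 : (m + 2) * k ≤ z := by
        rw [mul_comm]; exact Nat.div_mul_le_self z (m + 2)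
      have hk2 : z < (m + 2) * (k + 1) := by
        have h := Nat.lt_div_mul_add (a := z) (b := m + 2) (by omega : 0 < m + 2)
        have e : z / (m + 2) * (m + 2) + (m + 2) = (m + 2) * (z / (m + 2) + 1) := by ring
        rw [e] at h
        exact h
      have hk1' : (m + 2) * k < z := by
        rcases lt_or_eq_of_le hk1 with h' | h'
        · exact h'
        · exfalso
          have hmk : m * k ≤ z := by nlinarith
          exact absurd (h k hmk) (by omega)
      have hk2' : z < m * (k + 1) := by
        by_contra hc
        push_neg at hc
        have := h (k + 1) hc
        omega
      have h9 : (m + 2) * k + 1 < m * (k + 1) := by omega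
      have h10 : 2 * k + 2 ≤ m := by nlinarith
      exact ⟨k, by omega, hk1', hk2'⟩
    · rintro ⟨k, hk, h1z, h2z⟩ ⟨j, hj1, hj2⟩
      rcases le_or_gt j k with h | h
      · have hle : (m + 2) * j ≤ (m + 2) * k := Nat.mul_le_mul le_rfl h
        linarith
      · have hle : m * (k + 1) ≤ m * j := Nat.mul_le_mul le_rfl h
        linarith
  -- rewrite the set as a finite union of intervals
  have hset : {z : ℕ | ¬∃ x1 x2 x3 : ℕ, z = x1 * m + x2 * (m + 1) + x3 * (m + 2)}
      = ↑((Finset.range (n - 1)).biUnion fun k => Finset.Ioo ((m + 2) * k) (m * (k + 1))) := by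
    ext z
    simp only [Set.mem_setOf_eq, Finset.coe_biUnion, Set.mem_iUnion, Finset.mem_coe,
      Finset.mem_range, Finset.mem_Ioo]
    rw [hrep z, hchar z]
    constructor
    · rintro ⟨k, h1, h2, h3⟩; exact ⟨k, h1, h2, h3⟩
    · rintro ⟨k, h1, h2, h3⟩; exact ⟨k, h1, h2, h3⟩
  rw [hset, Set.ncard_coe_finset]
  have hdisj : ∀ i ∈ Finset.range (n - 1), ∀ j ∈ Finset.range (n - 1), i ≠ j →
      Disjoint (Finset.Ioo ((m + 2) * i) (m * (i + 1))) (Finset.Ioo ((m + 2) * j) (m * (j + 1))) := by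
    intro i _ j _ hij
    rw [Finset.disjoint_left]
    intro x hx hx'
    simp only [Finset.mem_Ioo] at hx hx'
    rcases hij.lt_or_gt with h | h
    · have h1 : m * (i + 1) ≤ m * j := Nat.mul_le_mul le_rfl h
      have h2 : m * j ≤ (m + 2) * j := Nat.mul_le_mul (by omega) le_rfl
      omega
    · have h1 : m * (j + 1) ≤ m * i := Nat.mul_le_mul le_rfl h
      have h2 : m * i ≤ (m + 2) * i := Nat.mul_le_mul (by omega) le_rfl
      omega
  rw [Finset.card_biUnion hdisj]
  have hterm : ∀ k ∈ Finset.range (n - 1),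
      (Finset.Ioo ((m + 2) * k) (m * (k + 1))).card = 2 * (n - 1 - k) := by
    intro k hk
    rw [Finset.mem_range] at hk
    rw [Nat.card_Ioo]
    obtain ⟨t, ht⟩ : ∃ t, n - 1 - k = t := ⟨_, rfl⟩
    have hmt : m = 2 * k + 2 * t + 1 := by omega
    rw [ht, hmt]
    have : (2 * k + 2 * t + 1) * (k + 1) = (2 * k + 2 * t + 1 + 2) * k + 1 + 2 * t := by ring
    rw [this]
    omega
  rw [Finset.sum_congr rfl hterm]
  -- final summation
  obtain ⟨p, hp⟩ : ∃ p, n = p + 1 := ⟨n - 1, by omega⟩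
  subst hp
  simp only [Nat.add_sub_cancel]
  have hrefl : ∑ k ∈ Finset.range p, 2 * (p - k) = ∑ k ∈ Finset.range p, 2 * (k + 1) := by
    rw [← Finset.sum_range_reflect]
    apply Finset.sum_congr rfl
    intro k hk
    rw [Finset.mem_range] at hk
    congr 1
    omega
  rw [hrefl]
  rw [frobenius_consecutive_aux_sum p]
  have : (p + 1) ^ 2 = p ^ 2 + p + (p + 1) := by ring
  omega
end

section
/- For n ≥ 2 and the triple (a₁,a₂,a₃) = (2n-1, 2n, 2n+1): the least positive l with l·a₁ ∈ ℕa₂ + ℕa₃ is n+1, with (n+1)a₁ = a₂ + (n-1)a₃; the least positive l with l·a₂ ∈ ℕa₁ + ℕa₃ is 2, with 2a₂ = a₁ + a₃; and the least positive l with l·a₃ ∈ ℕa₁ + ℕa₂ is n, with n·a₃ = n·a₁ + a₂. -/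
theorem consecutive_l_values (n : ℕ) (hn : 2 ≤ n) :
    (IsLeast {l : ℕ | 0 < l ∧ ∃ x y : ℕ,
        l * (2 * n - 1) = x * (2 * n) + y * (2 * n + 1)} (n + 1) ∧
      (n + 1) * (2 * n - 1) = 2 * n + (n - 1) * (2 * n + 1)) ∧
    (IsLeast {l : ℕ | 0 < l ∧ ∃ x y : ℕ,
        l * (2 * n) = x * (2 * n - 1) + y * (2 * n + 1)} 2 ∧
      2 * (2 * n) = (2 * n - 1) + (2 * n + 1)) ∧
    (IsLeast {l : ℕ | 0 < l ∧ ∃ x y : ℕ,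
        l * (2 * n + 1) = x * (2 * n - 1) + y * (2 * n)} n ∧
      n * (2 * n + 1) = n * (2 * n - 1) + 2 * n) := by
  obtain ⟨k, rfl⟩ : ∃ k, n = k + 2 := ⟨n - 2, by omega⟩
  simp only [show 2 * (k + 2) - 1 = 2 * k + 3 from by omega,
    show (k + 2) - 1 = k + 1 from by omega]
  refine ⟨⟨⟨⟨by omega, 1, k + 1, by ring⟩, ?_⟩, by ring⟩,
    ⟨⟨⟨by omega, 1, 1, by ring⟩, ?_⟩, by ring⟩,
    ⟨⟨⟨by omega, k + 2, 1, by ring⟩, ?_⟩, by ring⟩⟩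
  · rintro l ⟨hl, x, y, he⟩
    by_contra hcon
    push_neg at hcon
    have he' : (l : ℤ) * (2 * k + 3) = x * (2 * (k + 2)) + y * (2 * (k + 2) + 1) := by
      exact_mod_cast he
    have hd : (2 * (k : ℤ) + 4) ∣ ((y : ℤ) + l) :=
      ⟨(l : ℤ) - x - y, by linear_combination -he'⟩
    have hge : (2 * (k : ℤ) + 4) ≤ (y : ℤ) + l := by
      refine Int.le_of_dvd ?_ hd
      have : 0 < (l : ℤ) := by exact_mod_cast hl
      positivity
    have hl' : (l : ℤ) ≤ k + 2 := by exact_mod_cast Nat.lt_succ_iff.mp hcon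
    have hy : (k : ℤ) + 2 ≤ y := by linarith
    have hx : 0 ≤ (x : ℤ) := by positivity
    nlinarith [he', hy, hl', hx]
  · rintro l ⟨hl, x, y, he⟩
    by_contra hcon
    have hl1 : l = 1 := by omega
    subst hl1
    have hy : y = 0 := by nlinarith
    subst hy
    have hx : x ≤ 1 := by nlinarith
    interval_cases x <;> omega
  · rintro l ⟨hl, x, y, he⟩
    by_contra hcon
    push_neg at hcon
    have he' : (l : ℤ) * (2 * (k + 2) + 1) = x * (2 * k + 3) + y * (2 * (k + 2)) := by
      exact_mod_cast he
    have hd : (2 * (k : ℤ) + 4) ∣ ((l : ℤ) + x) :=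
      ⟨(x : ℤ) + y - l, by linear_combination he'⟩
    have hge : (2 * (k : ℤ) + 4) ≤ (l : ℤ) + x := by
      refine Int.le_of_dvd ?_ hd
      have : 0 < (l : ℤ) := by exact_mod_cast hl
      positivity
    have hl' : (l : ℤ) ≤ k + 1 := by exact_mod_cast Nat.lt_succ_iff.mp (by omega : l < k + 2)
    have hx : (k : ℤ) + 3 ≤ x := by linarith
    have hy : 0 ≤ (y : ℤ) := by positivity
    nlinarith [he', hx, hl', hy]
end

section
/- Let a₁, a₂, a₃ be pairwise coprime positive integers with lᵢ ≥ 2 and minimal coefficients xᵢⱼ. Then Σᵢ lᵢaᵢ - l₁l₂l₃ > 0, i.e., l₁a₁ + l₂a₂ + l₃a₃ > l₁l₂l₃. -/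
set_option linter.unusedVariables false
set_option linter.unusedSectionVars false

lemma swap_least {a b c l : ℕ}
    (h : IsLeast {L : ℕ | 0 < L ∧ ∃ x y : ℕ, L * a = x * b + y * c} l) :
    IsLeast {L : ℕ | 0 < L ∧ ∃ x y : ℕ, L * a = x * c + y * b} l := by
  obtain ⟨⟨hp, x, y, hxy⟩, hlb⟩ := h
  exact ⟨⟨hp, y, x, by omega⟩, fun n ⟨hn, x, y, hxy⟩ => hlb ⟨hn, y, x, by omega⟩⟩

lemma aux_pos (a b c l m : ℕ) (ha : 0 < a) (hb : 0 < b) (hc : 0 < c)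
    (hab : Nat.Coprime a b) (hbc : Nat.Coprime b c)
    (hl : IsLeast {L : ℕ | 0 < L ∧ ∃ x y : ℕ, L * a = x * b + y * c} l)
    (hm : IsLeast {L : ℕ | 0 < L ∧ ∃ x y : ℕ, L * c = x * a + y * b} m)
    (h2 : 2 ≤ m) (x : ℕ) (hx : l * a = x * b) : False := by
  by_cases hb1 : b = 1
  · subst hb1
    exact absurd (hm.2 ⟨one_pos, 0, c, by ring⟩) (by omega)
  have hb2 : 2 ≤ b := by omega
  have hbl : b ∣ l := (Nat.Coprime.dvd_of_dvd_mul_right (hab.symm)) ⟨x, by linarith [hx]⟩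
  have hlb : l ≤ b := hl.2 ⟨hb, a, 0, by ring⟩
  have hleq : l = b := le_antisymm hlb (Nat.le_of_dvd hl.1.1 hbl)
  haveI : NeZero b := ⟨by omega⟩
  set t : ℕ := ((c : ZMod b) * (a : ZMod b)⁻¹).val with ht
  have hunit : IsUnit (a : ZMod b) := (ZMod.isUnit_iff_coprime a b).mpr hab
  have htc : ((t * a : ℕ) : ZMod b) = (c : ZMod b) := by
    push_cast [ht, ZMod.natCast_val, ZMod.cast_id]
    rw [mul_assoc, ZMod.inv_mul_of_unit _ hunit, mul_one]
  have htlt : t < b := ZMod.val_lt _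
  have htpos : 0 < t := by
    rcases Nat.eq_zero_or_pos t with h0 | h
    · exfalso
      have hc0 : ((c : ℕ) : ZMod b) = 0 := by rw [← htc, h0]; push_cast; ring
      have hdvd : b ∣ c := (ZMod.natCast_eq_zero_iff c b).mp hc0
      have : b = 1 := Nat.eq_one_of_dvd_one (hbc ▸ Nat.dvd_gcd dvd_rfl hdvd)
      omega
    · exact h
  have hmod : t * a ≡ c [MOD b] := (ZMod.natCast_eq_natCast_iff _ _ _).mp htc
  rcases le_or_gt c (t * a) with hge | hlt
  · obtain ⟨k, hk⟩ := (Nat.modEq_iff_dvd' hge).mp hmod.symm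
    have : l ≤ t := hl.2 ⟨htpos, k, 1, by rw [mul_comm k b]; omega⟩
    omega
  · obtain ⟨k, hk⟩ := (Nat.modEq_iff_dvd' hlt.le).mp hmod
    have : m ≤ 1 := hm.2 ⟨one_pos, t, k, by rw [mul_comm k b]; omega⟩
    omega

lemma aux_lt (a b c l l' x y x' y' : ℕ) (ha : 0 < a)
    (hl : IsLeast {L : ℕ | 0 < L ∧ ∃ u v : ℕ, L * a = u * b + v * c} l)
    (hx : l * a = x * b + y * c) (hx' : l' * b = x' * a + y' * c)
    (hx'p : 0 < x') (hy : 0 < y) (hc : 0 < c) : x < l' := by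
  by_contra hle
  push_neg at hle
  have key : l * a = x' * a + ((x - l') * b + (y + y') * c) := by
    zify [hle]
    linarith [hx, hx']
  have hxl : x' < l := by
    by_contra h
    push_neg at h
    nlinarith [Nat.mul_le_mul_right a h]
  have hmem : l ≤ l - x' := hl.2 ⟨by omega, x - l', y + y', by
    zify [hle, hxl.le]
    linarith [key]⟩
  omega

lemma mem_S {a b c l : ℕ}
    (hl : IsLeast {L : ℕ | 0 < L ∧ ∃ x y : ℕ, L * a = x * b + y * c} l)
    {n K U : ℤ} (hn : 0 < n) (hK : 0 ≤ K) (hU : 0 ≤ U)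
    (h : n * a = K * b + U * c) : (l : ℤ) ≤ n := by
  have : l ≤ n.toNat := hl.2 ⟨by omega, K.toNat, U.toNat, by
    zify
    rw [Int.toNat_of_nonneg hn.le, Int.toNat_of_nonneg hK, Int.toNat_of_nonneg hU]
    exact h⟩
  omega

lemma mixed_case {a1 a2 a3 l2 l3 : ℕ}
    (hl2 : IsLeast {l : ℕ | 0 < l ∧ ∃ x y : ℕ, l * a2 = x * a1 + y * a3} l2)
    (hl3 : IsLeast {l : ℕ | 0 < l ∧ ∃ x y : ℕ, l * a3 = x * a1 + y * a2} l3)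
    {du dv k : ℤ} (hdu : 0 < du) (hdv : dv < 0)
    (heq : du * a2 + dv * a3 = k * a1) (hu : du < l2) (hv : -dv < l3) : False := by
  rcases le_or_gt 0 k with hk | hk
  · have h' : du * (a2:ℤ) = k * a1 + (-dv) * a3 := by linarith
    have : (l2 : ℤ) ≤ du := mem_S hl2 hdu hk (by omega) h'
    omega
  · have h' : (-dv) * (a3:ℤ) = (-k) * a1 + du * a2 := by linarith
    have : (l3 : ℤ) ≤ -dv := mem_S hl3 (by omega) (by omega) hdu.le h'
    omega

lemma pos_case {a1 a2 a3 l1 l2 l3 x12 x13 : ℕ} (ha2 : 0 < a2) (ha3 : 0 < a3)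
    (hl1 : IsLeast {l : ℕ | 0 < l ∧ ∃ x y : ℕ, l * a1 = x * a2 + y * a3} l1)
    (hl2 : IsLeast {l : ℕ | 0 < l ∧ ∃ x y : ℕ, l * a2 = x * a1 + y * a3} l2)
    (hl3 : IsLeast {l : ℕ | 0 < l ∧ ∃ x y : ℕ, l * a3 = x * a1 + y * a2} l3)
    (hx1 : l1 * a1 = x12 * a2 + x13 * a3)
    {du dv k : ℤ} {U V : ℕ} (hdu : 0 < du) (hdv : 0 < dv)
    (hUb : du ≤ U) (hVb : dv ≤ V) (hU : U < l2) (hV : V < l3)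
    (hT : ¬(x12 ≤ U ∧ x13 ≤ V))
    (heq : du * a2 + dv * a3 = k * a1) : False := by
  have hk1 : (l1 : ℤ) ≤ k := by
    have hkpos : 0 < k := by nlinarith
    exact mem_S hl1 hkpos hdu.le hdv.le heq.symm
  have hz1 : (l1 : ℤ) * a1 = x12 * a2 + x13 * a3 := by exact_mod_cast hx1
  have hd : (k - l1) * a1 = (du - x12) * a2 + (dv - x13) * a3 := by ring_nf; linarith [heq, hz1]
  rcases lt_or_ge du (x12 : ℤ) with h1 | h1
  · have hpos : 0 < dv - x13 := by nlinarith
    have heq3 : (dv - x13) * a3 = (k - l1) * a1 + (x12 - du) * a2 := by linarith [hd]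
    have : (l3 : ℤ) ≤ dv - x13 := mem_S hl3 hpos (by linarith) (by linarith) heq3
    omega
  rcases lt_or_ge dv (x13 : ℤ) with h2 | h2
  · have hpos : 0 < du - x12 := by nlinarith
    have heq2 : (du - x12) * a2 = (k - l1) * a1 + (x13 - dv) * a3 := by linarith [hd]
    have : (l2 : ℤ) ≤ du - x12 := mem_S hl2 hpos (by linarith) (by linarith) heq2
    omega
  · exact hT ⟨by omega, by omega⟩

lemma single_case {A B C L : ℕ} (hA : 0 < A) (hC : 0 < C)
    (hl : IsLeast {l : ℕ | 0 < l ∧ ∃ x y : ℕ, l * C = x * A + y * B} L)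
    {d k : ℤ} (hd : 0 < d) (heq : d * C = k * A) (hlt : d < L) : False := by
  have hdc : 0 < d * (C:ℤ) := mul_pos hd (by exact_mod_cast hC)
  have hk : 0 ≤ k := by nlinarith
  have : (L : ℤ) ≤ d := mem_S hl hd hk le_rfl (by linarith : d * (C:ℤ) = k * A + 0 * B)
  omega

lemma inj_core {a1 a2 a3 l1 l2 l3 x12 x13 : ℕ}
    (ha1 : 0 < a1) (ha2 : 0 < a2) (ha3 : 0 < a3)
    (hl1 : IsLeast {l : ℕ | 0 < l ∧ ∃ x y : ℕ, l * a1 = x * a2 + y * a3} l1)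
    (hl2 : IsLeast {l : ℕ | 0 < l ∧ ∃ x y : ℕ, l * a2 = x * a1 + y * a3} l2)
    (hl3 : IsLeast {l : ℕ | 0 < l ∧ ∃ x y : ℕ, l * a3 = x * a1 + y * a2} l3)
    (hx1 : l1 * a1 = x12 * a2 + x13 * a3)
    (u v u' v' : ℕ) (hu : u < l2) (hv : v < l3) (hu' : u' < l2) (hv' : v' < l3)
    (hT : ¬(x12 ≤ u ∧ x13 ≤ v)) (hT' : ¬(x12 ≤ u' ∧ x13 ≤ v'))
    (hmod : (a1:ℤ) ∣ ((u':ℤ) * a2 + (v':ℤ) * a3) - ((u:ℤ) * a2 + (v:ℤ) * a3)) :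
    u = u' ∧ v = v' := by
  obtain ⟨k, hk⟩ := hmod
  have heq : ((u':ℤ) - u) * a2 + ((v':ℤ) - v) * a3 = k * a1 := by linarith [hk]
  rcases lt_trichotomy ((u':ℤ) - u) 0 with h1 | h1 | h1
  · rcases lt_trichotomy ((v':ℤ) - v) 0 with h2 | h2 | h2
    · exact absurd (pos_case ha2 ha3 hl1 hl2 hl3 hx1 (du := (u:ℤ) - u') (dv := (v:ℤ) - v')
        (k := -k) (by omega) (by omega) (by omega) (by omega) hu hv hT (by linarith)) not_false
    · exact (single_case ha1 ha2 hl2 (d := (u:ℤ) - u') (k := -k) (by omega)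
        (by linear_combination -heq + (a3:ℤ) * h2) (by omega)).elim
    · exact (mixed_case hl3 hl2 (du := (v':ℤ) - v) (dv := (u':ℤ) - u) (k := k)
        (by omega) (by omega) (by linarith) (by omega) (by omega)).elim
  · rcases lt_trichotomy ((v':ℤ) - v) 0 with h2 | h2 | h2
    · exact (single_case ha1 ha3 hl3 (d := (v:ℤ) - v') (k := -k) (by omega)
        (by linear_combination -heq + (a2:ℤ) * h1) (by omega)).elim
    · constructor <;> omega
    · exact (single_case ha1 ha3 hl3 (d := (v':ℤ) - v) (k := k) (by omega)
        (by linear_combination heq - (a2:ℤ) * h1) (by omega)).elim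
  · rcases lt_trichotomy ((v':ℤ) - v) 0 with h2 | h2 | h2
    · exact (mixed_case hl2 hl3 h1 h2 heq (by omega) (by omega)).elim
    · exact (single_case ha1 ha2 hl2 (d := (u':ℤ) - u) (k := k) (by omega)
        (by linear_combination heq - (a3:ℤ) * h2) (by omega)).elim
    · exact (pos_case ha2 ha3 hl1 hl2 hl3 hx1 (U := u') (V := v') h1 h2
        (by omega) (by omega) hu' hv' hT' heq).elim

theorem volume_positive (a1 a2 a3 l1 l2 l3 x12 x13 x21 x23 x31 x32 : ℕ)
    (ha1 : 0 < a1) (ha2 : 0 < a2) (ha3 : 0 < a3)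
    (h12 : Nat.Coprime a1 a2) (h13 : Nat.Coprime a1 a3) (h23 : Nat.Coprime a2 a3)
    (hl1 : IsLeast {l : ℕ | 0 < l ∧ ∃ x y : ℕ, l * a1 = x * a2 + y * a3} l1)
    (hl2 : IsLeast {l : ℕ | 0 < l ∧ ∃ x y : ℕ, l * a2 = x * a1 + y * a3} l2)
    (hl3 : IsLeast {l : ℕ | 0 < l ∧ ∃ x y : ℕ, l * a3 = x * a1 + y * a2} l3)
    (h2l1 : 2 ≤ l1) (h2l2 : 2 ≤ l2) (h2l3 : 2 ≤ l3)
    (hx1 : l1 * a1 = x12 * a2 + x13 * a3)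
    (hx2 : l2 * a2 = x21 * a1 + x23 * a3)
    (hx3 : l3 * a3 = x31 * a1 + x32 * a2) :
    l1 * l2 * l3 < l1 * a1 + l2 * a2 + l3 * a3 := by
  -- positivity of the x's
  have p13 : 0 < x13 := by
    rcases Nat.eq_zero_or_pos x13 with h | h
    · exact (aux_pos a1 a2 a3 l1 l3 ha1 ha2 ha3 h12 h23 hl1 hl3 h2l3 x12
        (by simpa [h] using hx1)).elim
    · exact h
  have p12 : 0 < x12 := by
    rcases Nat.eq_zero_or_pos x12 with h | h
    · exact (aux_pos a1 a3 a2 l1 l2 ha1 ha3 ha2 h13 h23.symm (swap_least hl1) hl2 h2l2 x13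
        (by simpa [h] using hx1)).elim
    · exact h
  have p21 : 0 < x21 := by
    rcases Nat.eq_zero_or_pos x21 with h | h
    · exact (aux_pos a2 a3 a1 l2 l1 ha2 ha3 ha1 h23 h13.symm (swap_least hl2) hl1 h2l1 x23
        (by simpa [h] using hx2)).elim
    · exact h
  have p23 : 0 < x23 := by
    rcases Nat.eq_zero_or_pos x23 with h | h
    · exact (aux_pos a2 a1 a3 l2 l3 ha2 ha1 ha3 h12.symm h13 hl2 (swap_least hl3) h2l3 x21
        (by simpa [h] using hx2)).elim
    · exact h
  have p32 : 0 < x32 := by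
    rcases Nat.eq_zero_or_pos x32 with h | h
    · exact (aux_pos a3 a1 a2 l3 l2 ha3 ha1 ha2 h13.symm h12 hl3 (swap_least hl2) h2l2 x31
        (by simpa [h] using hx3)).elim
    · exact h
  have p31 : 0 < x31 := by
    rcases Nat.eq_zero_or_pos x31 with h | h
    · exact (aux_pos a3 a2 a1 l3 l1 ha3 ha2 ha1 h23.symm h12.symm (swap_least hl3)
        (swap_least hl1) h2l1 x32 (by simpa [h] using hx3)).elim
    · exact h
  -- the strict bounds x_{ij} < l_j
  have q12 : x12 < l2 := aux_lt a1 a2 a3 l1 l2 x12 x13 x21 x23 ha1 hl1 hx1 hx2 p21 p13 ha3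
  have q13 : x13 < l3 := aux_lt a1 a3 a2 l1 l3 x13 x12 x31 x32 ha1 (swap_least hl1)
    (by omega) hx3 p31 p12 ha2
  have q21 : x21 < l1 := aux_lt a2 a1 a3 l2 l1 x21 x23 x12 x13 ha2 hl2 hx2 hx1 p12 p23 ha3
  have q23 : x23 < l3 := aux_lt a2 a3 a1 l2 l3 x23 x21 x32 x31 ha2 (swap_least hl2)
    (by omega) (by omega) p32 p21 ha1
  have q31 : x31 < l1 := aux_lt a3 a1 a2 l3 l1 x31 x32 x13 x12 ha3 hl3 hx3 (by omega) p13 p32 ha2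
  have q32 : x32 < l2 := aux_lt a3 a2 a1 l3 l2 x32 x31 x23 x21 ha3 (swap_least hl3)
    (by omega) (by omega) p23 p31 ha1
  -- cast versions
  have z1 : (l1:ℤ) * a1 = x12 * a2 + x13 * a3 := by exact_mod_cast hx1
  have z2 : (l2:ℤ) * a2 = x21 * a1 + x23 * a3 := by exact_mod_cast hx2
  have z3 : (l3:ℤ) * a3 = x31 * a1 + x32 * a2 := by exact_mod_cast hx3
  -- l_i ≤ sums
  have m1 : l1 ≤ x21 + x31 := hl1.2 ⟨by omega, l2 - x32, l3 - x23, by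
    zify [q32.le, q23.le]; linear_combination -z2 - z3⟩
  have m2 : l2 ≤ x12 + x32 := hl2.2 ⟨by omega, l1 - x31, l3 - x13, by
    zify [q31.le, q13.le]; linear_combination -z1 - z3⟩
  have m3 : l3 ≤ x13 + x23 := hl3.2 ⟨by omega, l1 - x21, l2 - x12, by
    zify [q21.le, q12.le]; linear_combination -z1 - z2⟩
  -- equalities l_i = sums
  have hsum : l1 * a1 + l2 * a2 + l3 * a3
      = (x21 + x31) * a1 + (x12 + x32) * a2 + (x13 + x23) * a3 := by
    zify; linear_combination z1 + z2 + z3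
  have hle1 : l1 * a1 ≤ (x21 + x31) * a1 := Nat.mul_le_mul_right _ m1
  have hle2 : l2 * a2 ≤ (x12 + x32) * a2 := Nat.mul_le_mul_right _ m2
  have hle3 : l3 * a3 ≤ (x13 + x23) * a3 := Nat.mul_le_mul_right _ m3
  have e1 : l1 = x21 + x31 :=
    (Nat.eq_of_mul_eq_mul_right ha1 (by linarith : l1 * a1 = (x21 + x31) * a1))
  have e2 : l2 = x12 + x32 :=
    (Nat.eq_of_mul_eq_mul_right ha2 (by linarith : l2 * a2 = (x12 + x32) * a2))
  have e3 : l3 = x13 + x23 :=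
    (Nat.eq_of_mul_eq_mul_right ha3 (by linarith : l3 * a3 = (x13 + x23) * a3))
  -- key divisibility : A * a2 = B * a1
  have ze2 : (l2:ℤ) = x12 + x32 := by exact_mod_cast e2
  have ze3 : (l3:ℤ) = x13 + x23 := by exact_mod_cast e3
  have key2 : (x12 * (x13 + x23) + x13 * x32) * a2
      = (x21 * (x13 + x23) + x23 * x31) * a1 := by
    zify
    linear_combination ((x13:ℤ) + x23) * z2 + (x23:ℤ) * z3 - (a2:ℤ) * ((x13:ℤ) + x23) * ze2
      - (a3:ℤ) * (x23:ℤ) * ze3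
  have hdvd : a1 ∣ x12 * (x13 + x23) + x13 * x32 :=
    (Nat.Coprime.dvd_of_dvd_mul_right h12) ⟨x21 * (x13 + x23) + x23 * x31,
      key2.trans (mul_comm _ _)⟩
  obtain ⟨m, hAm⟩ := hdvd
  -- counting argument: A ≤ a1
  haveI : NeZero a1 := ⟨ha1.ne'⟩
  have hsub : (Finset.Ico x12 l2 ×ˢ Finset.Ico x13 l3)
      ⊆ (Finset.range l2 ×ˢ Finset.range l3) := by
    intro p hp
    simp only [Finset.mem_product, Finset.mem_Ico, Finset.mem_range] at *
    omega
  set T : Finset (ℕ × ℕ) :=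
    (Finset.range l2 ×ˢ Finset.range l3) \ (Finset.Ico x12 l2 ×ˢ Finset.Ico x13 l3) with hTdef
  have hmemT : ∀ p : ℕ × ℕ, p ∈ T ↔ p.1 < l2 ∧ p.2 < l3 ∧ ¬(x12 ≤ p.1 ∧ x13 ≤ p.2) := by
    intro p
    simp only [hTdef, Finset.mem_sdiff, Finset.mem_product, Finset.mem_Ico, Finset.mem_range]
    omega
  have hcard : T.card = l2 * l3 - (l2 - x12) * (l3 - x13) := by
    rw [hTdef, Finset.card_sdiff_of_subset hsub]
    simp [Finset.card_product, Nat.card_Ico, Finset.card_range]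
  have hcardA : T.card = x12 * (x13 + x23) + x13 * x32 := by
    have hexp : l2 * l3 = x12 * (x13 + x23) + x13 * x32 + x32 * x23 := by
      rw [e2, e3]; ring
    rw [hcard, show l2 - x12 = x32 by omega, show l3 - x13 = x23 by omega]
    omega
  have hinj : Set.InjOn (fun p : ℕ × ℕ => ((p.1 * a2 + p.2 * a3 : ℕ) : ZMod a1)) T := by
    intro p hp q hq hf
    rw [Finset.mem_coe, hmemT] at hp hq
    have hmod : (a1:ℤ) ∣ ((q.1:ℤ) * a2 + (q.2:ℤ) * a3) - ((p.1:ℤ) * a2 + (p.2:ℤ) * a3) := by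
      have := (ZMod.natCast_eq_natCast_iff _ _ _).mp hf
      have := this.dvd
      push_cast at this ⊢
      exact this
    obtain ⟨hu, hv⟩ := inj_core ha1 ha2 ha3 hl1 hl2 hl3 hx1 p.1 p.2 q.1 q.2
      hp.1 hp.2.1 hq.1 hq.2.1 hp.2.2 hq.2.2 hmod
    exact Prod.ext hu hv
  have hcardle : T.card ≤ a1 := by
    have := Finset.card_le_card_of_injOn (fun p : ℕ × ℕ => ((p.1 * a2 + p.2 * a3 : ℕ) : ZMod a1))
      (fun p _ => Finset.mem_univ _) hinj
    simpa [ZMod.card] using this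
  -- m = 1 and explicit formulas
  have hApos : 0 < x12 * (x13 + x23) + x13 * x32 :=
    Nat.lt_of_lt_of_le (Nat.mul_pos p12 (by omega)) (Nat.le_add_right _ _)
  have hm1 : m = 1 := by
    by_contra hne
    have hm0 : m ≠ 0 := by rintro rfl; simp at hAm; omega
    have h2m : 2 ≤ m := by omega
    have : a1 * 2 ≤ a1 * m := Nat.mul_le_mul_left a1 h2m
    omega
  have ea1 : a1 = x12 * (x13 + x23) + x13 * x32 := by
    rw [hm1, mul_one] at hAm
    exact hAm.symm
  have ea2 : a2 = x21 * (x13 + x23) + x23 * x31 := by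
    have h := key2
    rw [← ea1] at h
    exact (Nat.eq_of_mul_eq_mul_right ha1 (by linarith : a2 * a1 = (x21 * (x13 + x23) + x23 * x31) * a1))
  have ea3 : a3 = x12 * x31 + x21 * x32 + x31 * x32 := by
    have h := hx3
    rw [ea1, ea2, e3] at h
    have h' : (x13 + x23) * a3 = (x13 + x23) * (x12 * x31 + x21 * x32 + x31 * x32) := by
      rw [h]; ring
    exact Nat.eq_of_mul_eq_mul_left (by omega) h'
  -- final computation
  have hfin : l1 * a1 + l2 * a2 + l3 * a3
      = 2 * (l1 * l2 * l3) + x12 * x23 * x31 + x13 * x21 * x32 := by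
    rw [ea1, ea2, ea3, e1, e2, e3]; ring
  have hpos : 0 < l1 * l2 * l3 :=
    Nat.mul_pos (Nat.mul_pos (by omega) (by omega)) (by omega)
  omega
end
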